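/- arXiv:2405.13970 — 8 statements merged into one kernel-verified Lean document; each statement's English description precedes it below -/
import Mathlib

section
/- (Finite sample unconditional validity, score form.) Let s_1, ..., s_n, s_{n+1} be exchangeable real-valued random variables, let α ∈ (0,1), and set k = ⌈(1−α)(n+1)⌉. If k ≤ n, then P(s_{n+1} ≤ s_(k)) ≥ 1 − α, where s_(k) denotes the k-th smallest value among s_1, ..., s_n. In the paper's setting, the s_i are conformity scores computed by a permutation-invariant procedure from an exchangeable sample, and this inequality yields the marginal coverage guarantee ℙ(Y ∈ Ĉ^α(X)) ≥ 1 − α of the estimated prediction region. -/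
open MeasureTheory ProbabilityTheory
open scoped ENNReal

/-- The `k`-th smallest value (`1`-indexed order statistic) of `v : Fin n → ℝ`. -/
noncomputable def orderStat {n : ℕ} (v : Fin n → ℝ) (k : ℕ) : ℝ :=
  sInf {t : ℝ | k ≤ (Finset.univ.filter fun i => v i ≤ t).card}

lemma card_filter_comp_perm {N : ℕ} (σ : Equiv.Perm (Fin N)) (p : Fin N → Prop)
    [DecidablePred p] :
    (Finset.univ.filter fun i => p (σ i)).card = (Finset.univ.filter p).card := by
  apply Finset.card_bij' (fun i _ => σ i) (fun i _ => σ.symm i) <;> simp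

/-- Deterministic counting lemma: at least `k` indices have strict rank `< k`. -/
lemma det_rank_lemma {N : ℕ} (x : Fin N → ℝ) (k : ℕ) (hk : k ≤ N) :
    k ≤ (Finset.univ.filter fun j =>
      (Finset.univ.filter fun i => x i < x j).card < k).card := by
  classical
  by_cases hBne : (Finset.univ.filter fun j : Fin N =>
      k ≤ (Finset.univ.filter fun i => x i < x j).card).Nonempty
  · obtain ⟨j0, hj0B, hj0min⟩ := Finset.exists_min_image _ x hBne
    have hj0 : k ≤ (Finset.univ.filter fun i => x i < x j0).card := by
      simpa using hj0B
    refine hj0.trans (Finset.card_le_card ?_)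
    intro i hi
    simp only [Finset.mem_filter, Finset.mem_univ, true_and] at hi ⊢
    by_contra hcon
    push_neg at hcon
    have hiB : i ∈ Finset.univ.filter fun j : Fin N =>
        k ≤ (Finset.univ.filter fun i' => x i' < x j).card := by
      simp only [Finset.mem_filter, Finset.mem_univ, true_and]
      exact hcon
    exact absurd (hj0min i hiB) (not_le.mpr hi)
  · have hall : (Finset.univ.filter fun j : Fin N =>
        (Finset.univ.filter fun i => x i < x j).card < k) = Finset.univ := by
      ext j
      simp only [Finset.mem_filter, Finset.mem_univ, true_and, iff_true]
      by_contra hcon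
      refine hBne ⟨j, ?_⟩
      simp only [Finset.mem_filter, Finset.mem_univ, true_and]
      exact Nat.le_of_not_lt hcon
    rw [hall]
    simpa using hk

/-- **Finite sample unconditional validity (score form).**
If `s 0, …, s n` are exchangeable real-valued random variables, `α ∈ (0,1)` and
`k = ⌈(1 − α)(n + 1)⌉ ≤ n`, then `P(s_{n+1} ≤ s_(k)) ≥ 1 − α`, where `s_(k)` is the
`k`-th smallest among the first `n` variables.  This is the marginal coverage
guarantee of conformal prediction. -/
theorem conformal_finite_sample_validity
    {Ω : Type*} [MeasureSpace Ω] [IsProbabilityMeasure (ℙ : Measure Ω)]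
    {n : ℕ} (s : Fin (n + 1) → Ω → ℝ)
    (hmeas : ∀ i, Measurable (s i))
    (hexch : ∀ σ : Equiv.Perm (Fin (n + 1)),
      Measure.map (fun ω => fun i => s (σ i) ω) ℙ =
        Measure.map (fun ω => fun i => s i ω) ℙ)
    (α : ℝ) (hα : α ∈ Set.Ioo (0 : ℝ) 1)
    (k : ℕ) (hk : k = ⌈(1 - α) * (n + 1)⌉₊) (hkn : k ≤ n) :
    ENNReal.ofReal (1 - α) ≤
      ℙ {ω | s (Fin.last n) ω ≤ orderStat (fun i : Fin n => s i.castSucc ω) k} := by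
  classical
  obtain ⟨hα0, hα1⟩ := hα
  have h1α : (0:ℝ) < 1 - α := by linarith
  have hk1 : 1 ≤ k := by
    rw [hk]
    rw [Nat.one_le_iff_ne_zero, ← Nat.pos_iff_ne_zero, Nat.ceil_pos]
    positivity
  have hn1 : 1 ≤ n := hk1.trans hkn
  -- the joint law
  set T : Ω → (Fin (n+1) → ℝ) := fun ω i => s i ω with hT_def
  have hT : Measurable T := measurable_pi_lambda T fun i => hmeas i
  set μ : Measure (Fin (n+1) → ℝ) := Measure.map T ℙ with hμ_def
  have hμprob : IsProbabilityMeasure μ := Measure.isProbabilityMeasure_map hT.aemeasurable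
  -- the rank events
  set A : Fin (n+1) → Set (Fin (n+1) → ℝ) := fun j =>
    {x | (Finset.univ.filter fun i => x i < x j).card < k} with hA_def
  have hLmeas : ∀ j, Measurable fun x : Fin (n+1) → ℝ =>
      (Finset.univ.filter fun i => x i < x j).card := by
    intro j
    have : (fun x : Fin (n+1) → ℝ => (Finset.univ.filter fun i => x i < x j).card)
        = fun x => ∑ i : Fin (n+1), if x i < x j then 1 else 0 := by
      funext x; rw [Finset.card_filter]
    rw [this]
    exact Finset.measurable_sum _ fun i _ =>
      Measurable.ite (measurableSet_lt (measurable_pi_apply i) (measurable_pi_apply j))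
        measurable_const measurable_const
  have hAm : ∀ j, MeasurableSet (A j) := fun j =>
    (hLmeas j) (MeasurableSet.of_discrete (s := Set.Iio k))
  -- exchangeability: all A j have the same measure
  have hmapσ : ∀ σ : Equiv.Perm (Fin (n+1)),
      Measure.map (fun x : Fin (n+1) → ℝ => fun i => x (σ i)) μ = μ := by
    intro σ
    have hPσ : Measurable fun x : Fin (n+1) → ℝ => fun i => x (σ i) :=
      measurable_pi_lambda _ fun i => measurable_pi_apply (σ i)
    rw [hμ_def, Measure.map_map hPσ hT]
    exact hexch σ
  have hAeq : ∀ j, μ (A j) = μ (A (Fin.last n)) := by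
    intro j
    set σ : Equiv.Perm (Fin (n+1)) := Equiv.swap j (Fin.last n) with hσ
    have hPσ : Measurable fun x : Fin (n+1) → ℝ => fun i => x (σ i) :=
      measurable_pi_lambda _ fun i => measurable_pi_apply (σ i)
    have h1 : μ (A j) = μ ((fun x : Fin (n+1) → ℝ => fun i => x (σ i)) ⁻¹' (A j)) := by
      conv_lhs => rw [← hmapσ σ]
      rw [Measure.map_apply hPσ (hAm j)]
    have h2 : (fun x : Fin (n+1) → ℝ => fun i => x (σ i)) ⁻¹' (A j) = A (σ j) := by
      ext x
      simp only [hA_def, Set.mem_preimage, Set.mem_setOf_eq]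
      rw [card_filter_comp_perm σ (fun i => x i < x (σ j))]
    rw [h1, h2, hσ, Equiv.swap_apply_left]
  -- sum lower bound via the deterministic lemma
  have hsum : (k : ℝ≥0∞) ≤ ∑ j : Fin (n+1), μ (A j) := by
    have hpt : ∀ x : Fin (n+1) → ℝ,
        (k : ℝ≥0∞) ≤ ∑ j : Fin (n+1), (A j).indicator (fun _ => (1:ℝ≥0∞)) x := by
      intro x
      have := det_rank_lemma x k (hkn.trans n.le_succ)
      calc (k : ℝ≥0∞)
          ≤ ((Finset.univ.filter fun j : Fin (n+1) =>
              (Finset.univ.filter fun i => x i < x j).card < k).card : ℝ≥0∞) := by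
            exact_mod_cast this
        _ = ∑ j : Fin (n+1), (A j).indicator (fun _ => (1:ℝ≥0∞)) x := by
            rw [Finset.card_filter]
            push_cast
            apply Finset.sum_congr rfl
            intro j _
            simp [hA_def, Set.indicator_apply]
    calc (k : ℝ≥0∞) = ∫⁻ _, (k : ℝ≥0∞) ∂μ := by
          rw [lintegral_const, measure_univ, mul_one]
      _ ≤ ∫⁻ x, ∑ j : Fin (n+1), (A j).indicator (fun _ => (1:ℝ≥0∞)) x ∂μ :=
          lintegral_mono hpt
      _ = ∑ j : Fin (n+1), ∫⁻ x, (A j).indicator (fun _ => (1:ℝ≥0∞)) x ∂μ :=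
          lintegral_finset_sum _ fun j _ => measurable_const.indicator (hAm j)
      _ = ∑ j : Fin (n+1), μ (A j) := by
          apply Finset.sum_congr rfl
          intro j _
          rw [lintegral_indicator (hAm j)]
          simp
  have hsum2 : ∑ j : Fin (n+1), μ (A j) = (n+1 : ℝ≥0∞) * μ (A (Fin.last n)) := by
    rw [Finset.sum_congr rfl fun j _ => hAeq j, Finset.sum_const]
    simp [mul_comm]
  -- lower bound on μ (A last)
  have hμA : ENNReal.ofReal (1 - α) ≤ μ (A (Fin.last n)) := by
    have hcard : (k : ℝ≥0∞) ≤ (n+1 : ℝ≥0∞) * μ (A (Fin.last n)) := hsum2 ▸ hsum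
    have hofk : ENNReal.ofReal (1 - α) * (n+1 : ℝ≥0∞) ≤ (k : ℝ≥0∞) := by
      have h1 : ((n:ℝ)+1) ≥ 0 := by positivity
      have : ENNReal.ofReal (1 - α) * (n+1 : ℝ≥0∞)
          = ENNReal.ofReal ((1 - α) * ((n:ℝ)+1)) := by
        rw [ENNReal.ofReal_mul h1α.le]
        congr 1
        rw [ENNReal.ofReal_add (by positivity) zero_le_one, ENNReal.ofReal_natCast,
          ENNReal.ofReal_one]
      rw [this]
      calc ENNReal.ofReal ((1 - α) * ((n:ℝ)+1))
          ≤ ENNReal.ofReal (k : ℝ) := by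
            apply ENNReal.ofReal_le_ofReal
            rw [hk]
            have := Nat.le_ceil ((1 - α) * ((n:ℕ)+1 : ℝ))
            push_cast at this ⊢
            linarith
        _ = (k : ℝ≥0∞) := ENNReal.ofReal_natCast k
    have hmul : ENNReal.ofReal (1 - α) * (n+1 : ℝ≥0∞)
        ≤ μ (A (Fin.last n)) * (n+1 : ℝ≥0∞) := by
      calc ENNReal.ofReal (1 - α) * (n+1 : ℝ≥0∞) ≤ (k : ℝ≥0∞) := hofk
        _ ≤ (n+1 : ℝ≥0∞) * μ (A (Fin.last n)) := hcard
        _ = μ (A (Fin.last n)) * (n+1 : ℝ≥0∞) := mul_comm _ _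
    have hne0 : (n+1 : ℝ≥0∞) ≠ 0 := by
      simp
    have hnetop : (n+1 : ℝ≥0∞) ≠ ⊤ := by
      simp [ENNReal.add_ne_top]
    exact (ENNReal.mul_le_mul_iff_left hne0 hnetop).mp hmul
  -- the event A last is contained in the coverage event
  have hsubset : T ⁻¹' (A (Fin.last n)) ⊆
      {ω | s (Fin.last n) ω ≤ orderStat (fun i : Fin n => s i.castSucc ω) k} := by
    intro ω hω
    simp only [Set.mem_preimage, hA_def, Set.mem_setOf_eq, hT_def] at hω
    set y := s (Fin.last n) ω with hy
    set v : Fin n → ℝ := fun i => s i.castSucc ω with hv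
    have hsmall : (Finset.univ.filter fun i : Fin n => v i < y).card < k := by
      refine lt_of_le_of_lt ?_ hω
      apply Finset.card_le_card_of_injOn (fun i => Fin.castSucc i)
      · intro i hi
        simp only [Finset.mem_coe, Finset.mem_filter, Finset.mem_univ, true_and] at hi ⊢
        exact hi
      · intro a _ b _ hab
        exact Fin.castSucc_injective n hab
    show y ≤ orderStat v k
    unfold orderStat
    apply le_csInf
    · -- nonempty: take a maximum of v
      have hne : (Finset.univ : Finset (Fin n)).Nonempty := by
        rw [Finset.univ_nonempty_iff]
        exact Fin.pos_iff_nonempty.mp hn1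
      obtain ⟨i0, _, hi0⟩ := Finset.exists_max_image Finset.univ v hne
      refine ⟨v i0, ?_⟩
      simp only [Set.mem_setOf_eq]
      have : (Finset.univ.filter fun i : Fin n => v i ≤ v i0) = Finset.univ := by
        ext i; simp [hi0 i (Finset.mem_univ i)]
      rw [this]
      simpa using hkn
    · intro t ht
      simp only [Set.mem_setOf_eq] at ht
      by_contra hcon
      push_neg at hcon
      have hsub : (Finset.univ.filter fun i : Fin n => v i ≤ t)
          ⊆ Finset.univ.filter fun i : Fin n => v i < y := by
        intro i hi
        simp only [Finset.mem_filter, Finset.mem_univ, true_and] at hi ⊢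
        exact lt_of_le_of_lt hi hcon
      exact absurd (ht.trans (Finset.card_le_card hsub)) (not_le.mpr hsmall)
  calc ENNReal.ofReal (1 - α) ≤ μ (A (Fin.last n)) := hμA
    _ = ℙ (T ⁻¹' (A (Fin.last n))) := Measure.map_apply hT (hAm (Fin.last n))
    _ ≤ ℙ {ω | s (Fin.last n) ω ≤ orderStat (fun i : Fin n => s i.castSucc ω) k} :=
        measure_mono hsubset
end

section
/- (Depth spacings theorem.) Let Y, Y_1, ..., Y_n be i.i.d. random elements of a measurable space 𝒴 with common law P, and let D : 𝒴 → [0,1] be measurable such that the CDF G(t) = P(D(Y) ≤ t) is continuous. Let D^(i) be the i-th largest value among D(Y_1), ..., D(Y_n) for i = 1, ..., n, and set D^(0) = 1. Define the depth spacings MS_i = {y ∈ 𝒴 : D^(i−1) > D(y) ≥ D^(i)} for i = 1, ..., n. Then the random vector (P(Y ∈ MS_1 | Y_1,...,Y_n), P(Y ∈ MS_2 | Y_1,...,Y_n), ..., P(Y ∈ MS_n | Y_1,...,Y_n)) has the same joint distribution as (Z_(1), Z_(2) − Z_(1), ..., Z_(n) − Z_(n−1)), where Z_(1) ≤ ... ≤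 Z_(n) are the order statistics of n i.i.d. uniform random variables on [0,1]. -/
open MeasureTheory ProbabilityTheory

namespace OSAux

variable {n : ℕ} {v : Fin n → ℝ} {k : ℕ}

lemma card_mono {t t' : ℝ} (h : t ≤ t') :
    (Finset.univ.filter fun i => v i ≤ t).card ≤ (Finset.univ.filter fun i => v i ≤ t').card := by
  apply Finset.card_le_card
  apply Finset.monotone_filter_right
  intro i _ hi; exact le_trans hi h

lemma setS_nonempty (hk : k ≤ n) (hk1 : 1 ≤ k) :
    {t : ℝ | k ≤ (Finset.univ.filter fun i => v i ≤ t).card}.Nonempty := by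
  have hn : 0 < n := lt_of_lt_of_le hk1 hk
  have : Nonempty (Fin n) := ⟨⟨0, hn⟩⟩
  refine ⟨(Finset.univ.sup' Finset.univ_nonempty v), ?_⟩
  have : (Finset.univ.filter fun i => v i ≤ Finset.univ.sup' Finset.univ_nonempty v) =
      Finset.univ := by
    refine Finset.eq_univ_iff_forall.2 fun i => Finset.mem_filter.2 ⟨Finset.mem_univ _, ?_⟩
    exact Finset.le_sup' v (Finset.mem_univ i)
  simp only [Set.mem_setOf_eq, this, Finset.card_univ, Fintype.card_fin]
  exact hk

lemma setS_bddBelow (hk1 : 1 ≤ k) :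
    BddBelow {t : ℝ | k ≤ (Finset.univ.filter fun i => v i ≤ t).card} := by
  rcases Nat.eq_zero_or_pos n with hn | hn
  · refine ⟨0, fun t ht => ?_⟩
    exfalso
    have hle : (Finset.univ.filter fun i => v i ≤ t).card ≤ n := by
      simpa using Finset.card_filter_le Finset.univ (fun i => v i ≤ t)
    simp only [Set.mem_setOf_eq] at ht
    omega
  · have : Nonempty (Fin n) := ⟨⟨0, hn⟩⟩
    refine ⟨Finset.univ.inf' Finset.univ_nonempty v, fun t ht => ?_⟩
    simp only [Set.mem_setOf_eq] at ht
    have hne : (Finset.univ.filter fun i => v i ≤ t).Nonempty := by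
      rw [← Finset.card_pos]; omega
    obtain ⟨i, hi⟩ := hne
    have := (Finset.mem_filter.1 hi).2
    exact le_trans (Finset.inf'_le v (Finset.mem_univ i)) this

lemma le_card_os (hk1 : 1 ≤ k) (hk : k ≤ n) :
    k ≤ (Finset.univ.filter fun i => v i ≤ orderStat v k).card := by
  have hne := setS_nonempty (v := v) hk hk1
  have hbdd := setS_bddBelow (v := v) hk1
  set c := orderStat v k with hc
  by_cases hT : (Finset.univ.filter fun i => c < v i).Nonempty
  · set ε := ((Finset.univ.filter fun i => c < v i).inf' hT v - c) with hε
    have hεpos : 0 < ε := by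
      have : c < (Finset.univ.filter fun i => c < v i).inf' hT v := by
        rw [Finset.lt_inf'_iff]
        intro i hi; exact (Finset.mem_filter.1 hi).2
      linarith
    obtain ⟨t, htS, htlt⟩ := Real.lt_sInf_add_pos hne hεpos
    have htc : t < c + ε := htlt
    have hsub : (Finset.univ.filter fun i => v i ≤ t) ⊆
        (Finset.univ.filter fun i => v i ≤ c) := by
      intro i hi
      have hvt := (Finset.mem_filter.1 hi).2
      refine Finset.mem_filter.2 ⟨Finset.mem_univ _, ?_⟩
      by_contra hlt
      push_neg at hlt
      have hmem : i ∈ Finset.univ.filter fun i => c < v i :=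
        Finset.mem_filter.2 ⟨Finset.mem_univ _, hlt⟩
      have hle : (Finset.univ.filter fun i => c < v i).inf' hT v ≤ v i :=
        Finset.inf'_le v hmem
      have : c + ε ≤ v i := by rw [hε]; linarith
      linarith
    exact le_trans htS (Finset.card_le_card hsub)
  · have : (Finset.univ.filter fun i => v i ≤ c) = Finset.univ := by
      refine Finset.eq_univ_iff_forall.2 fun i => Finset.mem_filter.2 ⟨Finset.mem_univ _, ?_⟩
      by_contra h
      push_neg at h
      exact hT ⟨i, Finset.mem_filter.2 ⟨Finset.mem_univ _, h⟩⟩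
    simp only [this, Finset.card_univ, Fintype.card_fin]
    exact hk

lemma os_le_iff (hk1 : 1 ≤ k) (hk : k ≤ n) {t : ℝ} :
    orderStat v k ≤ t ↔ k ≤ (Finset.univ.filter fun i => v i ≤ t).card := by
  constructor
  · intro h
    exact le_trans (le_card_os hk1 hk) (card_mono h)
  · intro h
    exact csInf_le (setS_bddBelow hk1) h

lemma os_lt_iff (hk1 : 1 ≤ k) (hk : k ≤ n) {s : ℝ} :
    orderStat v k < s ↔ k ≤ (Finset.univ.filter fun i => v i < s).card := by
  constructor
  · intro h
    refine le_trans (le_card_os (v := v) hk1 hk) (Finset.card_le_card ?_)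
    apply Finset.monotone_filter_right
    intro i _ hi; exact lt_of_le_of_lt hi h
  · intro h
    have hne : (Finset.univ.filter fun i => v i < s).Nonempty := by
      rw [← Finset.card_pos]; omega
    set t := (Finset.univ.filter fun i => v i < s).sup' hne v with ht
    have hts : t < s := by
      rw [ht, Finset.sup'_lt_iff]
      intro i hi; exact (Finset.mem_filter.1 hi).2
    have : orderStat v k ≤ t := by
      rw [os_le_iff hk1 hk]
      refine le_trans h (Finset.card_le_card ?_)
      intro i hi
      exact Finset.mem_filter.2 ⟨Finset.mem_univ _, Finset.le_sup' v hi⟩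
    linarith

lemma os_mono_k {k k' : ℕ} (hk1 : 1 ≤ k) (hkk' : k ≤ k') (hk' : k' ≤ n) :
    orderStat v k ≤ orderStat v k' := by
  rw [os_le_iff hk1 (le_trans hkk' hk')]
  exact le_trans hkk' (le_card_os (le_trans hk1 hkk') hk')

lemma os_le_of_forall_le {b : ℝ} (hb : ∀ i, v i ≤ b) (hk1 : 1 ≤ k) (hk : k ≤ n) :
    orderStat v k ≤ b := by
  rw [os_le_iff hk1 hk]
  have : (Finset.univ.filter fun i => v i ≤ b) = Finset.univ :=
    Finset.eq_univ_iff_forall.2 fun i => Finset.mem_filter.2 ⟨Finset.mem_univ _, hb i⟩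
  simp only [this, Finset.card_univ, Fintype.card_fin]
  exact hk

lemma os_comp_mono {G : ℝ → ℝ} (hG : Monotone G) (hk1 : 1 ≤ k) (hk : k ≤ n) :
    orderStat (fun i => G (v i)) k = G (orderStat v k) := by
  refine le_antisymm ?_ ?_
  · rw [os_le_iff hk1 hk]
    refine le_trans (le_card_os (v := v) hk1 hk) (Finset.card_le_card ?_)
    apply Finset.monotone_filter_right
    intro i _ hi; exact hG hi
  · by_contra h
    push_neg at h
    have hcard := le_card_os (v := fun i => G (v i)) hk1 hk
    have hsub : (Finset.univ.filter fun i => G (v i) ≤ orderStat (fun i => G (v i)) k) ⊆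
        (Finset.univ.filter fun i => v i < orderStat v k) := by
      intro i hi
      have hGi := (Finset.mem_filter.1 hi).2
      refine Finset.mem_filter.2 ⟨Finset.mem_univ _, ?_⟩
      by_contra hge
      push_neg at hge
      exact absurd (le_trans (hG hge) hGi) (not_le.2 h)
    have : k ≤ (Finset.univ.filter fun i => v i < orderStat v k).card :=
      le_trans hcard (Finset.card_le_card hsub)
    have := (os_lt_iff (v := v) hk1 hk).2 this
    exact lt_irrefl _ this

lemma os_flip (hk1 : 1 ≤ k) (hk : k ≤ n) :
    orderStat (fun i => 1 - v i) k = 1 - orderStat v (n + 1 - k) := by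
  refine eq_of_forall_lt_iff fun s => ?_
  have hklen : n + 1 - k ≤ n := by omega
  have hk1n : 1 ≤ n + 1 - k := by omega
  have hcle : (Finset.univ.filter fun i => v i < 1 - s).card ≤ n := by
    simpa using Finset.card_filter_le Finset.univ (fun i => v i < 1 - s)
  have h2 : (Finset.univ.filter fun i => v i < 1 - s).card +
      (Finset.univ.filter fun i => ¬ v i < 1 - s).card = n := by
    rw [Finset.card_filter_add_card_filter_not]
    simp
  have hkey : (Finset.univ.filter fun i => (1 : ℝ) - v i ≤ s) =
      (Finset.univ.filter fun i => ¬ v i < 1 - s) := by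
    apply Finset.filter_congr
    intro i _
    constructor
    · intro h hlt; linarith
    · intro h; push_neg at h; linarith
  rw [show (s < orderStat (fun i => 1 - v i) k) ↔
      ¬ (orderStat (fun i => 1 - v i) k ≤ s) from not_le.symm]
  rw [os_le_iff hk1 hk, hkey]
  rw [show (s < 1 - orderStat v (n + 1 - k)) ↔ orderStat v (n + 1 - k) < 1 - s by
    constructor <;> (intro h; linarith)]
  rw [os_lt_iff hk1n hklen]
  omega

lemma os_measurable (hk1 : 1 ≤ k) (hk : k ≤ n) :
    Measurable (fun u : Fin n → ℝ => orderStat u k) := by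
  apply measurable_of_Iic
  intro t
  have : (fun u : Fin n → ℝ => orderStat u k) ⁻¹' Set.Iic t =
      {u : Fin n → ℝ | k ≤ (Finset.univ.filter fun i => u i ≤ t).card} := by
    ext u
    simp only [Set.mem_preimage, Set.mem_Iic, Set.mem_setOf_eq]
    exact os_le_iff hk1 hk
  rw [this]
  have hmeas : Measurable (fun u : Fin n → ℝ => (Finset.univ.filter fun i => u i ≤ t).card) := by
    have : (fun u : Fin n → ℝ => (Finset.univ.filter fun i => u i ≤ t).card) =
        fun u => ∑ i : Fin n, if u i ≤ t then 1 else 0 := by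
      funext u
      rw [Finset.card_filter]
    rw [this]
    apply Finset.measurable_sum
    intro i _
    apply Measurable.ite _ measurable_const measurable_const
    exact measurableSet_le (measurable_pi_apply i) measurable_const
  exact hmeas (by trivial)

end OSAux


section MeasAux

variable {𝒴 : Type*} [MeasurableSpace 𝒴] {P : Measure 𝒴} [IsProbabilityMeasure P]
  {D : 𝒴 → ℝ} {G : ℝ → ℝ}

lemma G_mono (hG : ∀ t, G t = (P {y | D y ≤ t}).toReal) : Monotone G := by
  intro a b hab
  rw [hG a, hG b]
  exact ENNReal.toReal_mono (measure_ne_top _ _)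
    (measure_mono fun y (hy : D y ≤ a) => le_trans hy hab)

lemma G_nonneg (hG : ∀ t, G t = (P {y | D y ≤ t}).toReal) (t : ℝ) : 0 ≤ G t := by
  rw [hG t]; exact ENNReal.toReal_nonneg

lemma G_le_one (hG : ∀ t, G t = (P {y | D y ≤ t}).toReal) (t : ℝ) : G t ≤ 1 := by
  rw [hG t]
  exact ENNReal.toReal_le_of_le_ofReal zero_le_one (by simpa using prob_le_one)

lemma atom_zero (hD : Measurable D) (hG : ∀ t, G t = (P {y | D y ≤ t}).toReal)
    (hGcont : Continuous G) (a : ℝ) : P {y | D y = a} = 0 := by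
  set c := (P {y | D y = a}).toReal with hc
  have key : ∀ ε : ℝ, 0 < ε → c ≤ G a - G (a - ε) := by
    intro ε hε
    have hdisj : Disjoint {y | D y ≤ a - ε} {y | D y = a} := by
      rw [Set.disjoint_left]
      intro y hy1 hy2
      simp only [Set.mem_setOf_eq] at hy1 hy2
      rw [hy2] at hy1; linarith
    have hunion : P ({y | D y ≤ a - ε} ∪ {y | D y = a}) =
        P {y | D y ≤ a - ε} + P {y | D y = a} :=
      measure_union hdisj (hD (measurableSet_singleton a))
    have hsub : ({y | D y ≤ a - ε} ∪ {y | D y = a}) ⊆ {y | D y ≤ a} := by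
      intro y hy
      simp only [Set.mem_union, Set.mem_setOf_eq] at hy ⊢
      rcases hy with hy | hy
      · linarith
      · linarith [le_of_eq hy]
    have hle : P {y | D y ≤ a - ε} + P {y | D y = a} ≤ P {y | D y ≤ a} := by
      rw [← hunion]; exact measure_mono hsub
    have := ENNReal.toReal_mono (measure_ne_top _ _) hle
    rw [ENNReal.toReal_add (measure_ne_top _ _) (measure_ne_top _ _)] at this
    rw [hG a, hG (a - ε)]
    linarith
  have htend : Filter.Tendsto (fun ε : ℝ => G a - G (a - ε)) (nhdsWithin 0 (Set.Ioi 0))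
      (nhds 0) := by
    have : Filter.Tendsto (fun ε : ℝ => G a - G (a - ε)) (nhds 0) (nhds (G a - G (a - 0))) :=
      (Filter.Tendsto.const_sub _ (hGcont.tendsto _ |>.comp (tendsto_const_nhds.sub
        Filter.tendsto_id)))
    simp only [sub_zero, sub_self] at this
    exact this.mono_left nhdsWithin_le_nhds
  have hcle : c ≤ 0 := by
    refine ge_of_tendsto htend ?_
    filter_upwards [self_mem_nhdsWithin] with ε hε
    exact key ε hε
  have hc0 : c = 0 := le_antisymm hcle ENNReal.toReal_nonneg
  have := (ENNReal.toReal_eq_zero_iff _).1 hc0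
  rcases this with h | h
  · exact h
  · exact absurd h (measure_ne_top _ _)

lemma P_lt_eq (hD : Measurable D) (hG : ∀ t, G t = (P {y | D y ≤ t}).toReal)
    (hGcont : Continuous G) (a : ℝ) : P {y | D y < a} = P {y | D y ≤ a} := by
  refine le_antisymm (measure_mono ?_) ?_
  · intro y hy
    simp only [Set.mem_setOf_eq] at hy ⊢
    exact le_of_lt hy
  calc P {y | D y ≤ a} ≤ P ({y | D y < a} ∪ {y | D y = a}) := by
        refine measure_mono fun y hy => ?_
        simp only [Set.mem_setOf_eq] at hy
        simp only [Set.mem_union, Set.mem_setOf_eq]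
        rcases lt_or_eq_of_le hy with h | h
        · exact Or.inl h
        · exact Or.inr h
    _ ≤ P {y | D y < a} + P {y | D y = a} := measure_union_le _ _
    _ = P {y | D y < a} := by rw [atom_zero hD hG hGcont a, add_zero]

lemma interval_prob (hD : Measurable D) (hG : ∀ t, G t = (P {y | D y ≤ t}).toReal)
    (hGcont : Continuous G) {a b : ℝ} (hba : b ≤ a) :
    (P {y | a > D y ∧ D y ≥ b}).toReal = G a - G b := by
  have hset : {y | a > D y ∧ D y ≥ b} = {y | D y < a} \ {y | D y < b} := by
    ext y
    simp only [Set.mem_setOf_eq, Set.mem_diff, not_lt, gt_iff_lt, ge_iff_le]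
  have hsub : {y | D y < b} ⊆ {y | D y < a} := by
    intro y hy
    simp only [Set.mem_setOf_eq] at hy ⊢
    exact lt_of_lt_of_le hy hba
  have hsub' : {y | D y ≤ b} ⊆ {y | D y ≤ a} := by
    intro y hy
    simp only [Set.mem_setOf_eq] at hy ⊢
    exact le_trans hy hba
  rw [hset, measure_diff hsub ((hD measurableSet_Iio).nullMeasurableSet) (measure_ne_top _ _)]
  rw [P_lt_eq hD hG hGcont a, P_lt_eq hD hG hGcont b]
  rw [ENNReal.toReal_sub_of_le (measure_mono hsub') (measure_ne_top _ _)]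
  rw [← hG a, ← hG b]

end MeasAux


section MeasAux2

variable {𝒴 : Type*} [MeasurableSpace 𝒴] {P : Measure 𝒴} [IsProbabilityMeasure P]
  {D : 𝒴 → ℝ} {G : ℝ → ℝ}


lemma G_one (hD01 : ∀ y, D y ∈ Set.Icc (0:ℝ) 1) (hG : ∀ t, G t = (P {y | D y ≤ t}).toReal) :
    G 1 = 1 := by
  rw [hG]
  have : {y | D y ≤ 1} = Set.univ := Set.eq_univ_iff_forall.2 fun y => (hD01 y).2
  rw [this]
  simp

lemma G_zero_of_neg (hD01 : ∀ y, D y ∈ Set.Icc (0:ℝ) 1)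
    (hG : ∀ t, G t = (P {y | D y ≤ t}).toReal) {x : ℝ} (hx : x < 0) : G x = 0 := by
  rw [hG]
  have : {y | D y ≤ x} = ∅ := by
    ext y
    simp only [Set.mem_setOf_eq, Set.mem_empty_iff_false, iff_false, not_le]
    exact lt_of_lt_of_le hx (hD01 y).1
  rw [this]
  simp

lemma PIT (hD : Measurable D) (hD01 : ∀ y, D y ∈ Set.Icc (0:ℝ) 1)
    (hG : ∀ t, G t = (P {y | D y ≤ t}).toReal) (hGcont : Continuous G) (t : ℝ) :
    P {y | 1 - G (D y) ≤ t} = (volume.restrict (Set.Icc (0:ℝ) 1)) (Set.Iic t) := by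
  have hGmono := G_mono hG
  have hG0 : ∀ x, 0 ≤ G x := fun x => by rw [hG x]; exact ENNReal.toReal_nonneg
  have hG1' : ∀ x, G x ≤ 1 := fun x => by
    rw [hG x]
    exact ENNReal.toReal_le_of_le_ofReal zero_le_one (by simpa using prob_le_one)
  rw [Measure.restrict_apply measurableSet_Iic]
  rcases lt_or_ge t 0 with ht | ht
  · -- empty both sides
    have h1 : Set.Iic t ∩ Set.Icc (0:ℝ) 1 = ∅ := by
      ext x
      simp only [Set.mem_inter_iff, Set.mem_Iic, Set.mem_Icc, Set.mem_empty_iff_false, iff_false]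
      rintro ⟨h1, h2, _⟩; linarith
    have h2 : {y | 1 - G (D y) ≤ t} = ∅ := by
      ext y
      simp only [Set.mem_setOf_eq, Set.mem_empty_iff_false, iff_false, not_le]
      have := hG1' (D y); linarith
    rw [h1, h2]; simp
  rcases le_or_gt 1 t with ht1 | ht1
  · -- everything
    have h1 : Set.Iic t ∩ Set.Icc (0:ℝ) 1 = Set.Icc 0 1 := by
      apply Set.inter_eq_self_of_subset_right
      intro x hx
      exact le_trans hx.2 ht1
    have h2 : {y | 1 - G (D y) ≤ t} = Set.univ := by
      apply Set.eq_univ_iff_forall.2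
      intro y
      have := hG0 (D y)
      simp only [Set.mem_setOf_eq]
      linarith
    rw [h1, h2]
    simp [Real.volume_Icc]
  · -- main case 0 ≤ t < 1
    set s := 1 - t with hs
    have hs0 : 0 < s := by linarith
    have hs1 : s ≤ 1 := by linarith
    set B := {x : ℝ | s ≤ G x} with hB
    have hBclosed : IsClosed B := isClosed_Ici.preimage hGcont
    have hBne : B.Nonempty := ⟨1, by simp only [hB, Set.mem_setOf_eq, G_one hD01 hG]; linarith⟩
    have hBlb : ∀ x ∈ B, (0:ℝ) ≤ x := by
      intro x hx
      by_contra h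
      push_neg at h
      have := G_zero_of_neg hD01 hG h
      simp only [hB, Set.mem_setOf_eq] at hx
      linarith
    have hBbdd : BddBelow B := ⟨0, hBlb⟩
    set c := sInf B with hc
    have hcB : c ∈ B := hBclosed.csInf_mem hBne hBbdd
    have hGc_ge : s ≤ G c := hcB
    have hGc : G c = s := by
      refine le_antisymm ?_ hGc_ge
      by_contra h
      push_neg at h
      have hopen : {x | s < G x} ∈ nhds c :=
        (isOpen_lt continuous_const hGcont).mem_nhds h
      obtain ⟨δ, hδ, hball⟩ := Metric.mem_nhds_iff.1 hopen
      have hmem : c - δ / 2 ∈ B := by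
        have : c - δ / 2 ∈ Metric.ball c δ := by
          simp only [Metric.mem_ball, Real.dist_eq]
          rw [abs_of_nonpos (by linarith)]
          linarith
        have h' := hball this
        simp only [Set.mem_setOf_eq] at h'
        simp only [hB, Set.mem_setOf_eq]
        exact le_of_lt h'
      have := csInf_le hBbdd hmem
      linarith
    have hBIci : B = Set.Ici c := by
      ext x
      simp only [hB, Set.mem_setOf_eq, Set.mem_Ici]
      constructor
      · intro hx
        exact csInf_le hBbdd hx
      · intro hx
        calc s = G c := hGc.symm
          _ ≤ G x := hGmono hx
    have hset : {y | 1 - G (D y) ≤ t} = {y | D y < c}ᶜ := by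
      ext y
      simp only [Set.mem_setOf_eq, Set.mem_compl_iff, not_lt]
      constructor
      · intro h
        have hDy : D y ∈ B := by
          simp only [hB, Set.mem_setOf_eq]; linarith
        rw [hBIci] at hDy
        exact hDy
      · intro h
        have : s ≤ G (D y) := by
          have : D y ∈ B := by rw [hBIci]; exact h
          exact this
        linarith
    rw [hset, measure_compl (show MeasurableSet {y | D y < c} from hD measurableSet_Iio) (measure_ne_top _ _)]
    rw [P_lt_eq hD hG hGcont c]
    have hPc : P {y | D y ≤ c} = ENNReal.ofReal s := by
      have := hG c
      rw [hGc] at this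
      rw [← ENNReal.ofReal_toReal (measure_ne_top P {y | D y ≤ c}), ← this]
    rw [hPc, measure_univ]
    have h1 : Set.Iic t ∩ Set.Icc (0:ℝ) 1 = Set.Icc 0 t := by
      ext x
      simp only [Set.mem_inter_iff, Set.mem_Iic, Set.mem_Icc]
      constructor
      · rintro ⟨h1, h2, h3⟩; exact ⟨h2, h1⟩
      · rintro ⟨h1, h2⟩; exact ⟨h2, h1, by linarith⟩
    rw [h1, Real.volume_Icc]
    rw [show (1 : ENNReal) = ENNReal.ofReal 1 by simp]
    rw [← ENNReal.ofReal_sub 1 (by linarith)]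
    congr 1
    simp [hs]

end MeasAux2

-- joint law of independent coordinates is the product measure
lemma map_pi_of_iIndep {Ω : Type*} [MeasureSpace Ω] [IsProbabilityMeasure (ℙ : Measure Ω)]
    {n : ℕ} (W : Fin n → Ω → ℝ) (hW : ∀ i, Measurable (W i))
    (hind : iIndepFun W ℙ)
    (μ : Fin n → Measure ℝ) [∀ i, IsProbabilityMeasure (μ i)]
    (hμ : ∀ i, Measure.map (W i) ℙ = μ i) :
    Measure.map (fun ω (i : Fin n) => W i ω) ℙ = Measure.pi μ := by
  symm
  apply Measure.pi_eq
  intro s hs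
  rw [Measure.map_apply (measurable_pi_lambda _ hW) (MeasurableSet.univ_pi hs)]
  have hpre : (fun ω (i : Fin n) => W i ω) ⁻¹' Set.pi Set.univ s = ⋂ i, W i ⁻¹' s i := by
    ext ω
    simp [Set.mem_pi]
  rw [hpre]
  have hkey := hind.measure_inter_preimage_eq_mul (S := Finset.univ) (sets := s)
    (fun i _ => hs i)
  simp only [Finset.mem_univ, Set.iInter_true, Finset.prod_congr] at hkey
  rw [hkey]
  apply Finset.prod_congr rfl
  intro i _
  rw [← hμ i, Measure.map_apply (hW i) (hs i)]



/-- **Depth spacings theorem.**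
Let `Y, Y₁, …, Yₙ` be i.i.d. with law `P` on `𝒴` and let `D : 𝒴 → [0,1]` be a
measurable depth function with continuous CDF `G t = P(D(Y) ≤ t)`.  With `D^(i)`
the `i`-th largest among `D(Y₁), …, D(Yₙ)` (and `D^(0) = 1`), the vector of
spacing probabilities `(P(MS₁ ∣ sample), …, P(MSₙ ∣ sample))`, where
`MSᵢ = {y : D^(i-1) > D y ≥ D^(i)}`, is jointly distributed as
`(Z_(1), Z_(2) − Z_(1), …, Z_(n) − Z_(n-1))` for `Z₁, …, Zₙ` i.i.d. uniform
on `[0,1]`. -/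
theorem depth_spacings
    {Ω : Type*} [MeasureSpace Ω] [IsProbabilityMeasure (ℙ : Measure Ω)]
    {𝒴 : Type*} [MeasurableSpace 𝒴] (P : Measure 𝒴) [IsProbabilityMeasure P]
    {n : ℕ} (Ys : Fin n → Ω → 𝒴)
    (hmeas : ∀ i, Measurable (Ys i))
    (hindep : iIndepFun Ys ℙ)
    (hlaw : ∀ i, Measure.map (Ys i) ℙ = P)
    (D : 𝒴 → ℝ) (hD : Measurable D) (hD01 : ∀ y, D y ∈ Set.Icc (0 : ℝ) 1)
    (G : ℝ → ℝ) (hG : ∀ t, G t = (P {y | D y ≤ t}).toReal)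
    (hGcont : Continuous G)
    -- `dLarge ω i` is the `i`-th largest value among `D (Ys j ω)`, with `dLarge ω 0 = 1`
    (dLarge : Ω → ℕ → ℝ)
    (hdLarge : ∀ ω i, dLarge ω i =
      if i = 0 then 1 else orderStat (fun j => D (Ys j ω)) (n + 1 - i)) :
    Measure.map
        (fun ω => fun i : Fin n =>
          (P {y | dLarge ω i.val > D y ∧ D y ≥ dLarge ω (i.val + 1)}).toReal) ℙ =
      Measure.map
        (fun u : Fin n → ℝ => fun i : Fin n =>
          orderStat u (i.val + 1) - if i.val = 0 then 0 else orderStat u i.val)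
        (Measure.pi fun _ : Fin n => volume.restrict (Set.Icc (0 : ℝ) 1)) := by
  classical
  have hGmono : Monotone G := G_mono hG
  set g : 𝒴 → ℝ := fun y => 1 - G (D y) with hg
  have hgmeas : Measurable g := measurable_const.sub (hGcont.measurable.comp hD)
  set W : Fin n → Ω → ℝ := fun i ω => g (Ys i ω) with hWdef
  have hWmeas : ∀ i, Measurable (W i) := fun i => hgmeas.comp (hmeas i)
  have hWindep : iIndepFun W ℙ :=
    hindep.comp (fun _ => g) (fun _ => hgmeas)
  haveI instU : IsProbabilityMeasure (volume.restrict (Set.Icc (0:ℝ) 1)) := by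
    constructor
    rw [Measure.restrict_apply MeasurableSet.univ]
    simp [Real.volume_Icc]
  have hWlaw : ∀ i, Measure.map (W i) ℙ = volume.restrict (Set.Icc (0:ℝ) 1) := by
    intro i
    have h1 : Measure.map (W i) ℙ = Measure.map g P := by
      rw [← hlaw i]
      exact (Measure.map_map hgmeas (hmeas i)).symm
    rw [h1]
    have : IsProbabilityMeasure (Measure.map g P) :=
      Measure.isProbabilityMeasure_map hgmeas.aemeasurable
    have : IsFiniteMeasure (Measure.map g P) := by infer_instance
    refine MeasureTheory.Measure.ext_of_Iic _ _ fun t => ?_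
    rw [Measure.map_apply hgmeas measurableSet_Iic]
    exact PIT hD hD01 hG hGcont t
  have hjoint : Measure.map (fun ω (i : Fin n) => W i ω) ℙ =
      Measure.pi (fun _ : Fin n => volume.restrict (Set.Icc (0:ℝ) 1)) :=
    map_pi_of_iIndep W hWmeas hWindep _ hWlaw
  set Φ : (Fin n → ℝ) → (Fin n → ℝ) := fun u i =>
    orderStat u (i.val + 1) - if i.val = 0 then 0 else orderStat u i.val with hΦdef
  have hΦmeas : Measurable Φ := by
    apply measurable_pi_lambda
    intro i
    have him : i.val < n := i.isLt
    have h1 : Measurable fun u : Fin n → ℝ => orderStat u (i.val + 1) :=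
      OSAux.os_measurable (by omega) (by omega)
    simp only [hΦdef]
    refine h1.sub ?_
    by_cases h0 : i.val = 0
    · have he : (fun u : Fin n → ℝ => if i.val = 0 then (0:ℝ) else orderStat u i.val) =
          fun _ => 0 := by
        funext u; rw [if_pos h0]
      rw [he]; exact measurable_const
    · have he : (fun u : Fin n → ℝ => if i.val = 0 then (0:ℝ) else orderStat u i.val) =
          fun u => orderStat u i.val := by
        funext u; rw [if_neg h0]
      rw [he]; exact OSAux.os_measurable (by omega) (by omega)
  have hcomp : (fun ω => fun i : Fin n =>
      (P {y | dLarge ω i.val > D y ∧ D y ≥ dLarge ω (i.val + 1)}).toReal) =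
      Φ ∘ (fun ω (i : Fin n) => W i ω) := by
    funext ω
    funext i
    have him : i.val < n := i.isLt
    have hn : 0 < n := lt_of_le_of_lt (Nat.zero_le _) him
    set v : Fin n → ℝ := fun j => D (Ys j ω) with hv
    have hosw : ∀ k, 1 ≤ k → k ≤ n →
        orderStat (fun j => W j ω) k = 1 - G (orderStat v (n + 1 - k)) := by
      intro k hk1 hk
      have e1 : (fun j => W j ω) = fun j => 1 - G (v j) := rfl
      rw [e1, OSAux.os_flip hk1 hk, OSAux.os_comp_mono hGmono (by omega) (by omega)]
    simp only [Function.comp_apply, hΦdef]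
    by_cases h0 : i.val = 0
    · have hd0 : dLarge ω i.val = 1 := by rw [h0, hdLarge]; simp
      have hd1 : dLarge ω (i.val + 1) = orderStat v n := by
        rw [h0, hdLarge]
        norm_num
        rfl
      have hble : orderStat v n ≤ 1 :=
        OSAux.os_le_of_forall_le (fun j => (hD01 _).2) hn le_rfl
      rw [hd0, hd1, interval_prob hD hG hGcont hble, G_one hD01 hG]
      rw [h0]
      simp only [if_true, zero_add, sub_zero]
      rw [hosw 1 le_rfl hn]
      norm_num
    · have hm1 : 1 ≤ i.val := Nat.one_le_iff_ne_zero.2 h0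
      have hda : dLarge ω i.val = orderStat v (n + 1 - i.val) := by
        rw [hdLarge]; simp [h0]; rfl
      have hdb : dLarge ω (i.val + 1) = orderStat v (n - i.val) := by
        rw [hdLarge]
        have : i.val + 1 ≠ 0 := by omega
        simp only [this, if_false]
        congr 1
        omega
      have hble : orderStat v (n - i.val) ≤ orderStat v (n + 1 - i.val) :=
        OSAux.os_mono_k (by omega) (by omega) (by omega)
      rw [hda, hdb, interval_prob hD hG hGcont hble]
      simp only [h0, if_false]
      rw [hosw (i.val + 1) (by omega) (by omega), hosw i.val hm1 (by omega)]
      have e2 : n + 1 - (i.val + 1) = n - i.val := by omega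
      rw [e2]
      ring
  rw [hcomp, ← Measure.map_map hΦmeas (measurable_pi_lambda _ hWmeas), hjoint]
end

section
/- (α-expectation property of the depth tolerance region.) Let Y, Y_1, ..., Y_n be i.i.d. random elements of a measurable space 𝒴 with common law P, let D : 𝒴 → ℝ be measurable such that the CDF G(t) = P(D(Y) ≤ t) is continuous, fix r ∈ {1, ..., n}, let D^(r) be the r-th largest value among D(Y_1), ..., D(Y_n), and define T̂^r = {y ∈ 𝒴 : D(y) ≥ D^(r)}. Then E[ P(Y ∈ T̂^r | Y_1, ..., Y_n) ] = r/(n+1). In particular, if r = (n+1)α is an integer, then T̂^r is an α-expectation tolerance region. -/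
open MeasureTheory ProbabilityTheory
open Finset Set
open scoped ENNReal

lemma orderStat_le_iff {n : ℕ} (v : Fin n → ℝ) {k : ℕ} (hk1 : 1 ≤ k) (hkn : k ≤ n) (c : ℝ) :
    orderStat v k ≤ c ↔ k ≤ (Finset.univ.filter fun i => v i ≤ c).card := by
  have hne : (0 : ℕ) < n := lt_of_lt_of_le hk1 hkn
  haveI : Nonempty (Fin n) := ⟨⟨0, hne⟩⟩
  set S : Set ℝ := {t : ℝ | k ≤ (Finset.univ.filter fun i => v i ≤ t).card} with hS
  have hmono : ∀ {s t : ℝ}, s ≤ t → s ∈ S → t ∈ S := by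
    intro s t hst hs
    refine le_trans hs (Finset.card_le_card ?_)
    intro i hi
    simp only [Finset.mem_filter] at hi ⊢
    exact ⟨hi.1, le_trans hi.2 hst⟩
  have hSne : S.Nonempty := by
    refine ⟨(Finset.univ.image v).max' (by simp), ?_⟩
    have : (Finset.univ.filter fun i => v i ≤ (Finset.univ.image v).max' (by simp)) = Finset.univ := by
      ext i; simp only [Finset.mem_filter, Finset.mem_univ, true_and, iff_true]
      exact Finset.le_max' _ _ (Finset.mem_image_of_mem v (Finset.mem_univ i))
    simp [hS, this, hkn]
  have hbdd : BddBelow S := by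
    refine ⟨(Finset.univ.image v).min' (by simp), ?_⟩
    intro t ht
    have : 0 < (Finset.univ.filter fun i => v i ≤ t).card := lt_of_lt_of_le hk1 ht
    obtain ⟨i, hi⟩ := Finset.card_pos.mp this
    simp only [Finset.mem_filter] at hi
    exact le_trans (Finset.min'_le _ _ (Finset.mem_image_of_mem v (Finset.mem_univ i))) hi.2
  have hinf : sInf S ∈ S := by
    set c₀ := sInf S with hc₀
    by_cases hA : (Finset.univ.filter fun i => c₀ < v i) = ∅
    · have : (Finset.univ.filter fun i => v i ≤ c₀) = Finset.univ := by
        ext i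
        simp only [Finset.mem_filter, Finset.mem_univ, true_and, iff_true]
        by_contra h
        have : i ∈ (Finset.univ.filter fun i => c₀ < v i) := by
          simp [lt_of_not_ge h]
        simp [hA] at this
      simp [hS, this, hkn]
    · have hAne : ((Finset.univ.filter fun i => c₀ < v i)).Nonempty := Finset.nonempty_of_ne_empty hA
      set m := (((Finset.univ.filter fun i => c₀ < v i)).image v).min' (hAne.image v) with hm
      have hc₀m : c₀ < m := by
        have hmem := (((Finset.univ.filter fun i => c₀ < v i)).image v).min'_mem (hAne.image v)
        simp only [Finset.mem_image, Finset.mem_filter] at hmem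
        obtain ⟨i, ⟨_, hi⟩, hvi⟩ := hmem
        rw [← hm] at hvi
        exact hvi ▸ hi
      obtain ⟨t, htS, htm⟩ := (csInf_lt_iff hbdd hSne).mp hc₀m
      have hsub : (Finset.univ.filter fun i => v i ≤ t) ⊆ (Finset.univ.filter fun i => v i ≤ c₀) := by
        intro i hi
        simp only [Finset.mem_filter, Finset.mem_univ, true_and] at hi ⊢
        by_contra h
        have h1 : c₀ < v i := lt_of_not_ge h
        have : m ≤ v i := Finset.min'_le _ _ (Finset.mem_image_of_mem v (by simp [h1]))
        exact absurd hi (not_le.mpr (lt_of_lt_of_le htm this))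
      exact le_trans htS (Finset.card_le_card hsub)
  constructor
  · intro h
    exact hmono h hinf
  · intro h
    exact csInf_le hbdd h


lemma measurableSet_card_le {ι α : Type*} [Fintype ι] [MeasurableSpace α]
    (p : ι → α → Prop) [∀ i x, Decidable (p i x)] (hp : ∀ i, MeasurableSet {x | p i x}) (k : ℕ) :
    MeasurableSet {x : α | k ≤ (Finset.univ.filter fun i => p i x).card} := by
  have : {x : α | k ≤ (Finset.univ.filter fun i => p i x).card}
      = ⋃ (s : Finset ι) (_ : s.card = k), ⋂ i ∈ s, {x | p i x} := by
    ext x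
    simp only [Set.mem_setOf_eq, Set.mem_iUnion, Set.mem_iInter]
    constructor
    · intro h
      obtain ⟨t, hts, htc⟩ := Finset.exists_subset_card_eq h
      exact ⟨t, htc, fun i hi => (Finset.mem_filter.mp (hts hi)).2⟩
    · rintro ⟨s, hsc, hs⟩
      calc k = s.card := hsc.symm
        _ ≤ _ := Finset.card_le_card (fun i hi => Finset.mem_filter.mpr ⟨Finset.mem_univ i, hs i hi⟩)
  rw [this]
  exact MeasurableSet.iUnion fun s => MeasurableSet.iUnion fun _ =>
    MeasurableSet.biInter s.countable_toSet fun i _ => hp i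


lemma measurable_orderStat {n : ℕ} {k : ℕ} (hk1 : 1 ≤ k) (hkn : k ≤ n) :
    Measurable (fun v : Fin n → ℝ => orderStat v k) := by
  apply measurable_of_Iic
  intro c
  have : (fun v : Fin n → ℝ => orderStat v k) ⁻¹' Set.Iic c
      = {v : Fin n → ℝ | k ≤ (Finset.univ.filter fun i => v i ≤ c).card} := by
    ext v; simp [orderStat_le_iff v hk1 hkn c]
  rw [this]
  exact measurableSet_card_le (ι := Fin n) (α := Fin n → ℝ) (fun i v => v i ≤ c)
    (fun i => measurableSet_le (measurable_pi_apply i) measurable_const) k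


lemma map_fun_eq_pi {Ω : Type*} [MeasureSpace Ω] [IsProbabilityMeasure (ℙ : Measure Ω)]
    {ι : Type*} [Fintype ι] {β : Type*} [MeasurableSpace β]
    (X : ι → Ω → β) (hX : ∀ i, Measurable (X i))
    (hindep : iIndepFun X ℙ)
    (μ : ι → Measure β) [∀ i, IsProbabilityMeasure (μ i)]
    (hlaw : ∀ i, Measure.map (X i) ℙ = μ i) :
    Measure.map (fun ω i => X i ω) ℙ = Measure.pi μ := by
  have hF : Measurable (fun ω i => X i ω) := measurable_pi_lambda _ hX
  refine (Measure.pi_eq (μ := μ) fun s hs => ?_).symm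
  rw [Measure.map_apply hF (MeasurableSet.univ_pi hs)]
  have : (fun ω i => X i ω) ⁻¹' Set.pi Set.univ s = ⋂ i ∈ Finset.univ, X i ⁻¹' s i := by
    ext ω; simp [Set.mem_pi]
  rw [this, hindep.measure_inter_preimage_eq_mul Finset.univ (fun i _ => hs i)]
  refine Finset.prod_congr rfl fun i _ => ?_
  rw [← hlaw i, Measure.map_apply (hX i) (hs i)]


lemma atomless_of_continuous_cdf (μ : Measure ℝ) [IsProbabilityMeasure μ]
    (G : ℝ → ℝ) (hG : ∀ t, G t = (μ (Iic t)).toReal) (hGcont : Continuous G)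
    (t : ℝ) : μ {t} = 0 := by
  have hbound : ∀ s < t, (μ {t}).toReal ≤ G t - G s := by
    intro s hs
    have hsub : Iic s ⊆ Iic t := Iic_subset_Iic.mpr hs.le
    have hIoc : μ (Ioc s t) = μ (Iic t) - μ (Iic s) := by
      rw [← Iic_sdiff_Iic, measure_diff hsub measurableSet_Iic.nullMeasurableSet (measure_ne_top μ _)]
    have h1 : (μ {t}).toReal ≤ (μ (Ioc s t)).toReal := by
      apply ENNReal.toReal_mono (measure_ne_top μ _)
      exact measure_mono (fun x hx => by simp at hx; simp [hx, hs])
    refine h1.trans ?_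
    rw [hIoc, ENNReal.toReal_sub_of_le (measure_mono hsub) (measure_ne_top μ _), hG, hG]
  have htend : Filter.Tendsto (fun s => G t - G s) (nhdsWithin t (Iio t)) (nhds 0) := by
    have : Filter.Tendsto G (nhdsWithin t (Iio t)) (nhds (G t)) :=
      (hGcont.tendsto t).mono_left nhdsWithin_le_nhds
    have h2 := (tendsto_const_nhds (x := G t)).sub this
    simpa using h2
  have hle : (μ {t}).toReal ≤ 0 := by
    refine ge_of_tendsto htend ?_
    filter_upwards [self_mem_nhdsWithin] with s hs
    exact hbound s hs
  have : (μ {t}).toReal = 0 := le_antisymm hle ENNReal.toReal_nonneg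
  rwa [ENNReal.toReal_eq_zero_iff, or_iff_left (measure_ne_top μ _)] at this


lemma card_rank_ge {n k : ℕ} (hk1 : 1 ≤ k) (hkn : k ≤ n)
    (x : Fin (n+1) → ℝ) (hx : Function.Injective x) :
    (Finset.univ.filter fun j =>
      k ≤ (Finset.univ.filter fun i : Fin (n+1) => i ≠ j ∧ x i ≤ x j).card).card = n + 1 - k := by
  set rank : Fin (n+1) → ℕ := fun j => (Finset.univ.filter fun i => x i ≤ x j).card with hrank
  have hrank_pos : ∀ j, 1 ≤ rank j := fun j =>
    Finset.card_pos.mpr ⟨j, Finset.mem_filter.mpr ⟨Finset.mem_univ j, le_refl _⟩⟩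
  have hrank_le : ∀ j, rank j ≤ n + 1 := fun j =>
    le_trans (Finset.card_le_card (Finset.filter_subset _ _)) (by simp)
  -- condition rewrite
  have hcond : ∀ j, (k ≤ (Finset.univ.filter fun i : Fin (n+1) => i ≠ j ∧ x i ≤ x j).card)
      ↔ k + 1 ≤ rank j := by
    intro j
    have he : (Finset.univ.filter fun i : Fin (n+1) => i ≠ j ∧ x i ≤ x j)
        = (Finset.univ.filter fun i => x i ≤ x j).erase j := by
      ext i; simp [Finset.mem_erase, and_comm]
    rw [he, Finset.card_erase_of_mem (Finset.mem_filter.mpr ⟨Finset.mem_univ j, le_refl (x j)⟩)]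
    have h1 := hrank_pos j
    simp only [hrank] at h1 ⊢
    omega
  -- rank is injective
  have hmono : ∀ {i j}, x i < x j → rank i < rank j := by
    intro i j hij
    apply Finset.card_lt_card
    constructor
    · intro a ha
      simp only [Finset.mem_filter, Finset.mem_univ, true_and] at ha ⊢
      exact ha.trans hij.le
    · intro hsub
      have : j ∈ (Finset.univ.filter fun i' => x i' ≤ x i) :=
        hsub (Finset.mem_filter.mpr ⟨Finset.mem_univ j, le_refl _⟩)
      simp only [Finset.mem_filter] at this
      exact absurd this.2 (not_le.mpr hij)
  have hinj : Function.Injective rank := by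
    intro i j hij
    by_contra hne
    rcases lt_or_gt_of_ne (fun h : x i = x j => hne (hx h)) with h | h
    · exact absurd hij (Nat.ne_of_lt (hmono h))
    · exact absurd hij.symm (Nat.ne_of_lt (hmono h))
  -- image of rank is Icc 1 (n+1)
  have himage : Finset.univ.image rank = Finset.Icc 1 (n + 1) := by
    apply Finset.eq_of_subset_of_card_le
    · intro m hm
      simp only [Finset.mem_image] at hm
      obtain ⟨j, _, hj⟩ := hm
      simp only [Finset.mem_Icc]
      exact hj ▸ ⟨hrank_pos j, hrank_le j⟩
    · rw [Finset.card_image_of_injective _ hinj]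
      simp [Nat.card_Icc]
  -- convert
  calc (Finset.univ.filter fun j =>
        k ≤ (Finset.univ.filter fun i : Fin (n+1) => i ≠ j ∧ x i ≤ x j).card).card
      = (Finset.univ.filter fun j => k + 1 ≤ rank j).card := by
        congr 1; apply Finset.filter_congr; intro j _; simp [hcond j]
    _ = ((Finset.univ.filter fun j => k + 1 ≤ rank j).image rank).card :=
        (Finset.card_image_of_injective _ hinj).symm
    _ = ((Finset.univ.image rank).filter fun m => k + 1 ≤ m).card := by
        congr 1
        rw [Finset.filter_image]
    _ = ((Finset.Icc 1 (n+1)).filter fun m => k + 1 ≤ m).card := by rw [himage]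
    _ = (Finset.Icc (k+1) (n+1)).card := by
        congr 1; ext m; simp only [Finset.mem_filter, Finset.mem_Icc]; omega
    _ = n + 1 - k := by simp [Nat.card_Icc]


lemma card_filter_equiv_comp {ι ι' : Type*} [Fintype ι] [Fintype ι'] (e : ι ≃ ι')
    (p : ι' → Prop) [DecidablePred p] :
    (Finset.univ.filter fun i => p (e i)).card = (Finset.univ.filter p).card := by
  refine Finset.card_nbij e (fun a ha => ?_) (fun a _ b _ hab => e.injective hab) ?_
  · exact Finset.mem_filter.mpr ⟨Finset.mem_univ _, (Finset.mem_filter.mp ha).2⟩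
  · intro b hb
    have hpb : p b := by simpa using hb
    exact ⟨e.symm b, by simpa using hpb, by simp⟩

/-- **α-expectation property of the depth tolerance region.**
Let `Y, Y₁, …, Yₙ` be i.i.d. with law `P` on `𝒴`, `D : 𝒴 → ℝ` measurable with
continuous CDF `G t = P(D(Y) ≤ t)`, and `1 ≤ r ≤ n`.  With `D^(r)` the `r`-th
largest among `D(Y₁), …, D(Yₙ)` and `T̂ʳ = {y : D y ≥ D^(r)}`, the expected
conditional coverage satisfies `E[P(Y ∈ T̂ʳ ∣ Y₁, …, Yₙ)] = r / (n + 1)`; in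
particular, if `r = (n+1)α`, then `T̂ʳ` is an `α`-expectation tolerance region. -/
theorem depth_tolerance_expectation
    {Ω : Type*} [MeasureSpace Ω] [IsProbabilityMeasure (ℙ : Measure Ω)]
    {𝒴 : Type*} [MeasurableSpace 𝒴] (P : Measure 𝒴) [IsProbabilityMeasure P]
    {n : ℕ} (Y : Ω → 𝒴) (Ys : Fin n → Ω → 𝒴)
    (hYmeas : Measurable Y) (hmeas : ∀ i, Measurable (Ys i))
    (hindep : iIndepFun
      (Fin.snoc (fun i : Fin n => Ys i) Y : Fin (n + 1) → Ω → 𝒴) ℙ)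
    (hYlaw : Measure.map Y ℙ = P) (hlaw : ∀ i, Measure.map (Ys i) ℙ = P)
    (D : 𝒴 → ℝ) (hD : Measurable D)
    (G : ℝ → ℝ) (hG : ∀ t, G t = (P {y | D y ≤ t}).toReal)
    (hGcont : Continuous G)
    (r : ℕ) (hr : 1 ≤ r) (hrn : r ≤ n)
    -- `Dr ω` is the `r`-th largest value among `D (Ys 0 ω), …, D (Ys (n-1) ω)`
    (Dr : Ω → ℝ) (hDr : ∀ ω, Dr ω = orderStat (fun i => D (Ys i ω)) (n + 1 - r)) :
    ∫ ω, (P {y | D y ≥ Dr ω}).toReal ∂(ℙ : Measure Ω) = r / (n + 1) := by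
  classical
  set k : ℕ := n + 1 - r with hk
  have hk1 : 1 ≤ k := by omega
  have hkn : k ≤ n := by omega
  set μ : Measure ℝ := P.map D with hμ
  haveI : IsProbabilityMeasure μ := Measure.isProbabilityMeasure_map hD.aemeasurable
  -- the common law on ℝ is atomless
  have hGμ : ∀ t, G t = (μ (Iic t)).toReal := by
    intro t
    rw [hG t, hμ, Measure.map_apply hD measurableSet_Iic]
    rfl
  have hatom : ∀ t : ℝ, μ {t} = 0 := atomless_of_continuous_cdf μ G hGμ hGcont
  -- the n+1 real random variables
  set W : Fin (n + 1) → Ω → 𝒴 := (Fin.snoc (fun i : Fin n => Ys i) Y) with hW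
  have hWmeas : ∀ i, Measurable (W i) := by
    intro i
    induction i using Fin.lastCases with
    | last => rw [hW]; simp only [Fin.snoc_last]; exact hYmeas
    | cast j => rw [hW]; simp only [Fin.snoc_castSucc]; exact hmeas j
  have hWlaw : ∀ i, Measure.map (W i) ℙ = P := by
    intro i
    induction i using Fin.lastCases with
    | last => rw [hW]; simp only [Fin.snoc_last]; exact hYlaw
    | cast j => rw [hW]; simp only [Fin.snoc_castSucc]; exact hlaw j
  set X : Fin (n + 1) → Ω → ℝ := fun i => D ∘ W i with hX
  have hXmeas : ∀ i, Measurable (X i) := fun i => hD.comp (hWmeas i)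
  have hXindep : iIndepFun X ℙ :=
    hindep.comp (fun _ => D) (fun _ => hD)
  have hXlaw : ∀ i, Measure.map (X i) ℙ = μ := by
    intro i
    rw [hX, hμ, ← hWlaw i]
    exact (Measure.map_map hD (hWmeas i)).symm
  -- the joint law
  set ν : Measure (Fin (n + 1) → ℝ) := Measure.pi (fun _ => μ) with hν
  haveI : IsProbabilityMeasure ν := by rw [hν]; infer_instance
  have hjoint : Measure.map (fun ω i => X i ω) ℙ = ν :=
    map_fun_eq_pi X hXmeas hXindep (fun _ => μ) hXlaw
  -- the events B j
  set B : Fin (n + 1) → Set (Fin (n + 1) → ℝ) := fun j =>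
    {x | k ≤ (Finset.univ.filter fun i : Fin (n + 1) => i ≠ j ∧ x i ≤ x j).card} with hB
  have hBmeas : ∀ j, MeasurableSet (B j) := by
    intro j
    have hBj : B j = {x : Fin (n + 1) → ℝ |
        k ≤ (Finset.univ.filter fun i : Fin (n + 1) => i ≠ j ∧ x i ≤ x j).card} := rfl
    rw [hBj]
    refine measurableSet_card_le (ι := Fin (n + 1)) (α := Fin (n + 1) → ℝ)
      (fun i x => i ≠ j ∧ x i ≤ x j) (fun i => ?_) k
    by_cases h : i = j
    · simp [h]
    · have : {x : Fin (n + 1) → ℝ | i ≠ j ∧ x i ≤ x j} = {x | x i ≤ x j} := by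
        ext x; simp [h]
      rw [this]
      exact measurableSet_le (measurable_pi_apply i) (measurable_pi_apply j)
  -- permutation invariance: all ν (B j) are equal
  have hperm : ∀ j, ν (B j) = ν (B (Fin.last n)) := by
    intro j
    set σ : Equiv.Perm (Fin (n + 1)) := Equiv.swap j (Fin.last n) with hσ
    have hmp : MeasurePreserving
        (MeasurableEquiv.piCongrLeft (fun _ => ℝ) σ).symm ν ν := by
      have := (measurePreserving_piCongrLeft (fun _ : Fin (n+1) => μ) σ)
      exact (MeasurePreserving.symm _ this)
    have hpre : (MeasurableEquiv.piCongrLeft (fun _ => ℝ) σ).symm ⁻¹' (B j) = B (σ j) := by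
      ext x
      have hxs : ((MeasurableEquiv.piCongrLeft (fun _ => ℝ) σ).symm x) = fun a => x (σ a) := by
        funext a
        rfl
      simp only [Set.mem_preimage, hxs, hB, Set.mem_setOf_eq]
      have := card_filter_equiv_comp σ (fun i' => i' ≠ σ j ∧ x i' ≤ x (σ j))
      rw [← this]
      constructor <;> intro h <;> refine le_trans h (le_of_eq ?_) <;>
        · congr 1; apply Finset.filter_congr; intro i _
          simp [σ.injective.ne_iff]
    have h1 : ν (B j) = ν (B (σ j)) := by
      rw [← hpre, hmp.measure_preimage (hBmeas j).nullMeasurableSet]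
    rw [h1, hσ]
    simp [Equiv.swap_apply_left]
  -- a.e. injectivity
  have hae : ∀ᵐ x ∂ν, Function.Injective x := by
    rw [Filter.eventually_iff, mem_ae_iff]
    have hsub : {x : Fin (n+1) → ℝ | Function.Injective x}ᶜ ⊆
        ⋃ (i) (j) (_ : i ≠ j), {x : Fin (n+1) → ℝ | x i = x j} := by
      intro x hx
      simp only [Set.mem_compl_iff, Set.mem_setOf_eq, Function.Injective] at hx
      push_neg at hx
      obtain ⟨i, j, hij, hne⟩ := hx
      exact Set.mem_iUnion.mpr ⟨i, Set.mem_iUnion.mpr ⟨j, Set.mem_iUnion.mpr ⟨hne, hij⟩⟩⟩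
    refine measure_mono_null hsub ?_
    refine measure_iUnion_null fun i => measure_iUnion_null fun j => measure_iUnion_null fun hij => ?_
    -- transfer to Ω and use pairwise independence
    have hdiag : MeasurableSet {p : ℝ × ℝ | p.1 = p.2} :=
      measurableSet_eq_fun measurable_fst measurable_snd
    have hmapij : Measure.map (fun ω => (X i ω, X j ω)) ℙ = μ.prod μ := by
      have := (indepFun_iff_map_prod_eq_prod_map_map (hXmeas i).aemeasurable
        (hXmeas j).aemeasurable).mp (hXindep.indepFun hij)
      rw [this, hXlaw i, hXlaw j]
    have hset : ν {x : Fin (n+1) → ℝ | x i = x j} = ℙ {ω | X i ω = X j ω} := by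
      rw [← hjoint, Measure.map_apply (measurable_pi_lambda _ hXmeas)
        (measurableSet_eq_fun (measurable_pi_apply i) (measurable_pi_apply j))]
      rfl
    have hΩ : ℙ {ω | X i ω = X j ω} = (μ.prod μ) {p : ℝ × ℝ | p.1 = p.2} := by
      rw [← hmapij, Measure.map_apply ((hXmeas i).prodMk (hXmeas j)) hdiag]
      rfl
    have hzero : (μ.prod μ) {p : ℝ × ℝ | p.1 = p.2} = 0 := by
      rw [Measure.prod_apply hdiag]
      have : ∀ a : ℝ, μ (Prod.mk a ⁻¹' {p : ℝ × ℝ | p.1 = p.2}) = 0 := by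
        intro a
        have : Prod.mk a ⁻¹' {p : ℝ × ℝ | p.1 = p.2} = {a} := by
          ext b; simp [eq_comm]
        rw [this]; exact hatom a
      rw [lintegral_congr this, lintegral_zero]
    rw [hset, hΩ, hzero]
  -- sum of the measures of the B j equals r
  have hsum : ∑ j : Fin (n + 1), ν (B j) = (r : ℝ≥0∞) := by
    have h1 : ∀ j, ν (B j) = ∫⁻ x, (B j).indicator (fun _ => (1 : ℝ≥0∞)) x ∂ν :=
      fun j => (lintegral_indicator_one (hBmeas j)).symm
    calc ∑ j : Fin (n + 1), ν (B j)
        = ∑ j : Fin (n + 1), ∫⁻ x, (B j).indicator (fun _ => (1 : ℝ≥0∞)) x ∂ν := by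
          exact Finset.sum_congr rfl fun j _ => h1 j
      _ = ∫⁻ x, ∑ j : Fin (n + 1), (B j).indicator (fun _ => (1 : ℝ≥0∞)) x ∂ν :=
          (lintegral_finset_sum _ fun j _ => (measurable_one.indicator (hBmeas j))).symm
      _ = ∫⁻ _, (r : ℝ≥0∞) ∂ν := by
          refine lintegral_congr_ae ?_
          filter_upwards [hae] with x hx
          have hcount : ∀ j, (B j).indicator (fun _ => (1 : ℝ≥0∞)) x
              = if k ≤ (Finset.univ.filter fun i : Fin (n + 1) => i ≠ j ∧ x i ≤ x j).card
                then 1 else 0 := by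
            intro j
            rw [Set.indicator_apply]
            congr 1
          simp only [hcount]
          rw [Finset.sum_boole]
          rw [card_rank_ge hk1 hkn x hx]
          congr 1
          omega
      _ = (r : ℝ≥0∞) := by simp
  have hBlast : ν (B (Fin.last n)) = (r : ℝ≥0∞) / (n + 1 : ℝ≥0∞) := by
    have h2 : ∑ j : Fin (n + 1), ν (B j) = (n + 1 : ℕ) * ν (B (Fin.last n)) := by
      rw [Finset.sum_congr rfl fun j _ => hperm j]
      simp [Finset.card_univ, nsmul_eq_mul]
    rw [h2] at hsum
    have hne : ((n : ℝ≥0∞) + 1) ≠ 0 :=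
      ne_of_gt (lt_of_lt_of_le one_pos le_add_self)
    rw [ENNReal.eq_div_iff hne (by simp)]
    rw [← hsum]
    congr 1
    push_cast
    ring
  -- identify the target integral with ν (B last)
  have hZmeas : Measurable (fun ω (i : Fin n) => D (Ys i ω)) :=
    measurable_pi_lambda _ fun i => hD.comp (hmeas i)
  have hg : Measurable (fun z : Fin n → ℝ => μ (Ici (orderStat z k))) := by
    have hanti : Antitone (fun c : ℝ => μ (Ici c)) :=
      fun a b hab => measure_mono (Ici_subset_Ici.mpr hab)
    exact hanti.measurable.comp (measurable_orderStat hk1 hkn)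
  have hDrmeas : Measurable Dr := by
    have : Dr = (fun v => orderStat v k) ∘ (fun ω (i : Fin n) => D (Ys i ω)) := funext hDr
    rw [this]
    exact (measurable_orderStat hk1 hkn).comp hZmeas
  have hPset : ∀ c : ℝ, P {y | D y ≥ c} = μ (Ici c) := by
    intro c
    rw [hμ, Measure.map_apply hD measurableSet_Ici]
    rfl
  -- marginal law of the first n coordinates
  set νn : Measure (Fin n → ℝ) := Measure.pi (fun _ => μ) with hνn
  haveI : IsProbabilityMeasure νn := by rw [hνn]; infer_instance
  have hZlaw : Measure.map (fun ω (i : Fin n) => D (Ys i ω)) ℙ = νn := by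
    have hproj : Measurable (fun x : Fin (n+1) → ℝ => fun i : Fin n => x i.castSucc) :=
      measurable_pi_lambda _ fun i => measurable_pi_apply _
    have hcomp : (fun ω (i : Fin n) => D (Ys i ω))
        = (fun x : Fin (n+1) → ℝ => fun i : Fin n => x i.castSucc) ∘ (fun ω i => X i ω) := by
      funext ω
      funext i
      simp only [hX, hW, Function.comp_apply, Fin.snoc_castSucc]
    rw [hcomp, ← Measure.map_map hproj (measurable_pi_lambda _ hXmeas), hjoint]
    -- now: map proj ν = νn
    have he := measurePreserving_piFinSuccAbove (fun _ : Fin (n+1) => μ) (Fin.last n)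
    have hsnd : (fun x : Fin (n+1) → ℝ => fun i : Fin n => x i.castSucc)
        = (fun p : ℝ × (Fin n → ℝ) => p.2) ∘ (MeasurableEquiv.piFinSuccAbove (fun _ => ℝ) (Fin.last n)) := by
      funext x
      funext i
      simp [MeasurableEquiv.piFinSuccAbove, Fin.succAbove_last, Fin.init]
    rw [hsnd, ← Measure.map_map measurable_snd (MeasurableEquiv.measurable _), he.map_eq,
      Measure.map_snd_prod, measure_univ, one_smul]
  -- the product set
  set E : Set ((Fin n → ℝ) × ℝ) := {p | orderStat p.1 k ≤ p.2} with hE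
  have hEmeas : MeasurableSet E :=
    measurableSet_le ((measurable_orderStat hk1 hkn).comp measurable_fst) measurable_snd
  have hprodE : (νn.prod μ) E = ∫⁻ z, μ (Ici (orderStat z k)) ∂νn := by
    rw [Measure.prod_apply hEmeas]
    exact lintegral_congr fun z => rfl
  -- measure-preserving map φ from ν to νn.prod μ
  set φ : (Fin (n+1) → ℝ) → (Fin n → ℝ) × ℝ :=
    fun x => (fun i : Fin n => x i.castSucc, x (Fin.last n)) with hφdef
  have hφ : MeasurePreserving φ ν (νn.prod μ) := by
    have he := measurePreserving_piFinSuccAbove (fun _ : Fin (n+1) => μ) (Fin.last n)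
    have hswap : MeasurePreserving (Prod.swap : ℝ × (Fin n → ℝ) → (Fin n → ℝ) × ℝ)
        (μ.prod νn) (νn.prod μ) := Measure.measurePreserving_swap
    have hcomp := hswap.comp he
    have : φ = Prod.swap ∘ (MeasurableEquiv.piFinSuccAbove (fun _ => ℝ) (Fin.last n)) := by
      funext x
      simp only [hφdef, Function.comp_apply, MeasurableEquiv.piFinSuccAbove,
        MeasurableEquiv.coe_mk, Equiv.coe_fn_mk, Fin.insertNthEquiv, Equiv.coe_fn_symm_mk,
        Prod.swap_prod_mk]
      refine Prod.ext ?_ rfl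
      funext i
      simp [Fin.removeNth, Fin.succAbove_last]
    rw [this]
    exact hcomp
  have hφpre : φ ⁻¹' E = B (Fin.last n) := by
    ext x
    simp only [Set.mem_preimage, hφdef, hE, Set.mem_setOf_eq, hB]
    rw [orderStat_le_iff _ hk1 hkn]
    constructor <;> intro h <;> refine le_trans h (le_of_eq ?_)
    · refine Finset.card_nbij (fun i => i.castSucc) ?_ ?_ ?_
      · intro a ha
        have h2 := (Finset.mem_filter.mp ha).2
        exact Finset.mem_filter.mpr ⟨Finset.mem_univ _,
          ⟨Fin.ne_last_of_lt (Fin.castSucc_lt_last a), h2⟩⟩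
      · exact fun a _ b _ hab => Fin.castSucc_injective n hab
      · intro b hb
        have hb' : b ≠ Fin.last n ∧ x b ≤ x (Fin.last n) := by simpa using hb
        obtain ⟨j, rfl⟩ := Fin.exists_castSucc_eq.mpr hb'.1
        exact Set.mem_image_of_mem _ (by simpa using hb'.2)
    · refine (Finset.card_nbij (fun i : Fin n => i.castSucc) ?_ ?_ ?_).symm
      · intro a ha
        have h2 := (Finset.mem_filter.mp ha).2
        exact Finset.mem_filter.mpr ⟨Finset.mem_univ _,
          ⟨Fin.ne_last_of_lt (Fin.castSucc_lt_last a), h2⟩⟩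
      · exact fun a _ b _ hab => Fin.castSucc_injective n hab
      · intro b hb
        have hb' : b ≠ Fin.last n ∧ x b ≤ x (Fin.last n) := by simpa using hb
        obtain ⟨j, rfl⟩ := Fin.exists_castSucc_eq.mpr hb'.1
        exact Set.mem_image_of_mem _ (by simpa using hb'.2)
  -- put it all together
  have hlin : ∫⁻ ω, μ (Ici (Dr ω)) ∂ℙ = ν (B (Fin.last n)) := by
    calc ∫⁻ ω, μ (Ici (Dr ω)) ∂ℙ
        = ∫⁻ ω, μ (Ici (orderStat (fun i => D (Ys i ω)) k)) ∂ℙ := by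
          refine lintegral_congr fun ω => ?_
          rw [hDr ω]
      _ = ∫⁻ z, μ (Ici (orderStat z k)) ∂νn := by
          rw [← hZlaw, lintegral_map hg hZmeas]
      _ = (νn.prod μ) E := hprodE.symm
      _ = ν (φ ⁻¹' E) := (hφ.measure_preimage hEmeas.nullMeasurableSet).symm
      _ = ν (B (Fin.last n)) := by rw [hφpre]
  calc ∫ ω, (P {y | D y ≥ Dr ω}).toReal ∂ℙ
      = ∫ ω, (μ (Ici (Dr ω))).toReal ∂ℙ := by
        refine integral_congr_ae (Filter.Eventually.of_forall fun ω => ?_)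
        show (P {y | D y ≥ Dr ω}).toReal = (μ (Ici (Dr ω))).toReal
        rw [hPset (Dr ω)]
    _ = (∫⁻ ω, μ (Ici (Dr ω)) ∂ℙ).toReal := by
        refine integral_toReal ?_ ?_
        · exact (hg.comp hZmeas).aemeasurable.congr (Filter.Eventually.of_forall fun ω => by
            simp only [Function.comp]
            rw [hDr ω])
        · exact Filter.Eventually.of_forall fun ω => measure_lt_top μ _
    _ = ((r : ℝ≥0∞) / (n + 1 : ℝ≥0∞)).toReal := by rw [hlin, hBlast]
    _ = r / (n + 1) := by
        rw [ENNReal.toReal_div, ENNReal.toReal_add (by simp) (by simp)]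
        simp
end

section
/- (Perturbed empirical quantile consistency.) Let R_1, R_2, ... be i.i.d. real-valued random variables with common CDF G, fix β ∈ (0,1), set q = inf{t ∈ ℝ : G(t) ≥ β}, and assume G(q − ε) < β < G(q + ε) for every ε > 0. For each n, let R_{n,1}, ..., R_{n,n} be random variables (on the same probability space) with max_{1 ≤ i ≤ n} |R_{n,i} − R_i| → 0 in probability, and let q̂_n be the empirical β-quantile of R_{n,1}, ..., R_{n,n}. Then q̂_n → q in probability as n → ∞. -/
open MeasureTheory ProbabilityTheory Filter Topology

/-- The empirical `β`-quantile of `v : Fin n → ℝ`: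
`inf {t : (1/n) · #{i : v i ≤ t} ≥ β}`. -/
noncomputable def empQuantile {n : ℕ} (v : Fin n → ℝ) (β : ℝ) : ℝ :=
  sInf {t : ℝ | β ≤ ((Finset.univ.filter fun i => v i ≤ t).card : ℝ) / n}

/-- **Perturbed empirical quantile consistency.**
Let `R 0, R 1, …` be i.i.d. real random variables with common CDF `G`, `β ∈ (0,1)`,
`q = inf {t : G t ≥ β}`, with `G (q − ε) < β < G (q + ε)` for all `ε > 0`.  If for
each `n` the random variables `R' n 0, …, R' n (n-1)` satisfy
`max_{i ≤ n} |R' n i − R i| → 0` in probability, then the empirical `β`-quantile of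
`R' n 0, …, R' n (n-1)` converges to `q` in probability. -/
theorem perturbed_empirical_quantile_consistency
    {Ω : Type*} [MeasureSpace Ω] [IsProbabilityMeasure (ℙ : Measure Ω)]
    (R : ℕ → Ω → ℝ)
    (hmeas : ∀ i, Measurable (R i))
    (hindep : iIndepFun R ℙ)
    (hident : ∀ i, Measure.map (R i) ℙ = Measure.map (R 0) ℙ)
    (G : ℝ → ℝ) (hG : ∀ t, G t = (ℙ {ω | R 0 ω ≤ t}).toReal)
    (β : ℝ) (hβ : β ∈ Set.Ioo (0 : ℝ) 1)
    (q : ℝ) (hq : q = sInf {t : ℝ | β ≤ G t})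
    (huniq : ∀ ε > 0, G (q - ε) < β ∧ β < G (q + ε))
    (R' : (n : ℕ) → Fin n → Ω → ℝ)
    (hR'meas : ∀ n i, Measurable (R' n i))
    -- `max_{1 ≤ i ≤ n} |R' n i − R i| → 0` in probability
    (hpert : ∀ ε > 0,
      Tendsto (fun n => ℙ {ω | ∃ i : Fin n, ε ≤ |R' n i ω - R i ω|}) atTop (𝓝 0)) :
    ∀ ε > 0,
      Tendsto (fun n => ℙ {ω | ε ≤ |empQuantile (fun i : Fin n => R' n i ω) β - q|})
        atTop (𝓝 0) := by
  obtain ⟨hβ0, hβ1⟩ := hβ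
  -- Convergence in probability of the empirical CDF of the `R i` at any fixed point `t`.
  have key : ∀ t : ℝ, ∀ δ > (0:ℝ), Tendsto (fun n => ℙ {ω |
      δ ≤ |((Finset.univ.filter fun i : Fin n => R i ω ≤ t).card : ℝ) / n - G t|})
      atTop (𝓝 0) := by
    intro t δ hδ
    set φ : ℝ → ℝ := fun x => if x ≤ t then 1 else 0 with hφ
    have hφmeas : Measurable φ := by
      apply Measurable.ite (measurableSet_le measurable_id measurable_const) <;>
        exact measurable_const
    set Y : ℕ → Ω → ℝ := fun i => φ ∘ R i with hY
    have hYmeas : ∀ i, Measurable (Y i) := fun i => hφmeas.comp (hmeas i)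
    have hident' : ∀ i, IdentDistrib (Y i) (Y 0) ℙ ℙ := by
      intro i
      have h0 : IdentDistrib (R i) (R 0) ℙ ℙ :=
        ⟨(hmeas i).aemeasurable, (hmeas 0).aemeasurable, hident i⟩
      exact h0.comp hφmeas
    have hindep' : Pairwise (Function.onFun (IndepFun · · ℙ) Y) := fun i j hij =>
      (hindep.indepFun hij).comp hφmeas hφmeas
    have hint : Integrable (Y 0) ℙ := by
      refine (integrable_const (1:ℝ)).mono' (hYmeas 0).aestronglyMeasurable ?_
      filter_upwards with ω
      simp only [hY, hφ, Function.comp_apply]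
      split <;> simp
    have hEY : (∫ ω, Y 0 ω) = G t := by
      have hset : MeasurableSet {ω | R 0 ω ≤ t} :=
        measurableSet_le (hmeas 0) measurable_const
      have : (fun ω => Y 0 ω) = Set.indicator {ω | R 0 ω ≤ t} (fun _ => (1:ℝ)) := by
        ext ω
        simp only [hY, hφ, Function.comp_apply, Set.indicator_apply, Set.mem_setOf_eq]
      rw [this, integral_indicator_const (1:ℝ) hset, hG t, smul_eq_mul, mul_one, measureReal_def]
    have hslln := strong_law_ae_real Y hint hindep' hident'
    rw [hEY] at hslln
    have hcard : ∀ (n : ℕ) (ω : Ω),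
        ((Finset.univ.filter fun i : Fin n => R i ω ≤ t).card : ℝ)
          = ∑ i ∈ Finset.range n, Y i ω := by
      intro n ω
      rw [Finset.card_filter]
      push_cast
      rw [← Fin.sum_univ_eq_sum_range (fun i => Y i ω) n]
      refine Finset.sum_congr rfl fun i _ => ?_
      simp [hY, hφ]
    have hfmeas : ∀ n : ℕ, AEStronglyMeasurable
        (fun ω => (∑ i ∈ Finset.range n, Y i ω) / (n:ℝ)) ℙ := by
      intro n
      exact ((Finset.measurable_sum _ (fun i _ => hYmeas i)).div_const _).aestronglyMeasurable
    have htim := tendstoInMeasure_of_tendsto_ae (μ := ℙ)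
      (f := fun n ω => (∑ i ∈ Finset.range n, Y i ω) / (n:ℝ))
      (g := fun _ => G t) hfmeas hslln (ENNReal.ofReal δ) (ENNReal.ofReal_pos.mpr hδ)
    refine htim.congr fun n => ?_
    congr 1
    ext ω
    simp [Real.dist_eq, hcard n ω, edist_dist, ENNReal.ofReal_le_ofReal_iff, abs_nonneg]
  intro ε hε
  obtain ⟨hlo, hhi⟩ := huniq (ε/4) (by positivity)
  have hdp : (0:ℝ) < G (q + ε/4) - β := by linarith
  have hdm : (0:ℝ) < β - G (q - ε/4) := by linarith
  have H1 := key (q + ε/4) _ hdp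
  have H2 := key (q - ε/4) _ hdm
  have H3 := hpert (ε/8) (by positivity)
  set A : ℕ → Set Ω := fun n => {ω | G (q + ε/4) - β ≤
    |((Finset.univ.filter fun i : Fin n => R i ω ≤ q + ε/4).card : ℝ) / n - G (q + ε/4)|}
    with hA
  set B : ℕ → Set Ω := fun n => {ω | β - G (q - ε/4) ≤
    |((Finset.univ.filter fun i : Fin n => R i ω ≤ q - ε/4).card : ℝ) / n - G (q - ε/4)|}
    with hB
  set C : ℕ → Set Ω := fun n => {ω | ∃ i : Fin n, ε/8 ≤ |R' n i ω - R i ω|} with hC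
  have hsub : ∀ n : ℕ,
      {ω | ε ≤ |empQuantile (fun i : Fin n => R' n i ω) β - q|} ⊆ A n ∪ B n ∪ C n := by
    intro n ω hω
    by_contra hcon
    simp only [Set.mem_union, not_or] at hcon
    obtain ⟨⟨hA', hB'⟩, hC'⟩ := hcon
    simp only [hA, hB, hC, Set.mem_setOf_eq, not_le, not_exists] at hA' hB' hC'
    -- empirical CDF of R at q+ε/4 exceeds β, and at q-ε/4 is below β
    have h1 : β < ((Finset.univ.filter fun i : Fin n => R i ω ≤ q + ε/4).card : ℝ) / n := by
      rcases abs_lt.mp hA' with ⟨hl, _⟩; linarith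
    have h2 : ((Finset.univ.filter fun i : Fin n => R i ω ≤ q - ε/4).card : ℝ) / n < β := by
      rcases abs_lt.mp hB' with ⟨_, hr⟩; linarith
    have hn : 0 < n := by
      rcases Nat.eq_zero_or_pos n with h0 | h0
      · subst h0; simp at h1; linarith
      · exact h0
    have hnR : (0:ℝ) < n := by exact_mod_cast hn
    set S : Set ℝ := {s : ℝ | β ≤
      ((Finset.univ.filter fun i : Fin n => R' n i ω ≤ s).card : ℝ) / n} with hS
    -- q + ε/2 ∈ S
    have hup : q + ε/2 ∈ S := by
      have hsub' : (Finset.univ.filter fun i : Fin n => R i ω ≤ q + ε/4)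
          ⊆ (Finset.univ.filter fun i : Fin n => R' n i ω ≤ q + ε/2) := by
        intro i hi
        simp only [Finset.mem_filter, Finset.mem_univ, true_and] at hi ⊢
        have := abs_lt.mp (hC' i)
        linarith [this.1, this.2]
      have hcardle := Finset.card_le_card hsub'
      have : ((Finset.univ.filter fun i : Fin n => R i ω ≤ q + ε/4).card : ℝ) / n
          ≤ ((Finset.univ.filter fun i : Fin n => R' n i ω ≤ q + ε/2).card : ℝ) / n := by
        gcongr
      exact le_of_lt (lt_of_lt_of_le h1 this)
    -- every element of S is at least q - ε/2
    have hlb : ∀ s ∈ S, q - ε/2 ≤ s := by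
      intro s hs
      by_contra hlt
      push_neg at hlt
      have hsub' : (Finset.univ.filter fun i : Fin n => R' n i ω ≤ s)
          ⊆ (Finset.univ.filter fun i : Fin n => R i ω ≤ q - ε/4) := by
        intro i hi
        simp only [Finset.mem_filter, Finset.mem_univ, true_and] at hi ⊢
        have := abs_lt.mp (hC' i)
        linarith [this.1, this.2]
      have hcardle := Finset.card_le_card hsub'
      have hle : ((Finset.univ.filter fun i : Fin n => R' n i ω ≤ s).card : ℝ) / n
          ≤ ((Finset.univ.filter fun i : Fin n => R i ω ≤ q - ε/4).card : ℝ) / n := by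
        gcongr
      have := hs
      simp only [hS, Set.mem_setOf_eq] at this
      linarith
    have hbdd : BddBelow S := ⟨q - ε/2, hlb⟩
    have hne : S.Nonempty := ⟨q + ε/2, hup⟩
    have hle1 : sInf S ≤ q + ε/2 := csInf_le hbdd hup
    have hle2 : q - ε/2 ≤ sInf S := le_csInf hne hlb
    have habs : |empQuantile (fun i : Fin n => R' n i ω) β - q| ≤ ε/2 := by
      rw [empQuantile]
      rw [abs_le]
      constructor <;> [linarith [hle2]; linarith [hle1]]
    simp only [Set.mem_setOf_eq] at hω
    linarith
  have hbound : ∀ n, ℙ {ω | ε ≤ |empQuantile (fun i : Fin n => R' n i ω) β - q|}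
      ≤ ℙ (A n) + ℙ (B n) + ℙ (C n) := by
    intro n
    calc ℙ {ω | ε ≤ |empQuantile (fun i : Fin n => R' n i ω) β - q|}
        ≤ ℙ (A n ∪ B n ∪ C n) := measure_mono (hsub n)
      _ ≤ ℙ (A n ∪ B n) + ℙ (C n) := measure_union_le _ _
      _ ≤ ℙ (A n) + ℙ (B n) + ℙ (C n) := add_le_add_left (measure_union_le _ _) _
  have hsum : Tendsto (fun n => ℙ (A n) + ℙ (B n) + ℙ (C n)) atTop (𝓝 0) := by
    have h := (H1.add H2).add H3
    simp only [add_zero] at h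
    exact h
  exact tendsto_of_tendsto_of_tendsto_of_le_of_le tendsto_const_nhds hsum
    (fun n => zero_le) hbound
end

section
/- (Conditional probability integral transform.) Let X : Ω → 𝒳 and S : Ω → ℝ be random variables on a probability space, where 𝒳 is a standard Borel space, and let κ be a regular conditional distribution of S given X. Suppose that for P∘X^{-1}-almost every x ∈ 𝒳, the CDF G_x(t) = κ(x)((−∞, t]) is continuous. Then: (i) for P∘X^{-1}-almost every x and every u ∈ [0,1], κ(x)({s ∈ ℝ : G_x(s) ≤ u}) = u; and (ii) the random variable ω ↦ G_{X(ω)}(S(ω)) is uniformly distributed on [0,1]. -/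
open MeasureTheory ProbabilityTheory

lemma pit_aux (μ : Measure ℝ) [IsProbabilityMeasure μ] (F : ℝ → ℝ)
    (hF : ∀ t, F t = (μ (Set.Iic t)).toReal) (hc : Continuous F) :
    ∀ u ∈ Set.Icc (0 : ℝ) 1, (μ {s : ℝ | F s ≤ u}).toReal = u := by
  have hFeq : F = ProbabilityTheory.cdf μ := by
    funext t; rw [hF, ProbabilityTheory.cdf_eq_real, measureReal_def]
  have hmono : Monotone F := hFeq ▸ (ProbabilityTheory.cdf μ).mono
  have htop : Filter.Tendsto F Filter.atTop (nhds 1) :=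
    hFeq ▸ ProbabilityTheory.tendsto_cdf_atTop μ
  have hbot : Filter.Tendsto F Filter.atBot (nhds 0) :=
    hFeq ▸ ProbabilityTheory.tendsto_cdf_atBot μ
  rintro u ⟨hu0, hu1⟩
  set A : Set ℝ := {s : ℝ | F s ≤ u} with hA
  by_cases hall : ∀ s, F s ≤ u
  · have hAuniv : A = Set.univ := Set.eq_univ_of_forall hall
    have h1u : (1 : ℝ) ≤ u := le_of_tendsto htop (Filter.Eventually.of_forall hall)
    have : u = 1 := le_antisymm hu1 h1u
    simp [hAuniv, this]
  · push_neg at hall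
    obtain ⟨s0, hs0⟩ := hall
    have hbdd : BddAbove A := by
      refine ⟨s0, fun s hs => ?_⟩
      by_contra h
      push_neg at h
      exact absurd (hmono h.le) (not_le.mpr (lt_of_le_of_lt hs hs0))
    by_cases hne : A.Nonempty
    · have hclosed : IsClosed A := isClosed_le hc continuous_const
      set a := sSup A with ha
      have haA : a ∈ A := hclosed.csSup_mem hne hbdd
      have hAIic : A = Set.Iic a := by
        ext s
        constructor
        · exact fun hs => le_csSup hbdd hs
        · exact fun hs => le_trans (hmono hs) haA
      have hFa_le : F a ≤ u := haA
      have hFa_ge : u ≤ F a := by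
        have : Filter.Tendsto F (nhdsWithin a (Set.Ioi a)) (nhds (F a)) :=
          (hc.tendsto a).mono_left nhdsWithin_le_nhds
        refine ge_of_tendsto this ?_
        filter_upwards [self_mem_nhdsWithin] with t ht
        have : t ∉ A := by rw [hAIic]; exact not_le.mpr (Set.mem_Ioi.mp ht)
        exact le_of_not_ge this
      rw [hAIic, ← hF, le_antisymm hFa_le hFa_ge]
    · rw [Set.not_nonempty_iff_eq_empty] at hne
      have hu_le : u ≤ 0 := by
        refine ge_of_tendsto hbot ?_
        refine Filter.Eventually.of_forall fun t => ?_
        by_contra h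
        exact (Set.eq_empty_iff_forall_notMem.mp hne t) (le_of_not_ge h)
      simp [hne, le_antisymm hu_le hu0]

/-- **Conditional probability integral transform.**
Let `X : Ω → 𝒳` and `S : Ω → ℝ` be random variables, with `𝒳` standard Borel, and
let `κ` be a regular conditional distribution of `S` given `X` (i.e.
`(ℙ.map X) ⊗ₘ κ = ℙ.map (fun ω => (X ω, S ω))`).  If for `ℙ.map X`-a.e. `x` the CDF
`G x t = κ x (−∞, t]` is continuous, then:
(i) for a.e. `x` and every `u ∈ [0,1]`, `κ x {s : G x s ≤ u} = u`; and
(ii) `ω ↦ G (X ω) (S ω)` is uniformly distributed on `[0,1]`. -/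
theorem conditional_probability_integral_transform
    {Ω : Type*} [MeasureSpace Ω] [IsProbabilityMeasure (ℙ : Measure Ω)]
    {𝒳 : Type*} [MeasurableSpace 𝒳] [StandardBorelSpace 𝒳]
    (X : Ω → 𝒳) (S : Ω → ℝ) (hX : Measurable X) (hS : Measurable S)
    (κ : ProbabilityTheory.Kernel 𝒳 ℝ) [IsMarkovKernel κ]
    (hκ : (Measure.map X ℙ).compProd κ = Measure.map (fun ω => (X ω, S ω)) ℙ)
    (G : 𝒳 → ℝ → ℝ) (hGdef : ∀ x t, G x t = (κ x (Set.Iic t)).toReal)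
    (hGcont : ∀ᵐ x ∂(Measure.map X ℙ), Continuous (G x)) :
    (∀ᵐ x ∂(Measure.map X ℙ), ∀ u ∈ Set.Icc (0 : ℝ) 1,
        (κ x {s : ℝ | G x s ≤ u}).toReal = u) ∧
      Measure.map (fun ω => G (X ω) (S ω)) ℙ =
        volume.restrict (Set.Icc (0 : ℝ) 1) := by
  -- Part (i)
  have part1 : ∀ᵐ x ∂(Measure.map X ℙ), ∀ u ∈ Set.Icc (0 : ℝ) 1,
      (κ x {s : ℝ | G x s ≤ u}).toReal = u := by
    filter_upwards [hGcont] with x hx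
    exact pit_aux (κ x) (G x) (hGdef x) hx
  refine ⟨part1, ?_⟩
  -- joint measurability of (x, t) ↦ κ x (Iic t)
  have hG'meas : Measurable fun p : 𝒳 × ℝ => (κ p.1 (Set.Iic p.2)).toReal := by
    have h1 : Measurable fun p : 𝒳 × ℝ => κ p.1 (Set.Iic p.2) := by
      have := ProbabilityTheory.Kernel.measurable_kernel_prodMk_left
        (κ := κ.comap Prod.fst (measurable_fst : Measurable (Prod.fst : 𝒳 × ℝ → 𝒳)))
        (t := {p : (𝒳 × ℝ) × ℝ | p.2 ≤ p.1.2})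
        (measurableSet_le measurable_snd measurable_fst.snd)
      simpa [ProbabilityTheory.Kernel.comap_apply, Set.preimage, Set.Iic] using this
    exact h1.ennreal_toReal
  have hGeq : (fun ω => G (X ω) (S ω)) =
      (fun p : 𝒳 × ℝ => (κ p.1 (Set.Iic p.2)).toReal) ∘ fun ω => (X ω, S ω) := by
    funext ω; simp [hGdef]
  have hXS : Measurable fun ω => (X ω, S ω) := hX.prodMk hS
  have hfmeas : Measurable fun ω => G (X ω) (S ω) := hGeq ▸ hG'meas.comp hXS
  have hmap : Measure.map (fun ω => G (X ω) (S ω)) ℙ =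
      ((Measure.map X ℙ).compProd κ).map (fun p : 𝒳 × ℝ => (κ p.1 (Set.Iic p.2)).toReal) := by
    rw [hκ, hGeq, Measure.map_map hG'meas hXS]
  have : IsProbabilityMeasure (Measure.map (fun ω => G (X ω) (S ω)) ℙ) :=
    Measure.isProbabilityMeasure_map hfmeas.aemeasurable
  refine Measure.ext_of_Iic _ _ fun u => ?_
  rw [hmap, Measure.map_apply hG'meas measurableSet_Iic,
    Measure.compProd_apply (hG'meas measurableSet_Iic)]
  have hpre : ∀ x : 𝒳, (Prod.mk x ⁻¹'
      ((fun p : 𝒳 × ℝ => (κ p.1 (Set.Iic p.2)).toReal) ⁻¹' Set.Iic u)) =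
      {s : ℝ | G x s ≤ u} := by
    intro x; ext s; simp [hGdef]
  simp_rw [hpre]
  rcases lt_or_ge u 0 with h0 | h0
  · have hempty : ∀ x : 𝒳, {s : ℝ | G x s ≤ u} = ∅ := by
      intro x
      ext s
      simp only [Set.mem_setOf_eq, Set.mem_empty_iff_false, iff_false, not_le]
      exact lt_of_lt_of_le h0 (by rw [hGdef]; exact ENNReal.toReal_nonneg)
    simp only [hempty, measure_empty, lintegral_const, zero_mul]
    rw [Measure.restrict_apply measurableSet_Iic]
    have : Set.Iic u ∩ Set.Icc (0 : ℝ) 1 = ∅ := by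
      apply Set.eq_empty_of_forall_notMem
      rintro s ⟨hs, hs0, _⟩
      simp only [Set.mem_Iic] at hs
      linarith
    rw [this, measure_empty]
  rcases le_or_gt u 1 with h1 | h1
  · -- main case
    have hval : ∀ᵐ x ∂(Measure.map X ℙ),
        κ x {s : ℝ | G x s ≤ u} = ENNReal.ofReal u := by
      filter_upwards [part1] with x hx
      have h' := hx u ⟨h0, h1⟩
      rw [← ENNReal.ofReal_toReal (measure_ne_top (κ x) _), h']
    rw [lintegral_congr_ae hval, lintegral_const]
    have : IsProbabilityMeasure (Measure.map X ℙ) := Measure.isProbabilityMeasure_map hX.aemeasurable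
    rw [measure_univ, mul_one, Measure.restrict_apply measurableSet_Iic]
    have : Set.Iic u ∩ Set.Icc (0 : ℝ) 1 = Set.Icc 0 u := by
      ext s; simp only [Set.mem_inter_iff, Set.mem_Iic, Set.mem_Icc]
      constructor
      · rintro ⟨hs, hs0, _⟩; exact ⟨hs0, hs⟩
      · rintro ⟨hs0, hs⟩; exact ⟨hs, hs0, le_trans hs h1⟩
    rw [this, Real.volume_Icc, sub_zero]
  · -- u > 1
    have huniv : ∀ x : 𝒳, {s : ℝ | G x s ≤ u} = Set.univ := by
      intro x
      refine Set.eq_univ_of_forall fun s => ?_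
      have : G x s ≤ 1 := by
        rw [hGdef]
        exact ENNReal.toReal_le_of_le_ofReal zero_le_one (by simpa using prob_le_one)
      exact le_trans this h1.le
    simp only [huniv, measure_univ, lintegral_const, one_mul]
    have : IsProbabilityMeasure (Measure.map X ℙ) := Measure.isProbabilityMeasure_map hX.aemeasurable
    rw [measure_univ, Measure.restrict_apply measurableSet_Iic]
    have : Set.Iic u ∩ Set.Icc (0 : ℝ) 1 = Set.Icc 0 1 := by
      ext s; simp only [Set.mem_inter_iff, Set.mem_Iic, Set.mem_Icc]
      constructor
      · rintro ⟨_, h⟩; exact h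
      · rintro ⟨hs0, hs1⟩; exact ⟨le_trans hs1 h1.le, hs0, hs1⟩
    rw [this, Real.volume_Icc]
    simp
end

section
/- (Consistency of the prediction region in the homoscedastic case; Theorem 4, distilled.) Let Y, Y_1, Y_2, ... be i.i.d. random elements of a measurable space 𝒴 with common law P, let D : 𝒴 → ℝ be measurable with CDF G(t) = P(D(Y) ≤ t), and fix α ∈ (0,1). Set q = inf{t ∈ ℝ : G(t) ≥ α} and assume G is continuous and G(q − ε) < α < G(q + ε) for every ε > 0. For each n, let D̂_n : 𝒴 → ℝ be a random measurable function, independent of (Y, Y_1, ..., Y_n), with sup_{y ∈ 𝒴} |D̂_n(y) − D(y)| → 0 in probability. Let q̂_n be the empirical α-quantile of D̂_n(Y_1), ..., D̂_n(Y_n), and define Ĉ_n = {y ∈ 𝒴 : D̂_n(y) ≥ q̂_n} and C = {y ∈ 𝒴 : D(y) ≥ q}. Then P(Ĉ_n Δ C) → 0 in probability; in particular the coverage P(Y ∈ Ĉ_n) → P(Y ∈ C) = 1 − α. -/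
open MeasureTheory ProbabilityTheory Filter Topology

namespace EmpAux

noncomputable def empCDF {n : ℕ} (v : Fin n → ℝ) (t : ℝ) : ℝ :=
  ((Finset.univ.filter fun i => v i ≤ t).card : ℝ) / n

lemma empQuantile_eq {n : ℕ} (v : Fin n → ℝ) (β : ℝ) :
    empQuantile v β = sInf {t : ℝ | β ≤ empCDF v t} := rfl

lemma empCDF_eq_sum {n : ℕ} (v : Fin n → ℝ) (t : ℝ) :
    empCDF v t = (∑ i : Fin n, if v i ≤ t then (1:ℝ) else 0) / n := by
  rw [empCDF, Finset.sum_boole]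

lemma empCDF_le_empCDF {n : ℕ} (u v : Fin n → ℝ) {s t : ℝ}
    (h : ∀ i, v i ≤ s → u i ≤ t) : empCDF v s ≤ empCDF u t := by
  have hcard : ((Finset.univ.filter fun i => v i ≤ s).card : ℝ)
      ≤ ((Finset.univ.filter fun i => u i ≤ t).card : ℝ) := by
    exact_mod_cast Finset.card_le_card
      (Finset.monotone_filter_right _ (fun i _ hi => h i hi))
  rcases Nat.eq_zero_or_pos n with hn | hn
  · subst hn; simp [empCDF]
  · exact div_le_div_of_nonneg_right hcard (Nat.cast_pos.2 hn).le

lemma empCDF_mono {n : ℕ} (v : Fin n → ℝ) : Monotone (empCDF v) :=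
  fun _ _ hst => empCDF_le_empCDF v v (fun _ hi => le_trans hi hst)

lemma bddBelow_set {n : ℕ} (hn : 0 < n) (v : Fin n → ℝ) {β : ℝ} (hβ : 0 < β) :
    BddBelow {t | β ≤ empCDF v t} := by
  have : Nonempty (Fin n) := Fin.pos_iff_nonempty.1 hn
  have hne : (Finset.univ : Finset (Fin n)).Nonempty := Finset.univ_nonempty
  refine ⟨Finset.univ.inf' hne v, fun t ht => ?_⟩
  by_contra hlt
  push_neg at hlt
  have hempty : (Finset.univ.filter fun i => v i ≤ t) = ∅ := by
    refine Finset.filter_eq_empty_iff.2 fun i _ => ?_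
    have := Finset.inf'_le v (Finset.mem_univ i)
    push_neg; linarith
  have h0 : empCDF v t = 0 := by simp [empCDF, hempty]
  have ht' : β ≤ empCDF v t := ht
  rw [h0] at ht'
  linarith

lemma set_nonempty {n : ℕ} (hn : 0 < n) (v : Fin n → ℝ) {β : ℝ} (hβ : β ≤ 1) :
    {t | β ≤ empCDF v t}.Nonempty := by
  have : Nonempty (Fin n) := Fin.pos_iff_nonempty.1 hn
  have hne : (Finset.univ : Finset (Fin n)).Nonempty := Finset.univ_nonempty
  refine ⟨Finset.univ.sup' hne v, ?_⟩
  have hall : (Finset.univ.filter fun i => v i ≤ Finset.univ.sup' hne v) = Finset.univ :=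
    Finset.filter_eq_self.2 fun i _ => Finset.le_sup' v (Finset.mem_univ i)
  have h1 : empCDF v (Finset.univ.sup' hne v) = 1 := by
    rw [empCDF, hall, Finset.card_univ, Fintype.card_fin]
    field_simp
  show β ≤ empCDF v (Finset.univ.sup' hne v)
  rw [h1]; exact hβ

lemma empQuantile_le {n : ℕ} (hn : 0 < n) (v : Fin n → ℝ) {β b : ℝ} (hβ : 0 < β)
    (hb : β ≤ empCDF v b) : empQuantile v β ≤ b :=
  csInf_le (bddBelow_set hn v hβ) hb

lemma le_empQuantile {n : ℕ} (hn : 0 < n) (v : Fin n → ℝ) {β a : ℝ} (hβ : β ≤ 1)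
    (ha : empCDF v a < β) : a ≤ empQuantile v β := by
  refine le_csInf (set_nonempty hn v hβ) fun t ht => ?_
  by_contra hlt
  push_neg at hlt
  have hmono := empCDF_mono v (le_of_lt hlt)
  have ht' : β ≤ empCDF v t := ht
  linarith

lemma empQuantile_le_add {n : ℕ} (hn : 0 < n) (u v : Fin n → ℝ) {β δ : ℝ}
    (hβ0 : 0 < β) (hβ1 : β ≤ 1) (h : ∀ i, u i ≤ v i + δ) :
    empQuantile u β ≤ empQuantile v β + δ := by
  have key : ∀ t ∈ {t | β ≤ empCDF v t}, empQuantile u β ≤ t + δ := by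
    intro t ht
    have ht' : β ≤ empCDF v t := ht
    refine empQuantile_le hn u hβ0 (le_trans ht' ?_)
    exact empCDF_le_empCDF u v (fun i hi => by linarith [h i])
  have : empQuantile u β - δ ≤ empQuantile v β := by
    refine le_csInf (set_nonempty hn v hβ1) fun t ht => by linarith [key t ht]
  linarith

lemma abs_empQuantile_sub_le {n : ℕ} (hn : 0 < n) (u v : Fin n → ℝ) {β δ : ℝ}
    (hβ0 : 0 < β) (hβ1 : β ≤ 1) (h : ∀ i, |u i - v i| ≤ δ) :
    |empQuantile u β - empQuantile v β| ≤ δ := by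
  rw [abs_le]
  constructor
  · have := empQuantile_le_add hn v u hβ0 hβ1 (fun i => by
      have := abs_le.1 (h i); linarith [this.1])
    linarith
  · have := empQuantile_le_add hn u v hβ0 hβ1 (fun i => by
      have := abs_le.1 (h i); linarith [this.2])
    linarith

end EmpAux

namespace EmpAux

lemma wlln {Ω : Type*} [MeasureSpace Ω] [IsProbabilityMeasure (ℙ : Measure Ω)]
    {𝒴 : Type*} [MeasurableSpace 𝒴] (P : Measure 𝒴) [IsProbabilityMeasure P]
    (V : ℕ → Ω → 𝒴) (hVmeas : ∀ i, Measurable (V i))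
    (hViid : iIndepFun V ℙ)
    (hVlaw : ∀ i, Measure.map (V i) ℙ = P)
    (D : 𝒴 → ℝ) (hD : Measurable D) (t : ℝ) :
    TendstoInMeasure ℙ (fun n ω => empCDF (fun i : Fin n => D (V (i.val + 1) ω)) t) atTop
      (fun _ => (P {y | D y ≤ t}).toReal) := by
  classical
  set g : 𝒴 → ℝ := (D ⁻¹' Set.Iic t).indicator (fun _ => (1:ℝ)) with hgdef
  have hgmeas : Measurable g := measurable_const.indicator (hD measurableSet_Iic)
  set X : ℕ → Ω → ℝ := fun i ω => g (V (i + 1) ω) with hXdef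
  have hXind : ∀ i, X i = Set.indicator ((V (i+1)) ⁻¹' (D ⁻¹' Set.Iic t)) (fun _ => (1:ℝ)) := by
    intro i; funext ω
    simp only [hXdef, hgdef, Set.indicator_apply, Set.mem_preimage]
  have hXmeas : ∀ i, Measurable (X i) := fun i => hgmeas.comp (hVmeas (i + 1))
  have hsmeas : ∀ i, MeasurableSet ((V (i+1)) ⁻¹' (D ⁻¹' Set.Iic t)) :=
    fun i => (hVmeas (i+1)) (hD measurableSet_Iic)
  have hint : Integrable (X 0) ℙ := by
    rw [hXind 0]
    exact (integrable_const (1:ℝ)).indicator (hsmeas 0)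
  have hindep : Pairwise (Function.onFun (IndepFun · · ℙ) X) := by
    intro i j hij
    exact (hViid.indepFun (by omega : i + 1 ≠ j + 1)).comp hgmeas hgmeas
  have hident : ∀ i, IdentDistrib (X i) (X 0) ℙ ℙ := by
    intro i
    have : IdentDistrib (V (i+1)) (V 1) ℙ ℙ :=
      ⟨(hVmeas _).aemeasurable, (hVmeas _).aemeasurable, by rw [hVlaw, hVlaw]⟩
    exact this.comp hgmeas
  have hmean : ℙ[X 0] = (P {y | D y ≤ t}).toReal := by
    rw [hXind 0, integral_indicator_const (1:ℝ) (hsmeas 0)]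
    rw [smul_eq_mul, mul_one, ← hVlaw 1]
    exact congrArg ENNReal.toReal (Measure.map_apply (hVmeas 1) (hD measurableSet_Iic)).symm
  have hsum : ∀ (n : ℕ) (ω : Ω),
      (∑ i ∈ Finset.range n, X i ω) / n = empCDF (fun i : Fin n => D (V (i.val + 1) ω)) t := by
    intro n ω
    rw [empCDF_eq_sum]
    congr 1
    rw [← Fin.sum_univ_eq_sum_range (fun i => X i ω) n]
    refine Finset.sum_congr rfl fun i _ => ?_
    simp only [hXdef, hgdef, Set.indicator_apply, Set.mem_preimage, Set.mem_Iic]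
  have hae := strong_law_ae_real X hint hindep hident
  have hae' : ∀ᵐ ω ∂ℙ, Tendsto (fun n : ℕ => empCDF (fun i : Fin n => D (V (i.val + 1) ω)) t)
      atTop (𝓝 ((P {y | D y ≤ t}).toReal)) := by
    filter_upwards [hae] with ω hω
    rw [← hmean]
    exact hω.congr (fun n => hsum n ω)
  refine tendstoInMeasure_of_tendsto_ae (fun n => ?_) hae'
  have : (fun ω => empCDF (fun i : Fin n => D (V (i.val + 1) ω)) t)
      = fun ω => (∑ i ∈ Finset.range n, X i ω) / n := by
    funext ω; rw [hsum]
  rw [this]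
  exact ((Finset.measurable_sum _ (fun i _ => hXmeas i)).div_const _).aestronglyMeasurable

end EmpAux

/-- **Consistency of the prediction region in the homoscedastic case.**
`V 0 = Y, V 1, V 2, …` are i.i.d. with law `P` on `𝒴`; `D : 𝒴 → ℝ` has continuous
CDF `G` with unique `α`-quantile `q`.  The estimators `Dhat n`, independent of
`(Y, V 1, …, V n)`, converge uniformly to `D` in probability.  With `qhat n` the
empirical `α`-quantile of `Dhat n (V 1), …, Dhat n (V n)`,
`Ĉₙ = {y : Dhat n y ≥ qhat n}` and `C = {y : D y ≥ q}`, we get `P(Ĉₙ Δ C) → 0` in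
probability; in particular the coverage `P(Y ∈ Ĉₙ) → P(Y ∈ C) = 1 − α`. -/
theorem homoscedastic_prediction_region_consistency
    {Ω : Type*} [MeasureSpace Ω] [IsProbabilityMeasure (ℙ : Measure Ω)]
    {𝒴 : Type*} [MeasurableSpace 𝒴] (P : Measure 𝒴) [IsProbabilityMeasure P]
    (V : ℕ → Ω → 𝒴)
    (hVmeas : ∀ i, Measurable (V i))
    (hViid : iIndepFun V ℙ)
    (hVlaw : ∀ i, Measure.map (V i) ℙ = P)
    (D : 𝒴 → ℝ) (hD : Measurable D)
    (G : ℝ → ℝ) (hG : ∀ t, G t = (P {y | D y ≤ t}).toReal)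
    (hGcont : Continuous G)
    (α : ℝ) (hα : α ∈ Set.Ioo (0 : ℝ) 1)
    (q : ℝ) (hq : q = sInf {t : ℝ | α ≤ G t})
    (huniq : ∀ ε > 0, G (q - ε) < α ∧ α < G (q + ε))
    (Dhat : ℕ → Ω → 𝒴 → ℝ)
    (hDhatmeas : ∀ n ω, Measurable (Dhat n ω))
    -- `Dhat n` is independent of `(Y, V 1, …, V n) = (V 0, V 1, …, V n)`
    (hDhatindep : ∀ n, IndepFun (Dhat n) (fun ω => fun i : Fin (n + 1) => V i ω) ℙ)
    -- `sup_y |Dhat n y − D y| → 0` in probability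
    (hDhatunif : ∀ ε > 0,
      Tendsto (fun n => ℙ {ω | ∃ y, ε ≤ |Dhat n ω y - D y|}) atTop (𝓝 0))
    -- `qhat n` is the empirical `α`-quantile of `Dhat n (V 1), …, Dhat n (V n)`
    (qhat : ℕ → Ω → ℝ)
    (hqhat : ∀ n ω, qhat n ω = empQuantile (fun i : Fin n => Dhat n ω (V (i.val + 1) ω)) α) :
    -- oracle coverage: `P(C) = 1 − α`
    (P {y | D y ≥ q}).toReal = 1 - α ∧
    -- `P(Ĉₙ Δ C) → 0` in probability
    (∀ ε > 0,
      Tendsto (fun n =>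
          ℙ {ω | ε ≤ (P (symmDiff {y | Dhat n ω y ≥ qhat n ω} {y | D y ≥ q})).toReal})
        atTop (𝓝 0)) ∧
    -- coverage `P(Y ∈ Ĉₙ) → 1 − α` in probability
    (∀ ε > 0,
      Tendsto (fun n => ℙ {ω | ε ≤ |(P {y | Dhat n ω y ≥ qhat n ω}).toReal - (1 - α)|})
        atTop (𝓝 0)) := by
  classical
  obtain ⟨hα0, hα1⟩ := hα
  have hseq : Tendsto (fun k : ℕ => (1:ℝ) / (k + 1)) atTop (𝓝 0) :=
    tendsto_one_div_add_atTop_nhds_zero_nat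
  -- no atoms
  have hatom : ∀ t : ℝ, P {y | D y = t} = 0 := by
    intro t
    have hbound : ∀ k : ℕ, (P {y | D y = t}).toReal ≤ G t - G (t - 1/(k+1)) := by
      intro k
      have hpos : (0:ℝ) < 1/(k+1) := by positivity
      have hslt : t - 1/(k+1) < t := by linarith
      have hss : {y | D y ≤ t - 1/(k+1)} ⊆ {y | D y ≤ t} :=
        fun y hy => le_trans hy hslt.le
      have hsub : {y | D y = t} ⊆ {y | D y ≤ t} \ {y | D y ≤ t - 1/(k+1)} := by
        intro y hy
        simp only [Set.mem_setOf_eq] at hy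
        refine ⟨le_of_eq hy, ?_⟩
        simp only [Set.mem_setOf_eq, hy, not_le]
        exact hslt
      have hdiff : P ({y | D y ≤ t} \ {y | D y ≤ t - 1/(k+1)})
          = P {y | D y ≤ t} - P {y | D y ≤ t - 1/(k+1)} :=
        measure_diff hss (hD measurableSet_Iic).nullMeasurableSet (measure_ne_top _ _)
      calc (P {y | D y = t}).toReal
          ≤ (P ({y | D y ≤ t} \ {y | D y ≤ t - 1/(k+1)})).toReal :=
            ENNReal.toReal_mono (measure_ne_top _ _) (measure_mono hsub)
        _ = G t - G (t - 1/(k+1)) := by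
            rw [hdiff, ENNReal.toReal_sub_of_le (measure_mono hss) (measure_ne_top _ _),
              hG, hG]
    have h1 : Tendsto (fun k : ℕ => t - 1/(k+1)) atTop (𝓝 t) := by
      have := (tendsto_const_nhds (x := t) (f := (atTop : Filter ℕ))).sub hseq
      simpa using this
    have h2 : Tendsto (fun k : ℕ => G (t - 1/(k+1))) atTop (𝓝 (G t)) :=
      (hGcont.tendsto t).comp h1
    have hlim : Tendsto (fun k : ℕ => G t - G (t - 1/(k+1))) atTop (𝓝 0) := by
      have := (tendsto_const_nhds (x := G t) (f := (atTop : Filter ℕ))).sub h2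
      simpa using this
    have hle0 : (P {y | D y = t}).toReal ≤ 0 := ge_of_tendsto' hlim hbound
    have h0 : (P {y | D y = t}).toReal = 0 := le_antisymm hle0 ENNReal.toReal_nonneg
    rwa [ENNReal.toReal_eq_zero_iff, or_iff_left (measure_ne_top _ _)] at h0
  -- P{D < t} = P{D ≤ t}
  have hlt_le : ∀ t : ℝ, P {y | D y < t} = P {y | D y ≤ t} := by
    intro t
    refine le_antisymm (measure_mono fun y (hy : D y < t) => le_of_lt hy) ?_
    calc P {y | D y ≤ t} ≤ P ({y | D y < t} ∪ {y | D y = t}) :=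
          measure_mono (fun y (hy : D y ≤ t) => (lt_or_eq_of_le hy : D y < t ∨ D y = t))
      _ ≤ P {y | D y < t} + P {y | D y = t} := measure_union_le _ _
      _ = P {y | D y < t} := by rw [hatom, add_zero]
  -- G q = α
  have hGq : G q = α := by
    have hup : ∀ k : ℕ, G (q - 1/(k+1)) ≤ α :=
      fun k => (huniq (1/(k+1)) (by positivity)).1.le
    have hdn : ∀ k : ℕ, α ≤ G (q + 1/(k+1)) :=
      fun k => (huniq (1/(k+1)) (by positivity)).2.le
    have h1 : Tendsto (fun k : ℕ => G (q - 1/(k+1))) atTop (𝓝 (G q)) := by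
      refine (hGcont.tendsto q).comp ?_
      have := (tendsto_const_nhds (x := q) (f := (atTop : Filter ℕ))).sub hseq
      simpa using this
    have h2 : Tendsto (fun k : ℕ => G (q + 1/(k+1))) atTop (𝓝 (G q)) := by
      refine (hGcont.tendsto q).comp ?_
      have := (tendsto_const_nhds (x := q) (f := (atTop : Filter ℕ))).add hseq
      simpa using this
    exact le_antisymm (le_of_tendsto' h1 hup) (ge_of_tendsto' h2 hdn)
  -- part 1
  have hpart1 : (P {y | D y ≥ q}).toReal = 1 - α := by
    have hCset : {y | D y ≥ q} = {y | D y < q}ᶜ := by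
      ext y; simp [not_lt, ge_iff_le]
    have hmeas : MeasurableSet {y | D y < q} := hD measurableSet_Iio
    rw [hCset, measure_compl hmeas (measure_ne_top _ _), measure_univ, hlt_le q,
      ENNReal.toReal_sub_of_le prob_le_one ENNReal.one_ne_top, ENNReal.toReal_one,
      ← hG q, hGq]
  -- part 2
  have hpart2 : ∀ ε > 0, Tendsto (fun n =>
      ℙ {ω | ε ≤ (P (symmDiff {y | Dhat n ω y ≥ qhat n ω} {y | D y ≥ q})).toReal})
      atTop (𝓝 0) := by
    intro ε hε
    obtain ⟨δ, hδ0, hδ⟩ :=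
      Metric.continuousAt_iff.1 (hGcont.continuousAt (x := q)) (ε/2) (by positivity)
    set r := δ/2 with hrdef
    have hr0 : 0 < r := by positivity
    have hGr : G (q + r) - G (q - r) < ε := by
      have h1 := hδ (show dist (q + r) q < δ by
        rw [Real.dist_eq, abs_of_nonneg (by linarith : (0:ℝ) ≤ q + r - q)]; linarith)
      have h2 := hδ (show dist (q - r) q < δ by
        rw [Real.dist_eq, abs_of_nonpos (by linarith : q - r - q ≤ (0:ℝ))]; linarith)
      rw [Real.dist_eq, hGq] at h1 h2
      have h1' := abs_lt.1 h1
      have h2' := abs_lt.1 h2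
      linarith [h1'.1, h1'.2, h2'.1, h2'.2]
    set a := q - r/2 with hadef
    set b := q + r/2 with hbdef
    have hGa : G a < α := (huniq (r/2) (by positivity)).1
    have hGb : α < G b := (huniq (r/2) (by positivity)).2
    set η₁ := α - G a with hη₁def
    set η₂ := G b - α with hη₂def
    have hη₁0 : 0 < η₁ := by rw [hη₁def]; linarith
    have hη₂0 : 0 < η₂ := by rw [hη₂def]; linarith
    have hKbound : (P {y | q - r ≤ D y ∧ D y ≤ q + r}).toReal ≤ G (q + r) - G (q - r) := by
      have hsub2 : {y | q - r ≤ D y ∧ D y ≤ q + r} ⊆ {y | D y ≤ q + r} \ {y | D y < q - r} := by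
        intro y hy
        refine ⟨hy.2, ?_⟩
        simp only [Set.mem_setOf_eq, not_lt]
        exact hy.1
      have hmeas : MeasurableSet {y | D y < q - r} := hD measurableSet_Iio
      have hss : {y | D y < q - r} ⊆ {y | D y ≤ q + r} :=
        fun y (hy : D y < q - r) => le_trans hy.le (by linarith : q - r ≤ q + r)
      have hss' : {y | D y ≤ q - r} ⊆ {y | D y ≤ q + r} :=
        fun y (hy : D y ≤ q - r) => le_trans hy (by linarith : q - r ≤ q + r)
      have hdiff : P ({y | D y ≤ q + r} \ {y | D y < q - r})
          = P {y | D y ≤ q + r} - P {y | D y < q - r} :=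
        measure_diff hss hmeas.nullMeasurableSet (measure_ne_top _ _)
      calc (P {y | q - r ≤ D y ∧ D y ≤ q + r}).toReal
          ≤ (P ({y | D y ≤ q + r} \ {y | D y < q - r})).toReal :=
            ENNReal.toReal_mono (measure_ne_top _ _) (measure_mono hsub2)
        _ = G (q + r) - G (q - r) := by
            rw [hdiff, hlt_le,
              ENNReal.toReal_sub_of_le (measure_mono hss') (measure_ne_top _ _), hG, hG]
    set A : ℕ → Set Ω := fun n => {ω | ∃ y, r/4 ≤ |Dhat n ω y - D y|} with hAdef
    set B1 : ℕ → Set Ω := fun n => {ω | η₁ ≤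
      dist (EmpAux.empCDF (fun i : Fin n => D (V (i.val + 1) ω)) a)
        ((P {y | D y ≤ a}).toReal)} with hB1def
    set B2 : ℕ → Set Ω := fun n => {ω | η₂ ≤
      dist (EmpAux.empCDF (fun i : Fin n => D (V (i.val + 1) ω)) b)
        ((P {y | D y ≤ b}).toReal)} with hB2def
    have hA0 : Tendsto (fun n => ℙ (A n)) atTop (𝓝 0) := hDhatunif (r/4) (by positivity)
    have hB10 : Tendsto (fun n => ℙ (B1 n)) atTop (𝓝 0) :=
      (tendstoInMeasure_iff_dist.1 (EmpAux.wlln P V hVmeas hViid hVlaw D hD a)) η₁ hη₁0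
    have hB20 : Tendsto (fun n => ℙ (B2 n)) atTop (𝓝 0) :=
      (tendstoInMeasure_iff_dist.1 (EmpAux.wlln P V hVmeas hViid hVlaw D hD b)) η₂ hη₂0
    have hincl : ∀ n, 1 ≤ n →
        {ω | ε ≤ (P (symmDiff {y | Dhat n ω y ≥ qhat n ω} {y | D y ≥ q})).toReal}
          ⊆ A n ∪ (B1 n ∪ B2 n) := by
      intro n hn ω hω
      by_contra hmem
      simp only [Set.mem_union, not_or] at hmem
      obtain ⟨hA, hB1m, hB2m⟩ := hmem
      have hA' : ∀ y, |Dhat n ω y - D y| < r/4 := by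
        intro y
        by_contra h
        exact hA ⟨y, not_lt.1 h⟩
      have hB1' : EmpAux.empCDF (fun i : Fin n => D (V (i.val + 1) ω)) a < α := by
        simp only [hB1def, Set.mem_setOf_eq, not_le, Real.dist_eq] at hB1m
        have := (abs_lt.1 hB1m).2
        rw [← hG a] at this
        rw [hη₁def] at this
        linarith
      have hB2' : α ≤ EmpAux.empCDF (fun i : Fin n => D (V (i.val + 1) ω)) b := by
        simp only [hB2def, Set.mem_setOf_eq, not_le, Real.dist_eq] at hB2m
        have := (abs_lt.1 hB2m).1
        rw [← hG b] at this
        rw [hη₂def] at this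
        linarith
      have hnpos : 0 < n := hn
      set v : Fin n → ℝ := fun i => D (V (i.val + 1) ω) with hv
      set u : Fin n → ℝ := fun i => Dhat n ω (V (i.val + 1) ω) with hu
      have hqv1 : a ≤ empQuantile v α := EmpAux.le_empQuantile hnpos v hα1.le hB1'
      have hqv2 : empQuantile v α ≤ b := EmpAux.empQuantile_le hnpos v hα0 hB2'
      have hclose : |empQuantile u α - empQuantile v α| ≤ r/4 :=
        EmpAux.abs_empQuantile_sub_le hnpos u v hα0 hα1.le (fun i => (hA' _).le)
      have hquv := abs_le.1 hclose
      have hqhatval : qhat n ω = empQuantile u α := hqhat n ω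
      have hqb1 : q - 3*r/4 ≤ qhat n ω := by
        rw [hqhatval]; rw [hadef] at hqv1; linarith [hquv.1]
      have hqb2 : qhat n ω ≤ q + 3*r/4 := by
        rw [hqhatval]; rw [hbdef] at hqv2; linarith [hquv.2]
      have hsub : symmDiff {y | Dhat n ω y ≥ qhat n ω} {y | D y ≥ q}
          ⊆ {y | q - r ≤ D y ∧ D y ≤ q + r} := by
        intro y hy
        rcases Set.mem_symmDiff.1 hy with ⟨h1, h2⟩ | ⟨h1, h2⟩
        · simp only [Set.mem_setOf_eq, ge_iff_le, not_le] at h1 h2 ⊢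
          have hay := abs_lt.1 (hA' y)
          exact ⟨by linarith [hay.1, hay.2], by linarith⟩
        · simp only [Set.mem_setOf_eq, ge_iff_le, not_le] at h1 h2 ⊢
          have hay := abs_lt.1 (hA' y)
          exact ⟨by linarith, by linarith [hay.1, hay.2]⟩
      have hfin : (P (symmDiff {y | Dhat n ω y ≥ qhat n ω} {y | D y ≥ q})).toReal
          ≤ G (q + r) - G (q - r) :=
        le_trans (ENNReal.toReal_mono (measure_ne_top _ _) (measure_mono hsub)) hKbound
      have hω' : ε ≤ (P (symmDiff {y | Dhat n ω y ≥ qhat n ω} {y | D y ≥ q})).toReal := hω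
      linarith
    have hsum0 : Tendsto (fun n => ℙ (A n) + (ℙ (B1 n) + ℙ (B2 n))) atTop (𝓝 0) := by
      have := hA0.add (hB10.add hB20)
      simpa using this
    refine tendsto_of_tendsto_of_tendsto_of_le_of_le' tendsto_const_nhds hsum0
      (Eventually.of_forall fun n => zero_le) ?_
    filter_upwards [eventually_ge_atTop 1] with n hn
    refine le_trans (measure_mono (hincl n hn)) ?_
    refine le_trans (measure_union_le _ _) ?_
    gcongr
    exact measure_union_le _ _
  refine ⟨hpart1, hpart2, ?_⟩
  -- part 3
  intro ε hε
  have habs : ∀ n ω, |(P {y | Dhat n ω y ≥ qhat n ω}).toReal - (1 - α)|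
      ≤ (P (symmDiff {y | Dhat n ω y ≥ qhat n ω} {y | D y ≥ q})).toReal := by
    intro n ω
    rw [← hpart1]
    have key : ∀ S T : Set 𝒴, P S ≤ P T + P (symmDiff S T) := by
      intro S T
      refine le_trans (measure_mono ?_) (measure_union_le _ _)
      intro y hy
      by_cases hyT : y ∈ T
      · exact Or.inl hyT
      · exact Or.inr (Set.mem_symmDiff.2 (Or.inl ⟨hy, hyT⟩))
    have htr : ∀ S T : Set 𝒴, (P S).toReal ≤ (P T).toReal + (P (symmDiff S T)).toReal := by
      intro S T
      refine le_trans (ENNReal.toReal_mono ?_ (key S T)) ?_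
      · exact ENNReal.add_ne_top.2 ⟨measure_ne_top _ _, measure_ne_top _ _⟩
      · rw [ENNReal.toReal_add (measure_ne_top _ _) (measure_ne_top _ _)]
    have h1 := htr {y | Dhat n ω y ≥ qhat n ω} {y | D y ≥ q}
    have h2 := htr {y | D y ≥ q} {y | Dhat n ω y ≥ qhat n ω}
    rw [symmDiff_comm] at h2
    rw [abs_le]
    constructor <;> linarith
  refine tendsto_of_tendsto_of_tendsto_of_le_of_le' tendsto_const_nhds (hpart2 ε hε)
    (Eventually.of_forall fun n => zero_le)
    (Eventually.of_forall fun n => measure_mono fun ω hω => le_trans hω (habs n ω))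
end

section
/- (Asymptotic unconditional validity; Theorem 2, distilled.) Let (X, S), (X_1, S_1), (X_2, S_2), ... be i.i.d. pairs where X takes values in a standard Borel space 𝒳 and S takes values in ℝ, and let κ be a regular conditional distribution of S given X with conditional CDF g(x, s) = κ(x)((−∞, s]). Assume that for P∘X^{-1}-almost every x, g(x, ·) is continuous. Fix α ∈ (0,1). For each n, let ĝ_n : 𝒳 × ℝ → ℝ be a random measurable function, independent of (X, S) and of (X_1, S_1), ..., (X_n, S_n), such that sup_{x ∈ 𝒳} sup_{s ∈ ℝ} |ĝ_n(x, s) − g(x, s)| → 0 in probability. Let q̂_n be the empirical α-quantile of ĝ_n(X_1, S_1), ..., ĝ_n(X_n, S_n). Then P( ĝ_n(X, S) ≥ q̂_n ) → 1 − α as n → ∞, i.e., the estimated prediction region Ĉ^α(x) = {s : ĝ_n(x, s) ≥ q̂_n} satisfies ℙ(S ∈ Ĉ^α(X)) = 1 − α + o(1). -/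
open MeasureTheory ProbabilityTheory Filter Topology

section Aux

open Set

lemma auxCdfLevelSet (ν : Measure ℝ) [IsProbabilityMeasure ν]
    (hF : Continuous (fun s => (ν (Set.Iic s)).toReal)) {c : ℝ} (hc0 : 0 < c) (hc1 : c < 1) :
    ν {s | (ν (Set.Iic s)).toReal ≤ c} = ENNReal.ofReal c := by
  set F : ℝ → ℝ := fun s => (ν (Set.Iic s)).toReal with hFdef
  have hmono : Monotone F := fun a b hab =>
    ENNReal.toReal_mono (measure_ne_top _ _) (measure_mono (Iic_subset_Iic.2 hab))
  set S : Set ℝ := {s | F s ≤ c} with hSdef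
  have hSclosed : IsClosed S := isClosed_Iic.preimage hF
  have htail : Tendsto (fun n : ℕ => ν (Iic (-(n:ℝ)))) atTop (𝓝 (ν (⋂ n : ℕ, Iic (-(n:ℝ))))) := by
    apply tendsto_measure_iInter_atTop (fun n => measurableSet_Iic.nullMeasurableSet)
    · intro a b hab
      exact Iic_subset_Iic.2 (by simp; exact_mod_cast hab)
    · exact ⟨0, measure_ne_top _ _⟩
  have hempty : (⋂ n : ℕ, Iic (-(n:ℝ))) = ∅ := by
    ext s
    simp only [mem_iInter, mem_Iic, mem_empty_iff_false, iff_false, not_forall, not_le]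
    obtain ⟨n, hn⟩ := exists_nat_gt (-s)
    exact ⟨n, by linarith⟩
  rw [hempty, measure_empty] at htail
  have hSne : S.Nonempty := by
    have := (htail.eventually (eventually_lt_nhds (ENNReal.ofReal_pos.2 hc0))).exists
    obtain ⟨n, hn⟩ := this
    refine ⟨-(n:ℝ), ?_⟩
    simp only [hSdef, mem_setOf_eq, hFdef]
    exact le_of_lt ((ENNReal.toReal_lt_of_lt_ofReal hn).trans_le le_rfl)
  have hone : Tendsto (fun s : ℝ => ν (Iic s)) atTop (𝓝 (ν univ)) := tendsto_measure_Iic_atTop ν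
  have hSbdd : BddAbove S := by
    have h1 : ENNReal.ofReal c < ν univ := by
      rw [measure_univ]; exact ENNReal.ofReal_lt_one.2 hc1
    obtain ⟨s₀, hs₀⟩ := (hone.eventually (eventually_gt_nhds h1)).exists
    refine ⟨s₀, fun b hb => ?_⟩
    by_contra hbs
    push_neg at hbs
    have : F s₀ ≤ F b := hmono hbs.le
    have hFs₀ : c < F s₀ := by
      have := ENNReal.ofReal_lt_iff_lt_toReal hc0.le (measure_ne_top ν _) |>.1 hs₀
      exact this
    have hb' : F b ≤ c := hb
    linarith
  set cstar := sSup S with hcstar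
  have hcmem : cstar ∈ S := hSclosed.csSup_mem hSne hSbdd
  have hSIic : S = Iic cstar := by
    apply Subset.antisymm
    · exact fun b hb => le_csSup hSbdd hb
    · intro b hb
      exact le_trans (hmono hb) hcmem
  have hFc : F cstar = c := by
    refine le_antisymm hcmem ?_
    have htend : Tendsto F (𝓝[>] cstar) (𝓝 (F cstar)) :=
      (hF.tendsto cstar).mono_left nhdsWithin_le_nhds
    refine ge_of_tendsto htend ?_
    filter_upwards [self_mem_nhdsWithin] with s hs
    by_contra h
    push_neg at h
    have : s ∈ S := h.le
    rw [hSIic] at this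
    exact absurd (show s ≤ cstar from this) (not_le.2 hs)
  calc ν S = ν (Iic cstar) := by rw [hSIic]
    _ = ENNReal.ofReal (F cstar) := (ENNReal.ofReal_toReal (measure_ne_top _ _)).symm
    _ = ENNReal.ofReal c := by rw [hFc]

lemma auxMeasurableKernelCdf {𝒳 : Type*} [MeasurableSpace 𝒳] (κ : Kernel 𝒳 ℝ)
    [IsSFiniteKernel κ] : Measurable (fun p : 𝒳 × ℝ => (κ p.1 (Set.Iic p.2)).toReal) := by
  have ht : MeasurableSet {q : (𝒳 × ℝ) × ℝ | q.2 ≤ q.1.2} :=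
    measurableSet_le measurable_snd measurable_fst.snd
  set κ' : Kernel (𝒳 × ℝ) ℝ := κ.comap (Prod.fst : 𝒳 × ℝ → 𝒳) measurable_fst with hκ'
  have h := Kernel.measurable_kernel_prodMk_left (κ := κ') ht
  have heq : (fun p : 𝒳 × ℝ => κ' p
      (Prod.mk p ⁻¹' {q : (𝒳 × ℝ) × ℝ | q.2 ≤ q.1.2})) =
      fun p : 𝒳 × ℝ => κ p.1 (Set.Iic p.2) := by
    funext p
    rw [hκ', Kernel.comap_apply]
    rfl
  rw [heq] at h
  exact h.ennreal_toReal

lemma auxCompProdLevelSet {𝒳 : Type*} [MeasurableSpace 𝒳] (μX : Measure 𝒳)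
    [IsProbabilityMeasure μX] (κ : Kernel 𝒳 ℝ) [IsMarkovKernel κ]
    (g : 𝒳 → ℝ → ℝ) (hgdef : ∀ x s, g x s = (κ x (Set.Iic s)).toReal)
    (hgcont : ∀ᵐ x ∂μX, Continuous (g x))
    {c : ℝ} (hc0 : 0 < c) (hc1 : c < 1) :
    (μX.compProd κ) {p : 𝒳 × ℝ | g p.1 p.2 ≤ c} = ENNReal.ofReal c := by
  have hgm : Measurable (fun p : 𝒳 × ℝ => g p.1 p.2) := by
    have := auxMeasurableKernelCdf κ
    convert this using 1
    funext p; exact hgdef p.1 p.2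
  have hA : MeasurableSet {p : 𝒳 × ℝ | g p.1 p.2 ≤ c} := hgm measurableSet_Iic
  rw [Measure.compProd_apply hA]
  have hpt : ∀ᵐ x ∂μX, κ x (Prod.mk x ⁻¹' {p : 𝒳 × ℝ | g p.1 p.2 ≤ c}) = ENNReal.ofReal c := by
    filter_upwards [hgcont] with x hx
    have hgx : (fun s => (κ x (Set.Iic s)).toReal) = g x := by
      funext s; exact (hgdef x s).symm
    have : Prod.mk x ⁻¹' {p : 𝒳 × ℝ | g p.1 p.2 ≤ c}
        = {s | (κ x (Set.Iic s)).toReal ≤ c} := by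
      ext s; simp [hgdef x s]
    rw [this]
    exact auxCdfLevelSet (κ x) (by rw [hgx]; exact hx) hc0 hc1
  rw [lintegral_congr_ae hpt, lintegral_const, measure_univ, mul_one]

lemma auxEmpQuantileBddBelow {n : ℕ} (hn : 0 < n) (v : Fin n → ℝ) {β : ℝ} (hβ : 0 < β) :
    BddBelow {t : ℝ | β ≤ ((Finset.univ.filter fun i => v i ≤ t).card : ℝ) / n} := by
  have hne : (Finset.univ.image v).Nonempty := by
    simp [Finset.image_nonempty, Finset.univ_nonempty_iff, ← Fin.pos_iff_nonempty, hn]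
  refine ⟨(Finset.univ.image v).min' hne, fun t ht => ?_⟩
  simp only [Set.mem_setOf_eq] at ht
  by_contra hlt
  push_neg at hlt
  have hcard : (Finset.univ.filter fun i => v i ≤ t) = ∅ := by
    rw [Finset.filter_eq_empty_iff]
    intro i _
    have : (Finset.univ.image v).min' hne ≤ v i :=
      Finset.min'_le _ _ (Finset.mem_image_of_mem v (Finset.mem_univ i))
    push_neg
    linarith
  rw [hcard] at ht
  simp at ht
  linarith [ht, hβ]

lemma auxEmpQuantileNonempty {n : ℕ} (hn : 0 < n) (v : Fin n → ℝ) {β : ℝ} (hβ : β ≤ 1) :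
    {t : ℝ | β ≤ ((Finset.univ.filter fun i => v i ≤ t).card : ℝ) / n}.Nonempty := by
  have hne : (Finset.univ.image v).Nonempty := by
    simp [Finset.image_nonempty, Finset.univ_nonempty_iff, ← Fin.pos_iff_nonempty, hn]
  refine ⟨(Finset.univ.image v).max' hne, ?_⟩
  have hcard : (Finset.univ.filter fun i => v i ≤ (Finset.univ.image v).max' hne)
      = Finset.univ := by
    rw [Finset.filter_eq_self]
    intro i _
    exact Finset.le_max' _ _ (Finset.mem_image_of_mem v (Finset.mem_univ i))
  simp only [Set.mem_setOf_eq, hcard, Finset.card_univ, Fintype.card_fin]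
  rw [div_self (by positivity : (n:ℝ) ≠ 0)]
  exact hβ

lemma auxEmpQuantileLe {n : ℕ} (hn : 0 < n) (v : Fin n → ℝ) {β t : ℝ} (hβ : 0 < β)
    (h : β ≤ ((Finset.univ.filter fun i => v i ≤ t).card : ℝ) / n) : empQuantile v β ≤ t :=
  csInf_le (auxEmpQuantileBddBelow hn v hβ) h

lemma auxFracLeOfEmpQuantileLt {n : ℕ} (hn : 0 < n) (v : Fin n → ℝ) {β t : ℝ}
    (hβ0 : 0 < β) (hβ1 : β ≤ 1) (h : empQuantile v β < t) :
    β ≤ ((Finset.univ.filter fun i => v i ≤ t).card : ℝ) / n := by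
  obtain ⟨u, hu, hut⟩ := (csInf_lt_iff (auxEmpQuantileBddBelow hn v hβ0)
    (auxEmpQuantileNonempty hn v hβ1)).1 h
  simp only [Set.mem_setOf_eq] at hu
  refine hu.trans ?_
  have hsub : (Finset.univ.filter fun i => v i ≤ u) ⊆ (Finset.univ.filter fun i => v i ≤ t) := by
    intro i hi
    simp only [Finset.mem_filter, Finset.mem_univ, true_and] at *
    linarith
  have := Finset.card_le_card hsub
  apply div_le_div_of_nonneg_right ?_ ?_ |>.trans_eq rfl
  · exact_mod_cast this
  · positivity

lemma auxFracTendsto {Ω : Type*} [MeasureSpace Ω] [IsProbabilityMeasure (ℙ : Measure Ω)]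
    {𝒳 : Type*} [MeasurableSpace 𝒳]
    (V : ℕ → Ω → 𝒳 × ℝ) (hVmeas : ∀ i, Measurable (V i))
    (hViid : iIndepFun V ℙ)
    (hVident : ∀ i, Measure.map (V i) ℙ = Measure.map (V 0) ℙ)
    (f : 𝒳 × ℝ → ℝ) (hf : Measurable f) {t c : ℝ} (hc0 : 0 ≤ c)
    (hc : ℙ {ω | f (V 1 ω) ≤ t} = ENNReal.ofReal c) :
    ∀ᵐ ω ∂(ℙ : Measure Ω), Tendsto (fun n : ℕ =>
      ((Finset.univ.filter fun i : Fin n => f (V (i.val + 1) ω) ≤ t).card : ℝ) / n)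
      atTop (𝓝 c) := by
  set φ : 𝒳 × ℝ → ℝ := ({p | f p ≤ t}).indicator (fun _ => (1:ℝ)) with hφdef
  have hSmeas : MeasurableSet {p : 𝒳 × ℝ | f p ≤ t} := hf measurableSet_Iic
  have hφ : Measurable φ := measurable_const.indicator hSmeas
  set W : ℕ → Ω → ℝ := fun i ω => φ (V (i + 1) ω) with hWdef
  have hWint : Integrable (W 0) ℙ := by
    have : W 0 = (V 1 ⁻¹' {p | f p ≤ t}).indicator (fun _ => (1:ℝ)) := by
      funext ω
      simp [hWdef, hφdef, Set.indicator_apply]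
    rw [this]
    exact (integrable_const (1:ℝ)).indicator ((hVmeas 1) hSmeas)
  have hWindep : Pairwise (Function.onFun (IndepFun · · ℙ) W) := by
    intro i j hij
    exact (hViid.indepFun (show i + 1 ≠ j + 1 by omega)).comp hφ hφ
  have hWident : ∀ i, IdentDistrib (W i) (W 0) ℙ ℙ := by
    intro i
    have hVid : IdentDistrib (V (i + 1)) (V 1) ℙ ℙ :=
      ⟨(hVmeas _).aemeasurable, (hVmeas 1).aemeasurable, (hVident _).trans (hVident 1).symm⟩
    exact hVid.comp hφ
  have hmean : 𝔼[W 0] = c := by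
    have : W 0 = (V 1 ⁻¹' {p | f p ≤ t}).indicator (fun _ => (1:ℝ)) := by
      funext ω
      simp [hWdef, hφdef, Set.indicator_apply]
    rw [this, integral_indicator_const (1:ℝ) ((hVmeas 1) hSmeas)]
    have hpre : (V 1 ⁻¹' {p | f p ≤ t}) = {ω | f (V 1 ω) ≤ t} := rfl
    rw [hpre, measureReal_def, hc, smul_eq_mul, mul_one, ENNReal.toReal_ofReal hc0]
  have hSL := strong_law_ae W hWint hWindep hWident
  rw [hmean] at hSL
  filter_upwards [hSL] with ω hω
  have hfun : (fun n : ℕ =>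
      ((Finset.univ.filter fun i : Fin n => f (V (i.val + 1) ω) ≤ t).card : ℝ) / n)
      = fun n : ℕ => (n:ℝ)⁻¹ • ∑ i ∈ Finset.range n, W i ω := by
    funext n
    have hcard : ((Finset.univ.filter fun i : Fin n => f (V (i.val + 1) ω) ≤ t).card : ℝ)
        = ∑ i ∈ Finset.range n, W i ω := by
      rw [← Finset.sum_boole]
      rw [← Fin.sum_univ_eq_sum_range (fun i => W i ω) n]
      refine Finset.sum_congr rfl fun i _ => ?_
      simp only [hWdef, hφdef, Set.indicator_apply, Set.mem_setOf_eq]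
    rw [hcard, smul_eq_mul, div_eq_inv_mul]
  rw [hfun]
  exact hω

end Aux

/-- **Asymptotic unconditional validity (Theorem 2, distilled).**
`(X, S) = V 0, (X₁, S₁) = V 1, …` are i.i.d. pairs in `𝒳 × ℝ` with `𝒳` standard
Borel; `κ` is a regular conditional distribution of `S` given `X`, with conditional
CDF `g x s = κ x (−∞, s]` continuous in `s` for a.e. `x`.  The estimators `ghat n`,
independent of `V 0, …, V n`, converge uniformly to `g` in probability.  With
`qhat n` the empirical `α`-quantile of `ghat n (X₁, S₁), …, ghat n (Xₙ, Sₙ)`, the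
prediction region `Ĉᵅ x = {s : ghat n x s ≥ qhat n}` satisfies
`ℙ(S ∈ Ĉᵅ(X)) → 1 − α`. -/
theorem asymptotic_unconditional_validity
    {Ω : Type*} [MeasureSpace Ω] [IsProbabilityMeasure (ℙ : Measure Ω)]
    {𝒳 : Type*} [MeasurableSpace 𝒳] [StandardBorelSpace 𝒳]
    (V : ℕ → Ω → 𝒳 × ℝ)
    (hVmeas : ∀ i, Measurable (V i))
    (hViid : iIndepFun V ℙ)
    (hVident : ∀ i, Measure.map (V i) ℙ = Measure.map (V 0) ℙ)
    (κ : ProbabilityTheory.Kernel 𝒳 ℝ) [IsMarkovKernel κ]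
    (hκ : (Measure.map (fun ω => (V 0 ω).1) ℙ).compProd κ = Measure.map (V 0) ℙ)
    (g : 𝒳 → ℝ → ℝ) (hgdef : ∀ x s, g x s = (κ x (Set.Iic s)).toReal)
    (hgcont : ∀ᵐ x ∂(Measure.map (fun ω => (V 0 ω).1) ℙ), Continuous (g x))
    (α : ℝ) (hα : α ∈ Set.Ioo (0 : ℝ) 1)
    (ghat : ℕ → Ω → 𝒳 → ℝ → ℝ)
    (hghatmeas : ∀ n ω, Measurable (fun p : 𝒳 × ℝ => ghat n ω p.1 p.2))
    -- `ghat n` is independent of `(X, S), (X₁, S₁), …, (Xₙ, Sₙ)`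
    (hghatindep : ∀ n, IndepFun (ghat n) (fun ω => fun i : Fin (n + 1) => V i ω) ℙ)
    -- `sup_x sup_s |ghat n x s − g x s| → 0` in probability
    (hghatunif : ∀ ε > 0,
      Tendsto (fun n => ℙ {ω | ∃ x s, ε ≤ |ghat n ω x s - g x s|}) atTop (𝓝 0))
    -- `qhat n` is the empirical `α`-quantile of the estimated scores
    (qhat : ℕ → Ω → ℝ)
    (hqhat : ∀ n ω, qhat n ω =
      empQuantile
        (fun i : Fin n => ghat n ω (V (i.val + 1) ω).1 (V (i.val + 1) ω).2) α) :
    Tendsto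
      (fun n => (ℙ {ω | ghat n ω (V 0 ω).1 (V 0 ω).2 ≥ qhat n ω}).toReal)
      atTop (𝓝 (1 - α)) := by
  obtain ⟨hα0, hα1⟩ := hα
  -- joint measurability of `g`
  have hgm : Measurable (fun p : 𝒳 × ℝ => g p.1 p.2) := by
    have h := auxMeasurableKernelCdf κ
    have heq : (fun p : 𝒳 × ℝ => g p.1 p.2)
        = fun p : 𝒳 × ℝ => (κ p.1 (Set.Iic p.2)).toReal := by
      funext p; exact hgdef p.1 p.2
    rw [heq]; exact h
  have hXmeas : Measurable (fun ω => (V 0 ω).1) := (hVmeas 0).fst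
  have hμXprob : IsProbabilityMeasure (Measure.map (fun ω => (V 0 ω).1) ℙ) :=
    Measure.isProbabilityMeasure_map hXmeas.aemeasurable
  -- probability integral transform
  have hPIT : ∀ (i : ℕ) (c : ℝ), 0 < c → c < 1 →
      ℙ {ω | g (V i ω).1 (V i ω).2 ≤ c} = ENNReal.ofReal c := by
    intro i c hc0 hc1
    have hA : MeasurableSet {p : 𝒳 × ℝ | g p.1 p.2 ≤ c} := hgm measurableSet_Iic
    have h1 : {ω | g (V i ω).1 (V i ω).2 ≤ c} = V i ⁻¹' {p : 𝒳 × ℝ | g p.1 p.2 ≤ c} := rfl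
    rw [h1, ← Measure.map_apply (hVmeas i) hA, hVident i, ← hκ]
    exact auxCompProdLevelSet _ κ g hgdef hgcont hc0 hc1
  have hgV0 : Measurable (fun ω => g (V 0 ω).1 (V 0 ω).2) := hgm.comp (hVmeas 0)
  -- upper tail of the score
  have hUge : ∀ c : ℝ, 0 < c → c < 1 →
      ℙ {ω | c ≤ g (V 0 ω).1 (V 0 ω).2} = ENNReal.ofReal (1 - c) := by
    intro c hc0 hc1
    have hlt : ℙ {ω | g (V 0 ω).1 (V 0 ω).2 < c} = ENNReal.ofReal c := by
      set z := ℙ {ω | g (V 0 ω).1 (V 0 ω).2 < c} with hz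
      have hub : z ≤ ENNReal.ofReal c := by
        rw [← hPIT 0 c hc0 hc1]
        refine measure_mono fun ω h => ?_
        exact (show g (V 0 ω).1 (V 0 ω).2 < c from h).le
      have hlb : ∀ c' : ℝ, 0 < c' → c' < c → ENNReal.ofReal c' ≤ z := by
        intro c' h0 h1
        rw [← hPIT 0 c' h0 (h1.trans hc1)]
        refine measure_mono fun ω h => ?_
        exact lt_of_le_of_lt (show g (V 0 ω).1 (V 0 ω).2 ≤ c' from h) h1
      have hzfin : z ≠ ⊤ := measure_ne_top _ _
      have ht1 : z.toReal ≤ c := by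
        have := ENNReal.toReal_mono ENNReal.ofReal_ne_top hub
        rwa [ENNReal.toReal_ofReal hc0.le] at this
      have ht2 : c ≤ z.toReal := by
        have hhalf : c / 2 ≤ z.toReal := by
          have := ENNReal.toReal_mono hzfin (hlb (c/2) (by linarith) (by linarith))
          rwa [ENNReal.toReal_ofReal (by linarith)] at this
        by_contra h
        push_neg at h
        have h' := ENNReal.toReal_mono hzfin
          (hlb ((z.toReal + c)/2) (by linarith) (by linarith))
        rw [ENNReal.toReal_ofReal (by linarith)] at h'
        linarith
      rw [← ENNReal.ofReal_toReal hzfin, le_antisymm ht1 ht2]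
    have hcompl : {ω | c ≤ g (V 0 ω).1 (V 0 ω).2}
        = {ω | g (V 0 ω).1 (V 0 ω).2 < c}ᶜ := by
      ext ω; simp [not_lt]
    have hms : MeasurableSet {ω | g (V 0 ω).1 (V 0 ω).2 < c} := hgV0 measurableSet_Iio
    rw [hcompl, measure_compl hms (measure_ne_top _ _), measure_univ, hlt]
    rw [ENNReal.ofReal_sub 1 hc0.le, ENNReal.ofReal_one]
  -- measurability of the empirical fractions
  have hMmeas : ∀ (n : ℕ) (t : ℝ), Measurable (fun ω =>
      ((Finset.univ.filter fun i : Fin n =>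
        g (V (i.val + 1) ω).1 (V (i.val + 1) ω).2 ≤ t).card : ℝ) / n) := by
    intro n t
    apply Measurable.div_const
    have heq : (fun ω => ((Finset.univ.filter fun i : Fin n =>
        g (V (i.val + 1) ω).1 (V (i.val + 1) ω).2 ≤ t).card : ℝ))
        = fun ω => ∑ i : Fin n,
          if g (V (i.val + 1) ω).1 (V (i.val + 1) ω).2 ≤ t then (1:ℝ) else 0 := by
      funext ω; rw [← Finset.sum_boole]
    rw [heq]
    exact Finset.measurable_sum _ (fun i _ => Measurable.ite
      ((hgm.comp (hVmeas _)) measurableSet_Iic) measurable_const measurable_const)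
  -- LLN for the empirical fractions
  have hMtend : ∀ t : ℝ, 0 < t → t < 1 → ∀ᵐ ω ∂(ℙ : Measure Ω),
      Tendsto (fun n : ℕ => ((Finset.univ.filter fun i : Fin n =>
        g (V (i.val + 1) ω).1 (V (i.val + 1) ω).2 ≤ t).card : ℝ) / n) atTop (𝓝 t) := by
    intro t ht0 ht1
    exact auxFracTendsto V hVmeas hViid hVident (fun p => g p.1 p.2) hgm ht0.le
      (hPIT 1 t ht0 ht1)
  -- the main estimate
  rw [Metric.tendsto_atTop]
  intro ε' hε'
  set ε := min (ε' / 8) (min (α / 8) ((1 - α) / 8)) with hεdef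
  have hε : 0 < ε :=
    lt_min (by linarith) (lt_min (by linarith) (by linarith))
  have hε1 : ε ≤ ε' / 8 := min_le_left _ _
  have hε2 : ε ≤ α / 8 := (min_le_right _ _).trans (min_le_left _ _)
  have hε3 : ε ≤ (1 - α) / 8 := (min_le_right _ _).trans (min_le_right _ _)
  have hc₁0 : 0 < α - 4 * ε := by linarith
  have hc₁1 : α - 4 * ε < 1 := by linarith
  have hc₂0 : 0 < α + 4 * ε := by linarith
  have hc₂1 : α + 4 * ε < 1 := by linarith
  -- the three families of exceptional events
  set Aev : ℕ → Set Ω := fun n => {ω | ∃ x s, ε ≤ |ghat n ω x s - g x s|} with hAevdef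
  have hAtend : Tendsto (fun n => ℙ (Aev n)) atTop (𝓝 0) := hghatunif ε hε
  set Hev : ℕ → Set Ω := fun n => {ω | α ≤ ((Finset.univ.filter fun i : Fin n =>
      g (V (i.val + 1) ω).1 (V (i.val + 1) ω).2 ≤ α - 2 * ε).card : ℝ) / n} with hHevdef
  set Gev : ℕ → Set Ω := fun n => {ω | ((Finset.univ.filter fun i : Fin n =>
      g (V (i.val + 1) ω).1 (V (i.val + 1) ω).2 ≤ α + 2 * ε).card : ℝ) / n < α} with hGevdef
  have hHmeas : ∀ n, MeasurableSet (Hev n) := fun n =>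
    (hMmeas n (α - 2 * ε)) measurableSet_Ici
  have hGmeas : ∀ n, MeasurableSet (Gev n) := fun n =>
    (hMmeas n (α + 2 * ε)) measurableSet_Iio
  have hHtend : Tendsto (fun n => ℙ (Hev n)) atTop (𝓝 0) := by
    have h := tendsto_measure_of_ae_tendsto_indicator_of_isFiniteMeasure (μ := ℙ)
      atTop MeasurableSet.empty hHmeas ?_
    · simpa using h
    · filter_upwards [hMtend (α - 2 * ε) (by linarith) (by linarith)] with ω hω
      filter_upwards [hω.eventually_lt_const (show α - 2 * ε < α by linarith)] with n hn
      simp only [hHevdef, Set.mem_setOf_eq, Set.mem_empty_iff_false, iff_false, not_le]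
      exact hn
  have hGtend : Tendsto (fun n => ℙ (Gev n)) atTop (𝓝 0) := by
    have h := tendsto_measure_of_ae_tendsto_indicator_of_isFiniteMeasure (μ := ℙ)
      atTop MeasurableSet.empty hGmeas ?_
    · simpa using h
    · filter_upwards [hMtend (α + 2 * ε) (by linarith) (by linarith)] with ω hω
      filter_upwards [hω.eventually_const_lt (show α < α + 2 * ε by linarith)] with n hn
      simp only [hGevdef, Set.mem_setOf_eq, Set.mem_empty_iff_false, iff_false, not_lt]
      exact hn.le
  -- the target event
  set Tev : ℕ → Set Ω := fun n =>
    {ω | ghat n ω (V 0 ω).1 (V 0 ω).2 ≥ qhat n ω} with hTevdef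
  -- upper bound
  have hupper : ∀ n : ℕ, 1 ≤ n →
      ℙ (Tev n) ≤ ENNReal.ofReal (1 - (α - 4 * ε)) + ℙ (Aev n) + ℙ (Hev n) := by
    intro n hn
    have hsub : Tev n ⊆ {ω | (α - 4 * ε) ≤ g (V 0 ω).1 (V 0 ω).2} ∪ Aev n ∪ Hev n := by
      intro ω hω
      by_contra hmem
      simp only [Set.mem_union, not_or] at hmem
      obtain ⟨⟨h1, h2⟩, h3⟩ := hmem
      have hA' : ∀ x s, |ghat n ω x s - g x s| < ε := by
        intro x s
        by_contra h
        push_neg at h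
        exact h2 ⟨x, s, h⟩
      have hH' : ((Finset.univ.filter fun i : Fin n =>
          g (V (i.val + 1) ω).1 (V (i.val + 1) ω).2 ≤ α - 2 * ε).card : ℝ) / n < α :=
        not_le.1 h3
      have hq : α - 3 * ε ≤ qhat n ω := by
        by_contra h
        push_neg at h
        rw [hqhat n ω] at h
        have hfr := auxFracLeOfEmpQuantileLt (by omega) _ hα0 hα1.le h
        have hsubf : (Finset.univ.filter fun i : Fin n =>
            ghat n ω (V (i.val + 1) ω).1 (V (i.val + 1) ω).2 ≤ α - 3 * ε)
            ⊆ Finset.univ.filter fun i : Fin n =>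
            g (V (i.val + 1) ω).1 (V (i.val + 1) ω).2 ≤ α - 2 * ε := by
          intro i hi
          simp only [Finset.mem_filter, Finset.mem_univ, true_and] at hi ⊢
          have habs := abs_lt.1 (hA' (V (i.val + 1) ω).1 (V (i.val + 1) ω).2)
          linarith [habs.1, habs.2]
        have hcard := Finset.card_le_card hsubf
        have hdiv : ((Finset.univ.filter fun i : Fin n =>
            ghat n ω (V (i.val + 1) ω).1 (V (i.val + 1) ω).2 ≤ α - 3 * ε).card : ℝ) / n
            ≤ ((Finset.univ.filter fun i : Fin n =>
            g (V (i.val + 1) ω).1 (V (i.val + 1) ω).2 ≤ α - 2 * ε).card : ℝ) / n := by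
          apply div_le_div_of_nonneg_right ?_ ?_ |>.trans_eq rfl
          · exact_mod_cast hcard
          · positivity
        linarith [hfr.trans hdiv]
      have hT : qhat n ω ≤ ghat n ω (V 0 ω).1 (V 0 ω).2 := hω
      have habs := abs_lt.1 (hA' (V 0 ω).1 (V 0 ω).2)
      exact h1 (show α - 4 * ε ≤ g (V 0 ω).1 (V 0 ω).2 by linarith [habs.1, habs.2])
    calc ℙ (Tev n)
        ≤ ℙ ({ω | (α - 4 * ε) ≤ g (V 0 ω).1 (V 0 ω).2} ∪ Aev n ∪ Hev n) :=
          measure_mono hsub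
      _ ≤ ℙ ({ω | (α - 4 * ε) ≤ g (V 0 ω).1 (V 0 ω).2} ∪ Aev n) + ℙ (Hev n) :=
          measure_union_le _ _
      _ ≤ (ℙ {ω | (α - 4 * ε) ≤ g (V 0 ω).1 (V 0 ω).2} + ℙ (Aev n)) + ℙ (Hev n) := by
          gcongr
          exact measure_union_le _ _
      _ = ENNReal.ofReal (1 - (α - 4 * ε)) + ℙ (Aev n) + ℙ (Hev n) := by
          rw [hUge (α - 4 * ε) hc₁0 hc₁1]
  -- lower bound
  have hlower : ∀ n : ℕ, 1 ≤ n →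
      ENNReal.ofReal (1 - (α + 4 * ε)) ≤ ℙ (Tev n) + ℙ (Aev n) + ℙ (Gev n) := by
    intro n hn
    have hsub : {ω | (α + 4 * ε) ≤ g (V 0 ω).1 (V 0 ω).2} ⊆ Tev n ∪ Aev n ∪ Gev n := by
      intro ω hω
      by_contra hmem
      simp only [Set.mem_union, not_or] at hmem
      obtain ⟨⟨h1, h2⟩, h3⟩ := hmem
      have hA' : ∀ x s, |ghat n ω x s - g x s| < ε := by
        intro x s
        by_contra h
        push_neg at h
        exact h2 ⟨x, s, h⟩
      have hG' : α ≤ ((Finset.univ.filter fun i : Fin n =>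
          g (V (i.val + 1) ω).1 (V (i.val + 1) ω).2 ≤ α + 2 * ε).card : ℝ) / n :=
        not_lt.1 h3
      have hq : qhat n ω ≤ α + 3 * ε := by
        rw [hqhat n ω]
        apply auxEmpQuantileLe (by omega) _ hα0
        refine hG'.trans ?_
        have hsubf : (Finset.univ.filter fun i : Fin n =>
            g (V (i.val + 1) ω).1 (V (i.val + 1) ω).2 ≤ α + 2 * ε)
            ⊆ Finset.univ.filter fun i : Fin n =>
            ghat n ω (V (i.val + 1) ω).1 (V (i.val + 1) ω).2 ≤ α + 3 * ε := by
          intro i hi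
          simp only [Finset.mem_filter, Finset.mem_univ, true_and] at hi ⊢
          have habs := abs_lt.1 (hA' (V (i.val + 1) ω).1 (V (i.val + 1) ω).2)
          linarith [habs.1, habs.2]
        have hcard := Finset.card_le_card hsubf
        apply div_le_div_of_nonneg_right ?_ ?_ |>.trans_eq rfl
        · exact_mod_cast hcard
        · positivity
      have hU : α + 4 * ε ≤ g (V 0 ω).1 (V 0 ω).2 := hω
      have habs := abs_lt.1 (hA' (V 0 ω).1 (V 0 ω).2)
      exact h1 (show qhat n ω ≤ ghat n ω (V 0 ω).1 (V 0 ω).2 by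
        linarith [habs.1, habs.2])
    calc ENNReal.ofReal (1 - (α + 4 * ε))
        = ℙ {ω | (α + 4 * ε) ≤ g (V 0 ω).1 (V 0 ω).2} := (hUge _ hc₂0 hc₂1).symm
      _ ≤ ℙ (Tev n ∪ Aev n ∪ Gev n) := measure_mono hsub
      _ ≤ ℙ (Tev n ∪ Aev n) + ℙ (Gev n) := measure_union_le _ _
      _ ≤ (ℙ (Tev n) + ℙ (Aev n)) + ℙ (Gev n) := by
          gcongr
          exact measure_union_le _ _
  -- real-valued small quantities
  have hA0 : Tendsto (fun n => (ℙ (Aev n)).toReal) atTop (𝓝 0) := by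
    have := (ENNReal.tendsto_toReal (a := 0) (by simp)).comp hAtend
    simpa [Function.comp_def] using this
  have hH0 : Tendsto (fun n => (ℙ (Hev n)).toReal) atTop (𝓝 0) := by
    have := (ENNReal.tendsto_toReal (a := 0) (by simp)).comp hHtend
    simpa [Function.comp_def] using this
  have hG0 : Tendsto (fun n => (ℙ (Gev n)).toReal) atTop (𝓝 0) := by
    have := (ENNReal.tendsto_toReal (a := 0) (by simp)).comp hGtend
    simpa [Function.comp_def] using this
  have hev : ∀ᶠ n in atTop, dist ((ℙ (Tev n)).toReal) (1 - α) < ε' := by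
    filter_upwards [hA0.eventually_lt_const hε, hH0.eventually_lt_const hε,
      hG0.eventually_lt_const hε, eventually_ge_atTop 1] with n hAn hHn hGn hn
    have hAnn : 0 ≤ (ℙ (Aev n)).toReal := ENNReal.toReal_nonneg
    have hHnn : 0 ≤ (ℙ (Hev n)).toReal := ENNReal.toReal_nonneg
    have hGnn : 0 ≤ (ℙ (Gev n)).toReal := ENNReal.toReal_nonneg
    have hu' : (ℙ (Tev n)).toReal
        ≤ (1 - (α - 4 * ε)) + (ℙ (Aev n)).toReal + (ℙ (Hev n)).toReal := by
      have hfin : ENNReal.ofReal (1 - (α - 4 * ε)) + ℙ (Aev n) + ℙ (Hev n) ≠ ⊤ :=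
        ENNReal.add_ne_top.2 ⟨ENNReal.add_ne_top.2
          ⟨ENNReal.ofReal_ne_top, measure_ne_top _ _⟩, measure_ne_top _ _⟩
      have := ENNReal.toReal_mono hfin (hupper n hn)
      rwa [ENNReal.toReal_add (ENNReal.add_ne_top.2
          ⟨ENNReal.ofReal_ne_top, measure_ne_top _ _⟩) (measure_ne_top _ _),
        ENNReal.toReal_add ENNReal.ofReal_ne_top (measure_ne_top _ _),
        ENNReal.toReal_ofReal (by linarith)] at this
    have hl' : (1 - (α + 4 * ε))
        ≤ (ℙ (Tev n)).toReal + (ℙ (Aev n)).toReal + (ℙ (Gev n)).toReal := by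
      have hfin : ℙ (Tev n) + ℙ (Aev n) + ℙ (Gev n) ≠ ⊤ :=
        ENNReal.add_ne_top.2 ⟨ENNReal.add_ne_top.2
          ⟨measure_ne_top _ _, measure_ne_top _ _⟩, measure_ne_top _ _⟩
      have := ENNReal.toReal_mono hfin (hlower n hn)
      rwa [ENNReal.toReal_ofReal (by linarith),
        ENNReal.toReal_add (ENNReal.add_ne_top.2
          ⟨measure_ne_top _ _, measure_ne_top _ _⟩) (measure_ne_top _ _),
        ENNReal.toReal_add (measure_ne_top _ _) (measure_ne_top _ _)] at this
    rw [Real.dist_eq, abs_lt]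
    constructor <;> linarith
  exact eventually_atTop.1 hev
end

section
/- (Asymptotic conditional validity; Theorem 3, distilled.) Let (X, S), (X_1, S_1), (X_2, S_2), ... be i.i.d. pairs where X takes values in a standard Borel space 𝒳 and S takes values in ℝ, and let κ be a regular conditional distribution of S given X with conditional CDF g(x, s) = κ(x)((−∞, s]). Assume that for P∘X^{-1}-almost every x, g(x, ·) is continuous. Fix α ∈ (0,1). For each n, let ĝ_n : 𝒳 × ℝ → ℝ be a random measurable function, independent of (X_1, S_1), ..., (X_n, S_n), such that sup_{x ∈ 𝒳} sup_{s ∈ ℝ} |ĝ_n(x, s) − g(x, s)| → 0 in probability, and let q̂_n be the empirical α-quantile of ĝ_n(X_1, S_1), ..., ĝ_n(X_n, S_n). Then for P∘X^{-1}-almost every x ∈ 𝒳, the conditional coverage κ(x)( {s ∈ ℝ : ĝ_n(x, s) ≥ q̂_n} ) → 1 − α in probability as n → ∞. -/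
open MeasureTheory ProbabilityTheory Filter Topology

namespace AsympAux
open Set


lemma measurable_cdf {𝒳 : Type*} [MeasurableSpace 𝒳] (κ : Kernel 𝒳 ℝ) [IsSFiniteKernel κ] :
    Measurable fun p : 𝒳 × ℝ => (κ p.1 (Iic p.2)).toReal := by
  have ht : MeasurableSet {q : (𝒳 × ℝ) × ℝ | q.2 ≤ q.1.2} :=
    measurableSet_le measurable_snd measurable_fst.snd
  set κ' : Kernel (𝒳 × ℝ) ℝ := κ.comap (Prod.fst : 𝒳 × ℝ → 𝒳) measurable_fst with hκ'
  have h := ProbabilityTheory.Kernel.measurable_kernel_prodMk_left (κ := κ') ht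
  have heq : ∀ p : 𝒳 × ℝ,
      κ' p (Prod.mk p ⁻¹' {q : (𝒳 × ℝ) × ℝ | q.2 ≤ q.1.2}) = κ p.1 (Iic p.2) := by
    intro p
    rw [hκ', Kernel.comap_apply κ measurable_fst p]; rfl
  simp only [heq] at h
  exact ENNReal.measurable_toReal.comp h

variable {ν : Measure ℝ} [IsProbabilityMeasure ν]

lemma cdf_mono : Monotone (fun r : ℝ => (ν (Iic r)).toReal) := fun a b hab =>
  ENNReal.toReal_mono (measure_ne_top ν _) (measure_mono (Iic_subset_Iic.2 hab))

lemma cdf_Ioi (r : ℝ) : (ν (Ioi r)).toReal = 1 - (ν (Iic r)).toReal := by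
  have h := prob_compl_eq_one_sub (μ := ν) (measurableSet_Iic (a := r))
  rw [Set.compl_Iic] at h
  rw [h, ENNReal.toReal_sub_of_le prob_le_one ENNReal.one_ne_top, ENNReal.toReal_one]

lemma cdf_tendsto_atTop : Tendsto (fun r : ℝ => (ν (Iic r)).toReal) atTop (𝓝 1) := by
  have h := tendsto_measure_Iic_atTop (μ := ν)
  rw [measure_univ] at h
  have h2 := (ENNReal.tendsto_toReal ENNReal.one_ne_top).comp h
  simpa [Function.comp_def] using h2

lemma cdf_tendsto_atBot : Tendsto (fun r : ℝ => (ν (Iic r)).toReal) atBot (𝓝 0) := by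
  have h : Tendsto (ν ∘ fun r : ℝ => Iic r) atBot (𝓝 (ν (⋂ r : ℝ, Iic r))) :=
    tendsto_measure_iInter_atBot (fun r => measurableSet_Iic.nullMeasurableSet) monotone_Iic
      ⟨0, measure_ne_top ν _⟩
  have he : (⋂ r : ℝ, Iic r) = ∅ := by
    ext y
    simp only [mem_iInter, mem_Iic, mem_empty_iff_false, iff_false, not_forall, not_le]
    exact ⟨y - 1, by linarith⟩
  rw [he, measure_empty] at h
  have h2 := (ENNReal.tendsto_toReal ENNReal.zero_ne_top).comp h
  simpa [Function.comp_def] using h2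

lemma cdf_exists (hc : Continuous fun r : ℝ => (ν (Iic r)).toReal) {β : ℝ}
    (hβ0 : 0 < β) (hβ1 : β < 1) : ∃ r, (ν (Iic r)).toReal = β := by
  obtain ⟨a, ha⟩ := ((cdf_tendsto_atBot (ν := ν)).eventually_lt_const hβ0).exists
  obtain ⟨b, hb⟩ := ((cdf_tendsto_atTop (ν := ν)).eventually_const_lt hβ1).exists
  have hab : a ≤ b := by
    by_contra hba
    push_neg at hba
    have := cdf_mono (ν := ν) hba.le
    simp only at this
    linarith
  have hmem : β ∈ Icc ((ν (Iic a)).toReal) ((ν (Iic b)).toReal) := ⟨ha.le, hb.le⟩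
  obtain ⟨r, _, hr⟩ := intermediate_value_Icc hab hc.continuousOn hmem
  exact ⟨r, hr⟩

lemma quantSet_nonempty {n : ℕ} (v : Fin n → ℝ) {β : ℝ} (hn : 0 < n) (hβ : β ≤ 1) :
    {t : ℝ | β ≤ ((Finset.univ.filter fun i => v i ≤ t).card : ℝ) / n}.Nonempty := by
  have hne : (Finset.univ : Finset (Fin n)).Nonempty := ⟨⟨0, hn⟩, Finset.mem_univ _⟩
  refine ⟨Finset.univ.sup' hne v, ?_⟩
  have hfil : (Finset.univ.filter fun i => v i ≤ Finset.univ.sup' hne v) = Finset.univ :=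
    Finset.filter_true_of_mem fun i _ => Finset.le_sup' v (Finset.mem_univ i)
  simp only [Set.mem_setOf_eq, hfil, Finset.card_univ, Fintype.card_fin]
  rw [div_self (Nat.cast_ne_zero.2 hn.ne')]
  exact hβ

lemma quantSet_bddBelow {n : ℕ} (v : Fin n → ℝ) {β : ℝ} (hn : 0 < n) (hβ : 0 < β) :
    BddBelow {t : ℝ | β ≤ ((Finset.univ.filter fun i => v i ≤ t).card : ℝ) / n} := by
  have hne : (Finset.univ : Finset (Fin n)).Nonempty := ⟨⟨0, hn⟩, Finset.mem_univ _⟩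
  refine ⟨Finset.univ.inf' hne v, fun t ht => ?_⟩
  simp only [Set.mem_setOf_eq] at ht
  have hcard : (Finset.univ.filter fun i => v i ≤ t) ≠ ∅ := by
    intro h
    rw [h] at ht
    simp only [Finset.card_empty, Nat.cast_zero, zero_div] at ht
    linarith
  obtain ⟨i, hi⟩ := Finset.nonempty_iff_ne_empty.mpr hcard
  exact le_trans (Finset.inf'_le v (Finset.mem_univ i)) (Finset.mem_filter.mp hi).2

lemma card_filter_le {n : ℕ} (v u : Fin n → ℝ) {t t' : ℝ} (h : ∀ i, v i ≤ t → u i ≤ t') :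
    (Finset.univ.filter fun i => v i ≤ t).card ≤ (Finset.univ.filter fun i => u i ≤ t').card :=
  Finset.card_le_card fun i hi =>
    Finset.mem_filter.mpr ⟨Finset.mem_univ i, h i (Finset.mem_filter.mp hi).2⟩

end AsympAux

/-- **Asymptotic conditional validity (Theorem 3, distilled).**
`(X, S) = V 0, (X₁, S₁) = V 1, …` are i.i.d. pairs in `𝒳 × ℝ` with `𝒳` standard
Borel; `κ` is a regular conditional distribution of `S` given `X`, with conditional
CDF `g x s = κ x (−∞, s]` continuous in `s` for a.e. `x`.  The estimators `ghat n`,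
independent of `(X₁, S₁), …, (Xₙ, Sₙ)`, converge uniformly to `g` in probability.
With `qhat n` the empirical `α`-quantile of `ghat n (X₁, S₁), …, ghat n (Xₙ, Sₙ)`,
for a.e. `x` the conditional coverage `κ x {s : ghat n x s ≥ qhat n}` tends to
`1 − α` in probability. -/
theorem asymptotic_conditional_validity
    {Ω : Type*} [MeasureSpace Ω] [IsProbabilityMeasure (ℙ : Measure Ω)]
    {𝒳 : Type*} [MeasurableSpace 𝒳] [StandardBorelSpace 𝒳]
    (V : ℕ → Ω → 𝒳 × ℝ)
    (hVmeas : ∀ i, Measurable (V i))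
    (hViid : iIndepFun V ℙ)
    (hVident : ∀ i, Measure.map (V i) ℙ = Measure.map (V 0) ℙ)
    (κ : ProbabilityTheory.Kernel 𝒳 ℝ) [IsMarkovKernel κ]
    (hκ : (Measure.map (fun ω => (V 0 ω).1) ℙ).compProd κ = Measure.map (V 0) ℙ)
    (g : 𝒳 → ℝ → ℝ) (hgdef : ∀ x s, g x s = (κ x (Set.Iic s)).toReal)
    (hgcont : ∀ᵐ x ∂(Measure.map (fun ω => (V 0 ω).1) ℙ), Continuous (g x))
    (α : ℝ) (hα : α ∈ Set.Ioo (0 : ℝ) 1)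
    (ghat : ℕ → Ω → 𝒳 → ℝ → ℝ)
    (hghatmeas : ∀ n ω, Measurable (fun p : 𝒳 × ℝ => ghat n ω p.1 p.2))
    -- `ghat n` is independent of `(X₁, S₁), …, (Xₙ, Sₙ)`
    (hghatindep : ∀ n,
      IndepFun (ghat n) (fun ω => fun i : Fin n => V (i.val + 1) ω) ℙ)
    -- `sup_x sup_s |ghat n x s − g x s| → 0` in probability
    (hghatunif : ∀ ε > 0,
      Tendsto (fun n => ℙ {ω | ∃ x s, ε ≤ |ghat n ω x s - g x s|}) atTop (𝓝 0))
    -- `qhat n` is the empirical `α`-quantile of the estimated scores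
    (qhat : ℕ → Ω → ℝ)
    (hqhat : ∀ n ω, qhat n ω =
      empQuantile
        (fun i : Fin n => ghat n ω (V (i.val + 1) ω).1 (V (i.val + 1) ω).2) α) :
    ∀ᵐ x ∂(Measure.map (fun ω => (V 0 ω).1) ℙ),
      ∀ ε > 0,
        Tendsto
          (fun n =>
            ℙ {ω | ε ≤ |(κ x {s : ℝ | ghat n ω x s ≥ qhat n ω}).toReal - (1 - α)|})
          atTop (𝓝 0) := by
  classical
  obtain ⟨hα0, hα1⟩ := hα
  have hXmeas : Measurable fun ω => (V 0 ω).1 := measurable_fst.comp (hVmeas 0)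
  set μ := Measure.map (fun ω => (V 0 ω).1) ℙ with hμdef
  haveI : IsProbabilityMeasure μ := Measure.isProbabilityMeasure_map hXmeas.aemeasurable
  have hgm : Measurable fun p : 𝒳 × ℝ => g p.1 p.2 := by
    have h := AsympAux.measurable_cdf κ
    have heq : (fun p : 𝒳 × ℝ => g p.1 p.2) = fun p : 𝒳 × ℝ => (κ p.1 (Set.Iic p.2)).toReal := by
      funext p; exact hgdef p.1 p.2
    rw [heq]; exact h
  have hB : ∀ t : ℝ, MeasurableSet {p : 𝒳 × ℝ | g p.1 p.2 ≤ t} := fun t =>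
    measurableSet_le hgm measurable_const
  set U : ℕ → Ω → ℝ := fun i ω => g (V (i + 1) ω).1 (V (i + 1) ω).2 with hUdef
  have hUmeas : ∀ i, Measurable (U i) := fun i => hgm.comp (hVmeas (i + 1))
  have hgxeq : ∀ x : 𝒳, g x = fun s => (κ x (Set.Iic s)).toReal := fun x =>
    funext fun s => hgdef x s
  -- per-x distribution of the probability integral transform
  have key1 : ∀ x : 𝒳, Continuous (g x) → ∀ t : ℝ, 0 < t → t < 1 →
      κ x {s | g x s ≤ t} = ENNReal.ofReal t := by
    intro x hx t ht0 ht1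
    have hmono : Monotone (g x) := by rw [hgxeq x]; exact AsympAux.cdf_mono
    have hcont : Continuous fun s => (κ x (Set.Iic s)).toReal := by rw [← hgxeq x]; exact hx
    obtain ⟨r, hr⟩ := AsympAux.cdf_exists (ν := κ x) hcont ht0 ht1
    rw [← hgdef x r] at hr
    have hfin : κ x {s | g x s ≤ t} ≠ ⊤ := measure_ne_top _ _
    have hlow : ENNReal.ofReal t ≤ κ x {s | g x s ≤ t} := by
      have hsub : Set.Iic r ⊆ {s | g x s ≤ t} := fun s hs => le_trans (hmono hs) hr.le
      calc ENNReal.ofReal t = κ x (Set.Iic r) := by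
            rw [← hr, hgdef, ENNReal.ofReal_toReal (measure_ne_top _ _)]
        _ ≤ κ x {s | g x s ≤ t} := measure_mono hsub
    have hupp : ∀ η : ℝ, 0 < η → (κ x {s | g x s ≤ t}).toReal ≤ t + η := by
      intro η hη
      set η' := min η ((1 - t) / 2) with hη'def
      have hη'0 : 0 < η' := lt_min hη (by linarith)
      have hη'le : η' ≤ (1 - t) / 2 := min_le_right _ _
      obtain ⟨r', hr'⟩ := AsympAux.cdf_exists (ν := κ x) hcont
        (by linarith : (0:ℝ) < t + η') (by linarith : t + η' < 1)
      rw [← hgdef x r'] at hr'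
      have hsub : {s | g x s ≤ t} ⊆ Set.Iic r' := by
        intro s hs
        simp only [Set.mem_setOf_eq] at hs
        simp only [Set.mem_Iic]
        by_contra hgt
        push_neg at hgt
        have hmm := hmono hgt.le
        rw [hr'] at hmm
        linarith
      calc (κ x {s | g x s ≤ t}).toReal ≤ (κ x (Set.Iic r')).toReal :=
            ENNReal.toReal_mono (measure_ne_top _ _) (measure_mono hsub)
        _ = g x r' := (hgdef x r').symm
        _ = t + η' := hr'
        _ ≤ t + η := by linarith [min_le_left η ((1 - t) / 2)]
    have h2 : (κ x {s | g x s ≤ t}).toReal ≤ t := le_of_forall_pos_le_add hupp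
    have h3 : t ≤ (κ x {s | g x s ≤ t}).toReal := by
      calc t = (ENNReal.ofReal t).toReal := (ENNReal.toReal_ofReal ht0.le).symm
        _ ≤ _ := ENNReal.toReal_mono hfin hlow
    rw [← ENNReal.ofReal_toReal hfin, le_antisymm h2 h3]
  -- the law of the transformed scores is uniform
  have hUdist : ∀ t : ℝ, 0 < t → t < 1 → ∀ i : ℕ, ℙ {ω | U i ω ≤ t} = ENNReal.ofReal t := by
    intro t ht0 ht1 i
    have hpre : {ω | U i ω ≤ t} = V (i + 1) ⁻¹' {p : 𝒳 × ℝ | g p.1 p.2 ≤ t} := rfl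
    rw [hpre, ← Measure.map_apply (hVmeas (i + 1)) (hB t), hVident (i + 1), ← hκ,
      Measure.compProd_apply (hB t)]
    have hae : ∀ᵐ x ∂μ, κ x (Prod.mk x ⁻¹' {p : 𝒳 × ℝ | g p.1 p.2 ≤ t}) = ENNReal.ofReal t := by
      filter_upwards [hgcont] with x hx
      have hpre2 : Prod.mk x ⁻¹' {p : 𝒳 × ℝ | g p.1 p.2 ≤ t} = {s | g x s ≤ t} := rfl
      rw [hpre2, key1 x hx t ht0 ht1]
    rw [lintegral_congr_ae hae, lintegral_const, measure_univ, mul_one]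
  -- empirical CDF of the transformed scores
  set F : ℕ → ℝ → Ω → ℝ := fun n t ω =>
    ((Finset.univ.filter fun i : Fin n => U i.val ω ≤ t).card : ℝ) / n with hFdef
  have hslln : ∀ t : ℝ, 0 < t → t < 1 →
      ∀ᵐ ω ∂ℙ, Tendsto (fun n : ℕ => F n t ω) atTop (𝓝 t) := by
    intro t ht0 ht1
    set Z : ℕ → Ω → ℝ := fun i ω => if U i ω ≤ t then 1 else 0 with hZdef
    have hsets : ∀ i, MeasurableSet {ω | U i ω ≤ t} := fun i => (hUmeas i) measurableSet_Iic
    have hZind : ∀ i, Z i = Set.indicator {ω | U i ω ≤ t} (fun _ => (1 : ℝ)) := by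
      intro i; funext ω; simp [hZdef, Set.indicator_apply]
    have hint : Integrable (Z 0) ℙ := by
      rw [hZind 0]; exact (integrable_const (1 : ℝ)).indicator (hsets 0)
    have hφm : Measurable fun p : 𝒳 × ℝ => if g p.1 p.2 ≤ t then (1 : ℝ) else 0 :=
      Measurable.ite (hB t) measurable_const measurable_const
    have hindep : Pairwise (Function.onFun (IndepFun · · ℙ) Z) := by
      intro i j hij
      have hV : IndepFun (V (i + 1)) (V (j + 1)) ℙ := hViid.indepFun (by omega)
      exact hV.comp hφm hφm
    have hident : ∀ i, IdentDistrib (Z i) (Z 0) ℙ ℙ := by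
      intro i
      have h1 : IdentDistrib (V (i + 1)) (V 1) ℙ ℙ :=
        ⟨(hVmeas _).aemeasurable, (hVmeas _).aemeasurable, (hVident (i + 1)).trans (hVident 1).symm⟩
      exact h1.comp hφm
    have h := ProbabilityTheory.strong_law_ae Z hint hindep hident
    have hexp : (∫ ω, Z 0 ω ∂ℙ) = t := by
      rw [hZind 0, integral_indicator_const (1 : ℝ) (hsets 0), measureReal_def, hUdist t ht0 ht1 0,
        ENNReal.toReal_ofReal ht0.le, smul_eq_mul, mul_one]
    rw [show ℙ[Z 0] = t from hexp] at h
    filter_upwards [h] with ω hω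
    have heq : (fun n : ℕ => F n t ω) =
        fun n : ℕ => (n : ℝ)⁻¹ • ∑ i ∈ Finset.range n, Z i ω := by
      funext n
      show ((Finset.univ.filter fun i : Fin n => U i.val ω ≤ t).card : ℝ) / n
        = (n : ℝ)⁻¹ • ∑ i ∈ Finset.range n, Z i ω
      rw [smul_eq_mul, div_eq_inv_mul]
      congr 1
      rw [← Fin.sum_univ_eq_sum_range (fun i => Z i ω) n, hZdef, Finset.card_filter]
      push_cast
      rfl
    rw [heq]
    exact hω
  have hprob : ∀ t : ℝ, 0 < t → t < 1 → ∀ δ : ℝ, 0 < δ →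
      Tendsto (fun n => ℙ {ω | δ ≤ |F n t ω - t|}) atTop (𝓝 0) := by
    intro t ht0 ht1 δ hδ
    have hFmeas : ∀ n, AEStronglyMeasurable (F n t) ℙ := by
      intro n
      apply Measurable.aestronglyMeasurable
      apply Measurable.div_const
      have heq : (fun ω => ((Finset.univ.filter fun i : Fin n => U i.val ω ≤ t).card : ℝ)) =
          fun ω => ∑ i : Fin n, if U i.val ω ≤ t then (1 : ℝ) else 0 := by
        funext ω; rw [Finset.card_filter]; push_cast; rfl
      rw [heq]
      exact Finset.measurable_sum _ fun i _ =>
        Measurable.ite ((hUmeas i.val) measurableSet_Iic) measurable_const measurable_const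
    have h := (tendstoInMeasure_of_tendsto_ae (f := fun n => F n t) (g := fun _ => t)
      hFmeas (hslln t ht0 ht1)) (ENNReal.ofReal δ) (ENNReal.ofReal_pos.mpr hδ)
    simpa [edist_dist, Real.dist_eq, ENNReal.ofReal_le_ofReal_iff (abs_nonneg _)] using h
  -- main argument
  filter_upwards [hgcont] with x hx
  intro ε hε
  have hmin1 : min ε (min α (1 - α)) ≤ ε := min_le_left _ _
  have hmin2 : min ε (min α (1 - α)) ≤ α := le_trans (min_le_right _ _) (min_le_left _ _)
  have hmin3 : min ε (min α (1 - α)) ≤ 1 - α := le_trans (min_le_right _ _) (min_le_right _ _)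
  set δ := min ε (min α (1 - α)) / 5 with hδdef
  have hδ0 : 0 < δ := by
    have h5 : 0 < min ε (min α (1 - α)) := lt_min hε (lt_min hα0 (by linarith))
    exact div_pos h5 (by norm_num)
  have hδε : 4 * δ < ε := by rw [hδdef]; linarith
  have hδ1 : α + 3 * δ < 1 := by rw [hδdef]; linarith
  have hδ2 : 0 < α - 4 * δ := by rw [hδdef]; linarith
  have hmono : Monotone (g x) := by rw [hgxeq x]; exact AsympAux.cdf_mono
  have hcont : Continuous fun s => (κ x (Set.Iic s)).toReal := by rw [← hgxeq x]; exact hx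
  obtain ⟨r₁, hr₁⟩ := AsympAux.cdf_exists (ν := κ x) hcont
    (by linarith : (0:ℝ) < α + 3 * δ) hδ1
  obtain ⟨r₂, hr₂⟩ := AsympAux.cdf_exists (ν := κ x) hcont
    (by linarith : (0:ℝ) < α - 4 * δ) (by linarith : α - 4 * δ < 1)
  rw [← hgdef x r₁] at hr₁
  rw [← hgdef x r₂] at hr₂
  have hIoi : ∀ r, (κ x (Set.Ioi r)).toReal = 1 - g x r := by
    intro r
    rw [hgdef]
    exact AsympAux.cdf_Ioi r
  have hfinal : ∀ᶠ n in atTop,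
      ℙ {ω | ε ≤ |(κ x {s : ℝ | ghat n ω x s ≥ qhat n ω}).toReal - (1 - α)|}
        ≤ ℙ {ω | ∃ x' s, δ ≤ |ghat n ω x' s - g x' s|}
          + (ℙ {ω | δ ≤ |F n (α + δ) ω - (α + δ)|}
            + ℙ {ω | δ ≤ |F n (α - δ) ω - (α - δ)|}) := by
    filter_upwards [eventually_ge_atTop 1] with n hn
    have hn0 : 0 < n := hn
    have hnR : (0:ℝ) < n := by exact_mod_cast hn0
    have hsub : {ω | ε ≤ |(κ x {s : ℝ | ghat n ω x s ≥ qhat n ω}).toReal - (1 - α)|}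
        ⊆ {ω | ∃ x' s, δ ≤ |ghat n ω x' s - g x' s|}
          ∪ ({ω | δ ≤ |F n (α + δ) ω - (α + δ)|} ∪ {ω | δ ≤ |F n (α - δ) ω - (α - δ)|}) := by
      intro ω hω
      by_contra hcon
      simp only [Set.mem_union, Set.mem_setOf_eq, not_or, not_exists, not_le] at hcon
      obtain ⟨h1, h2, h3⟩ := hcon
      apply absurd hω
      simp only [Set.mem_setOf_eq, not_le]
      -- the estimated scores and true scores are uniformly close
      set v : Fin n → ℝ := fun i => ghat n ω (V (i.val + 1) ω).1 (V (i.val + 1) ω).2 with hvdef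
      have hvu : ∀ i : Fin n, |v i - U i.val ω| < δ := fun i => h1 _ _
      have hF2 : α ≤ F n (α + δ) ω := by
        have := abs_lt.mp h2
        linarith [this.1]
      have hF3 : F n (α - δ) ω < α := by
        have := abs_lt.mp h3
        linarith [this.2]
      -- bounds on the empirical quantile
      have hqup : qhat n ω ≤ α + 2 * δ := by
        rw [hqhat n ω]
        apply csInf_le (AsympAux.quantSet_bddBelow v hn0 hα0)
        show α ≤ ((Finset.univ.filter fun i : Fin n => v i ≤ α + 2 * δ).card : ℝ) / n
        have hcard : (Finset.univ.filter fun i : Fin n => U i.val ω ≤ α + δ).card ≤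
            (Finset.univ.filter fun i : Fin n => v i ≤ α + 2 * δ).card := by
          apply AsympAux.card_filter_le
          intro i hi
          have := abs_lt.mp (hvu i)
          linarith [this.1]
        calc α ≤ F n (α + δ) ω := hF2
          _ ≤ _ := by
              show ((Finset.univ.filter fun i : Fin n => U i.val ω ≤ α + δ).card : ℝ) / n ≤ _
              gcongr
      have hqdn : α - 2 * δ ≤ qhat n ω := by
        rw [hqhat n ω]
        apply le_csInf (AsympAux.quantSet_nonempty v hn0 hα1.le)
        intro b hb
        simp only [Set.mem_setOf_eq] at hb
        by_contra hlt
        push_neg at hlt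
        have hcard : (Finset.univ.filter fun i : Fin n => v i ≤ b).card ≤
            (Finset.univ.filter fun i : Fin n => U i.val ω ≤ α - δ).card := by
          apply AsympAux.card_filter_le
          intro i hi
          have := abs_lt.mp (hvu i)
          linarith [this.2]
        have hcon2 : α ≤ F n (α - δ) ω := by
          calc α ≤ ((Finset.univ.filter fun i : Fin n => v i ≤ b).card : ℝ) / n := hb
            _ ≤ ((Finset.univ.filter fun i : Fin n => U i.val ω ≤ α - δ).card : ℝ) / n := by
                gcongr
            _ = F n (α - δ) ω := rfl
        linarith
      -- sandwich the coverage set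
      have hsub1 : Set.Ioi r₁ ⊆ {s : ℝ | ghat n ω x s ≥ qhat n ω} := by
        intro s hs
        have hgs : α + 3 * δ ≤ g x s := by
          rw [← hr₁]; exact hmono (le_of_lt hs)
        have hd := abs_lt.mp (h1 x s)
        simp only [Set.mem_setOf_eq, ge_iff_le]
        linarith [hd.2]
      have hsub2 : {s : ℝ | ghat n ω x s ≥ qhat n ω} ⊆ Set.Ioi r₂ := by
        intro s hs
        simp only [Set.mem_setOf_eq, ge_iff_le] at hs
        simp only [Set.mem_Ioi]
        by_contra hle
        push_neg at hle
        have hgs : g x s ≤ α - 4 * δ := by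
          rw [← hr₂]; exact hmono hle
        have hd := abs_lt.mp (h1 x s)
        linarith [hd.1]
      have hm1 : (κ x (Set.Ioi r₁)).toReal ≤ (κ x {s : ℝ | ghat n ω x s ≥ qhat n ω}).toReal :=
        ENNReal.toReal_mono (measure_ne_top _ _) (measure_mono hsub1)
      have hm2 : (κ x {s : ℝ | ghat n ω x s ≥ qhat n ω}).toReal ≤ (κ x (Set.Ioi r₂)).toReal :=
        ENNReal.toReal_mono (measure_ne_top _ _) (measure_mono hsub2)
      rw [hIoi r₁, hr₁] at hm1
      rw [hIoi r₂, hr₂] at hm2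
      rw [abs_lt]
      constructor <;> linarith
    calc ℙ {ω | ε ≤ |(κ x {s : ℝ | ghat n ω x s ≥ qhat n ω}).toReal - (1 - α)|}
        ≤ ℙ ({ω | ∃ x' s, δ ≤ |ghat n ω x' s - g x' s|}
          ∪ ({ω | δ ≤ |F n (α + δ) ω - (α + δ)|} ∪ {ω | δ ≤ |F n (α - δ) ω - (α - δ)|})) :=
          measure_mono hsub
      _ ≤ ℙ {ω | ∃ x' s, δ ≤ |ghat n ω x' s - g x' s|}
          + ℙ ({ω | δ ≤ |F n (α + δ) ω - (α + δ)|} ∪ {ω | δ ≤ |F n (α - δ) ω - (α - δ)|}) :=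
          measure_union_le _ _
      _ ≤ _ := add_le_add le_rfl (measure_union_le _ _)
  have hlim : Tendsto (fun n => ℙ {ω | ∃ x' s, δ ≤ |ghat n ω x' s - g x' s|}
      + (ℙ {ω | δ ≤ |F n (α + δ) ω - (α + δ)|}
        + ℙ {ω | δ ≤ |F n (α - δ) ω - (α - δ)|})) atTop (𝓝 0) := by
    have l1 := hghatunif δ hδ0
    have l2 := hprob (α + δ) (by linarith) (by linarith) δ hδ0
    have l3 := hprob (α - δ) (by linarith) (by linarith) δ hδ0
    have := l1.add (l2.add l3)
    simpa using this
  exact tendsto_of_tendsto_of_tendsto_of_le_of_le' tendsto_const_nhds hlim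
    (Filter.Eventually.of_forall fun n => zero_le) hfinal
end
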